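/- arXiv:2412.04118 — 13 statements merged into one kernel-verified Lean document; each statement's English description precedes it below -/
import Mathlib

section
/- Let (X,d) be a dissimilarity space and let < be a two-way compatible linear order on X. Then for every pair x, y ∈ X, the segment S(x,y) is an interval for <. -/
/-- The segment `S(x,y)` of a (not necessarily symmetric) dissimilarity `d`:
the set of points `t` with `d x y ≥ max (d x t) (d t y)` and `d y x ≥ max (d y t) (d t x)`. -/
def Seg {X : Type*} (d : X → X → ℝ) (x y : X) : Set X :=
  {t | max (d x t) (d t y) ≤ d x y ∧ max (d y t) (d t x) ≤ d y x}

/-- if `<` is a two-way compatible linear order on a dissimilarity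
space `(X, d)`, then every segment `S(x,y)` is an interval for `<`. -/
theorem stmt0 {X : Type*} [Fintype X] [LinearOrder X] (d : X → X → ℝ)
    (h0 : ∀ x, d x x = 0) (hnn : ∀ x y, 0 ≤ d x y)
    (hcomp : ∀ a b c : X, a < b → b < c →
      max (d a b) (d b c) ≤ d a c ∧ max (d c b) (d b a) ≤ d c a) :
    ∀ x y a b c : X, a ∈ Seg d x y → b ∈ Seg d x y → a < c → c < b →
      c ∈ Seg d x y := by
  intro x y a b c ha hb hac hcb
  obtain ⟨ha1, ha2⟩ := ha
  obtain ⟨hb1, hb2⟩ := hb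
  simp only [Seg, Set.mem_setOf_eq, max_le_iff] at ha1 ha2 hb1 hb2 ⊢
  have hxc : d x c ≤ d x y := by
    rcases lt_trichotomy x c with h | h | h
    · exact le_trans (le_trans (le_max_left _ _) (hcomp x c b h hcb).1) hb1.1
    · rw [h, h0]; exact hnn _ _
    · exact le_trans (le_trans (le_max_left _ _) (hcomp a c x hac h).2) ha1.1
  have hcy : d c y ≤ d x y := by
    rcases lt_trichotomy c y with h | h | h
    · exact le_trans (le_trans (le_max_right _ _) (hcomp a c y hac h).1) ha1.2
    · rw [h, h0]; exact hnn _ _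
    · exact le_trans (le_trans (le_max_right _ _) (hcomp y c b h hcb).2) hb1.2
  have hyc : d y c ≤ d y x := by
    rcases lt_trichotomy y c with h | h | h
    · exact le_trans (le_trans (le_max_left _ _) (hcomp y c b h hcb).1) hb2.1
    · rw [h, h0]; exact hnn _ _
    · exact le_trans (le_trans (le_max_left _ _) (hcomp a c y hac h).2) ha2.1
  have hcx : d c x ≤ d y x := by
    rcases lt_trichotomy c x with h | h | h
    · exact le_trans (le_trans (le_max_right _ _) (hcomp a c x hac h).1) ha2.2
    · rw [h, h0]; exact hnn _ _
    · exact le_trans (le_trans (le_max_right _ _) (hcomp x c b h hcb).2) hb2.2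
  exact ⟨⟨hxc, hcy⟩, hyc, hcx⟩
end

section
/- Let (X,d) be a dissimilarity space. If there exists a linear order < on X such that every segment S(x,y) (for x, y ∈ X) is an interval for <, then < is a two-way compatible order for d; in particular (X,d) is two-way-Robinson. -/
/-- if every segment `S(x,y)` is an interval for a linear order `<` on `X`,
then `<` is a two-way compatible order for `d` (so `(X,d)` is two-way-Robinson). -/
theorem stmt1 {X : Type*} [Fintype X] [LinearOrder X] (d : X → X → ℝ)
    (h0 : ∀ x, d x x = 0) (hnn : ∀ x y, 0 ≤ d x y)
    (hint : ∀ x y a b c : X, a ∈ Seg d x y → b ∈ Seg d x y → a < c → c < b →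
      c ∈ Seg d x y) :
    ∀ a b c : X, a < b → b < c →
      max (d a b) (d b c) ≤ d a c ∧ max (d c b) (d b a) ≤ d c a := by
  intro a b c hab hbc
  have ha : a ∈ Seg d a c := by
    constructor <;> simp [h0, hnn]
  have hc : c ∈ Seg d a c := by
    constructor <;> simp [h0, hnn]
  exact hint a c a c b ha hc hab hbc
end

section
/- Let (X,d) be a two-way-Robinson dissimilarity space. Then there exists a symmetric dissimilarity d' on X (d'(x,y) = d'(y,x) and d'(x,x) = 0 for all x, y) such that a linear order on X is compatible for d' in the Robinson sense if and only if it is two-way compatible for d; in particular (X,d') is Robinson. -/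
/-- A strict order `r` is two-way compatible for a (not necessarily symmetric)
dissimilarity `d` if for all `a r b r c` we have `d a c ≥ max (d a b) (d b c)`
and `d c a ≥ max (d c b) (d b a)`. -/
def TwoWayCompat {X : Type*} (d : X → X → ℝ) (r : X → X → Prop) : Prop :=
  ∀ a b c : X, r a b → r b c →
    max (d a b) (d b c) ≤ d a c ∧ max (d c b) (d b a) ≤ d c a

/-- A strict order `r` is compatible in the Robinson sense for `d'` if for all
`a r b r c` we have `d' a c ≥ max (d' a b) (d' b c)`. -/
def RobCompat {X : Type*} (d' : X → X → ℝ) (r : X → X → Prop) : Prop :=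
  ∀ a b c : X, r a b → r b c → max (d' a b) (d' b c) ≤ d' a c

/-- The closure family of the directional balls of `d` under
union / intersection / difference of (sufficiently) overlapping pairs. -/
inductive CIfam {X : Type*} (d : X → X → ℝ) : Set X → Prop
  | bout (u w : X) : CIfam d {v | d u v ≤ d u w}
  | bin (u w : X) : CIfam d {v | d v u ≤ d w u}
  | union {S₁ S₂ : Set X} (h₁ : CIfam d S₁) (h₂ : CIfam d S₂)
      (hi : (S₁ ∩ S₂).Nonempty) : CIfam d (S₁ ∪ S₂)
  | inter {S₁ S₂ : Set X} (h₁ : CIfam d S₁) (h₂ : CIfam d S₂) : CIfam d (S₁ ∩ S₂)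
  | diff {S₁ S₂ : Set X} (h₁ : CIfam d S₁) (h₂ : CIfam d S₂)
      (hd : (S₂ \ S₁).Nonempty) : CIfam d (S₁ \ S₂)

/-- `S` is an interval for the strict order `r`. -/
def IsItv {X : Type*} (r : X → X → Prop) (S : Set X) : Prop :=
  ∀ ⦃a b c : X⦄, r a b → r b c → a ∈ S → c ∈ S → b ∈ S

/-- For a finite nonempty set there is an `r`-minimal element,
for `r` trichotomous and transitive. -/
lemma exists_rel_min {X : Type*} {r : X → X → Prop}
    (htri : ∀ a b : X, r a b ∨ a = b ∨ r b a)
    (htrans : ∀ {a b c : X}, r a b → r b c → r a c)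
    (s : Finset X) (hs : s.Nonempty) :
    ∃ a ∈ s, ∀ b ∈ s, b ≠ a → r a b := by
  classical
  induction s using Finset.induction_on with
  | empty => exact absurd hs (by simp)
  | @insert a s hnotmem ih =>
    by_cases hse : s.Nonempty
    · obtain ⟨m, hm, hmin⟩ := ih hse
      rcases htri a m with h | h | h
      · refine ⟨a, Finset.mem_insert_self _ _, ?_⟩
        intro b hb hba
        rcases Finset.mem_insert.mp hb with rfl | hbs
        · exact absurd rfl hba
        · by_cases hbm : b = m
          · exact hbm ▸ h
          · exact htrans h (hmin b hbs hbm)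
      · refine ⟨a, Finset.mem_insert_self _ _, ?_⟩
        intro b hb hba
        rcases Finset.mem_insert.mp hb with rfl | hbs
        · exact absurd rfl hba
        · rw [h]
          exact hmin b hbs (fun hbm => hba (by rw [hbm, ← h]))
      · refine ⟨m, Finset.mem_insert_of_mem hm, ?_⟩
        intro b hb hbm
        rcases Finset.mem_insert.mp hb with rfl | hbs
        · exact h
        · exact hmin b hbs hbm
    · have hse' : s = ∅ := Finset.not_nonempty_iff_eq_empty.mp hse
      subst hse'
      refine ⟨a, Finset.mem_insert_self _ _, ?_⟩
      intro b hb hba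
      simp only [Finset.mem_insert, Finset.notMem_empty, or_false] at hb
      exact absurd hb hba

/-- Every member of the closure family is an interval for every two-way
compatible strict (total) order. -/
lemma CIfam.isItv {X : Type*} {d : X → X → ℝ} {r : X → X → Prop}
    (hnn : ∀ x y, 0 ≤ d x y) (h0 : ∀ x, d x x = 0)
    (htri : ∀ a b : X, r a b ∨ a = b ∨ r b a)
    (htrans : ∀ {a b c : X}, r a b → r b c → r a c)
    (htw : TwoWayCompat d r) {S : Set X} (hS : CIfam d S) : IsItv r S := by
  induction hS with
  | bout u w =>
    intro a b c hab hbc ha hc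
    simp only [Set.mem_setOf_eq] at ha hc ⊢
    rcases htri u b with h | h | h
    · exact le_trans (le_trans (le_max_left _ _) (htw u b c h hbc).1) hc
    · subst h; rw [h0]; exact hnn u w
    · exact le_trans (le_trans (le_max_left _ _) (htw a b u hab h).2) ha
  | bin u w =>
    intro a b c hab hbc ha hc
    simp only [Set.mem_setOf_eq] at ha hc ⊢
    rcases htri u b with h | h | h
    · exact le_trans (le_trans (le_max_right _ _) (htw u b c h hbc).2) hc
    · subst h; rw [h0]; exact hnn w u
    · exact le_trans (le_trans (le_max_right _ _) (htw a b u hab h).1) ha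
  | union h₁ h₂ hi ih₁ ih₂ =>
    intro a b c hab hbc ha hc
    obtain ⟨w0, hw1, hw2⟩ := hi
    rcases ha with ha | ha <;> rcases hc with hc | hc
    · exact Or.inl (ih₁ hab hbc ha hc)
    · rcases htri w0 b with h | h | h
      · exact Or.inr (ih₂ h hbc hw2 hc)
      · exact Or.inl (h ▸ hw1)
      · exact Or.inl (ih₁ hab h ha hw1)
    · rcases htri w0 b with h | h | h
      · exact Or.inl (ih₁ h hbc hw1 hc)
      · exact Or.inl (h ▸ hw1)
      · exact Or.inr (ih₂ hab h ha hw2)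
    · exact Or.inr (ih₂ hab hbc ha hc)
  | inter h₁ h₂ ih₁ ih₂ =>
    intro a b c hab hbc ha hc
    exact ⟨ih₁ hab hbc ha.1 hc.1, ih₂ hab hbc ha.2 hc.2⟩
  | diff h₁ h₂ hd ih₁ ih₂ =>
    intro a b c hab hbc ha hc
    obtain ⟨u0, hu2, hu1⟩ := hd
    refine ⟨ih₁ hab hbc ha.1 hc.1, ?_⟩
    intro hb
    rcases htri u0 b with h | h | h
    · rcases htri u0 a with h2 | h2 | h2
      · exact ha.2 (ih₂ h2 hab hu2 hb)
      · exact hu1 (h2 ▸ ha.1)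
      · exact hu1 (ih₁ h2 (htrans h hbc) ha.1 hc.1)
    · exact hu1 (h ▸ ih₁ hab hbc ha.1 hc.1)
    · rcases htri u0 c with h2 | h2 | h2
      · exact hu1 (ih₁ (htrans hab h) h2 ha.1 hc.1)
      · exact hu1 (h2 ▸ hc.1)
      · exact hc.2 (ih₂ hbc h2 hb hu2)

/-- a two-way-Robinson dissimilarity space `(X,d)` admits a symmetric
dissimilarity `d'` whose Robinson-compatible linear orders are exactly the two-way
compatible orders of `d`; in particular `(X,d')` is Robinson. -/
theorem stmt2 {X : Type*} [Fintype X] (d : X → X → ℝ)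
    (h0 : ∀ x, d x x = 0) (hnn : ∀ x y, 0 ≤ d x y)
    (hrob : ∃ r : X → X → Prop, IsStrictTotalOrder X r ∧ TwoWayCompat d r) :
    ∃ d' : X → X → ℝ,
      (∀ x y, d' x y = d' y x) ∧ (∀ x, d' x x = 0) ∧ (∀ x y, 0 ≤ d' x y) ∧
      (∀ r : X → X → Prop, IsStrictTotalOrder X r → (RobCompat d' r ↔ TwoWayCompat d r)) ∧
      ∃ r : X → X → Prop, IsStrictTotalOrder X r ∧ RobCompat d' r := by
  classical
  obtain ⟨σ, hσord, hσtw⟩ := hrob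
  have σtri : ∀ a b : X, σ a b ∨ a = b ∨ σ b a := fun a b => by
    by_contra h; push_neg at h; exact h.2.1 (hσord.trichotomous a b h.1 h.2.2)
  have σtrans : ∀ {a b c : X}, σ a b → σ b c → σ a c :=
    fun h1 h2 => hσord.trans _ _ _ h1 h2
  -- existence of minimal-cardinality members of the closure family
  have exh : ∀ x y : X, ∃ S : Set X, (CIfam d S ∧ x ∈ S ∧ y ∈ S) ∧
      ∀ S' : Set X, CIfam d S' → x ∈ S' → y ∈ S' → S.ncard ≤ S'.ncard := by
    intro x y
    have hA : ({n : ℕ | ∃ S : Set X, (CIfam d S ∧ x ∈ S ∧ y ∈ S) ∧ S.ncard = n}).Nonempty := by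
      refine ⟨_, {v | d x v ≤ d x y}, ⟨CIfam.bout x y, ?_, ?_⟩, rfl⟩
      · show d x x ≤ d x y
        rw [h0]; exact hnn x y
      · show d x y ≤ d x y
        exact le_refl _
    obtain ⟨S, ⟨hS, hx, hy⟩, hcard⟩ := Nat.sInf_mem hA
    refine ⟨S, ⟨hS, hx, hy⟩, ?_⟩
    intro S' h1 h2 h3
    rw [hcard]
    exact Nat.sInf_le ⟨S', ⟨h1, h2, h3⟩, rfl⟩
  choose H hH hmin using exh
  have hHCI : ∀ x y, CIfam d (H x y) := fun x y => (hH x y).1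
  have hHx : ∀ x y, x ∈ H x y := fun x y => (hH x y).2.1
  have hHy : ∀ x y, y ∈ H x y := fun x y => (hH x y).2.2
  -- the hull is the least member containing the two points
  have hleast : ∀ x y (S' : Set X), CIfam d S' → x ∈ S' → y ∈ S' → H x y ⊆ S' := by
    intro x y S' hS' hx' hy'
    by_contra hsub
    obtain ⟨u, huH, huS⟩ := Set.not_subset.mp hsub
    by_cases hd : (S' \ H x y).Nonempty
    · have hCI2 : CIfam d (H x y ∩ S') := CIfam.inter (hHCI x y) hS'
      have hssub : H x y ∩ S' ⊂ H x y := by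
        refine ⟨Set.inter_subset_left, fun hcon => ?_⟩
        exact huS (hcon huH).2
      have hlt : (H x y ∩ S').ncard < (H x y).ncard :=
        Set.ncard_lt_ncard hssub (Set.toFinite _)
      have hge := hmin x y _ hCI2 ⟨hHx x y, hx'⟩ ⟨hHy x y, hy'⟩
      omega
    · have hsub2 : S' ⊆ H x y := by
        intro v hv
        by_contra hv2
        exact hd ⟨v, hv, hv2⟩
      have hssub : S' ⊂ H x y := ⟨hsub2, fun hcon => huS (hcon huH)⟩
      have hlt : S'.ncard < (H x y).ncard := Set.ncard_lt_ncard hssub (Set.toFinite _)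
      have hge := hmin x y S' hS' hx' hy'
      omega
  have hsymm : ∀ x y, H x y = H y x := fun x y =>
    subset_antisymm (hleast x y _ (hHCI y x) (hHy y x) (hHx y x))
      (hleast y x _ (hHCI x y) (hHy x y) (hHx x y))
  -- hulls are σ-intervals
  have hitvσ : ∀ {S : Set X}, CIfam d S → IsItv σ S :=
    fun hS => CIfam.isItv hnn h0 σtri σtrans hσtw hS
  -- the key combinatorial lemma (H2)
  have H2 : ∀ x y z : X, y ∉ H x z → H x z ⊆ H x y ∨ H x z ⊆ H y z := by
    intro x y z hy
    by_contra hcon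
    push_neg at hcon
    obtain ⟨hnA, hnB⟩ := hcon
    have hyA : y ∈ H x y := hHy x y
    have hyB : y ∈ H y z := hHx y z
    have hxK : x ∈ H x z := hHx x z
    have hzK : z ∈ H x z := hHy x z
    have hxA : x ∈ H x y := hHx x y
    have hzB : z ∈ H y z := hHy y z
    -- A ∪ B ∈ CI and contains x, z, hence contains the hull K
    have hAB : CIfam d (H x y ∪ H y z) :=
      CIfam.union (hHCI x y) (hHCI y z) ⟨y, hyA, hyB⟩
    have hKAB : H x z ⊆ H x y ∪ H y z :=
      hleast x z _ hAB (Or.inl hxA) (Or.inr hzB)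
    have hKitv : IsItv σ (H x z) := hitvσ (hHCI x z)
    have hAitv : IsItv σ (H x y) := hitvσ (hHCI x y)
    have hBitv : IsItv σ (H y z) := hitvσ (hHCI y z)
    -- y lies on one side of K
    have hside : (∀ k ∈ H x z, σ k y) ∨ (∀ k ∈ H x z, σ y k) := by
      by_contra h
      push_neg at h
      obtain ⟨⟨k1, hk1, hk1'⟩, ⟨k2, hk2, hk2'⟩⟩ := h
      have hk1y : σ y k1 := by
        rcases σtri k1 y with h' | h' | h'
        · exact absurd h' hk1'
        · exact absurd (h' ▸ hk1) hy
        · exact h'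
      have hk2y : σ k2 y := by
        rcases σtri k2 y with h' | h' | h'
        · exact h'
        · exact absurd (h' ▸ hk2) hy
        · exact absurd h' hk2'
      exact hy (hKitv hk2y hk1y hk2 hk1)
    have hKne : (H x z).Nonempty := ⟨x, hxK⟩
    have hKfin : (H x z).Finite := Set.toFinite _
    rcases hside with hs | hs
    · -- take a σ-minimal element of K
      obtain ⟨a0, ha0, hamin⟩ := exists_rel_min σtri σtrans hKfin.toFinset
        (by rwa [Set.Finite.toFinset_nonempty])
      rw [Set.Finite.mem_toFinset] at ha0
      have hamin' : ∀ k ∈ H x z, k ≠ a0 → σ a0 k := by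
        intro k hk hka
        exact hamin k (hKfin.mem_toFinset.mpr hk) hka
      rcases hKAB ha0 with haA | haB
      · refine hnA ?_
        intro k hk
        by_cases hka : k = a0
        · exact hka ▸ haA
        · exact hAitv (hamin' k hk hka) (hs k hk) haA hyA
      · refine hnB ?_
        intro k hk
        by_cases hka : k = a0
        · exact hka ▸ haB
        · exact hBitv (hamin' k hk hka) (hs k hk) haB hyB
    · -- take a σ-maximal element of K (minimal for the swapped order)
      have σtri' : ∀ a b : X, σ b a ∨ a = b ∨ σ a b := by
        intro a b
        rcases σtri a b with h | h | h
        · exact Or.inr (Or.inr h)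
        · exact Or.inr (Or.inl h)
        · exact Or.inl h
      have σtrans' : ∀ {a b c : X}, σ b a → σ c b → σ c a :=
        fun h1 h2 => σtrans h2 h1
      obtain ⟨a0, ha0, hamin⟩ := exists_rel_min (r := fun a b => σ b a) σtri'
        (fun h1 h2 => σtrans' h1 h2) hKfin.toFinset
        (by rwa [Set.Finite.toFinset_nonempty])
      rw [Set.Finite.mem_toFinset] at ha0
      have hamin' : ∀ k ∈ H x z, k ≠ a0 → σ k a0 := by
        intro k hk hka
        exact hamin k (hKfin.mem_toFinset.mpr hk) hka
      rcases hKAB ha0 with haA | haB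
      · refine hnA ?_
        intro k hk
        by_cases hka : k = a0
        · exact hka ▸ haA
        · exact hAitv (hs k hk) (hamin' k hk hka) hyA haA
      · refine hnB ?_
        intro k hk
        by_cases hka : k = a0
        · exact hka ▸ haB
        · exact hBitv (hs k hk) (hamin' k hk hka) hyB haB
  -- the symmetric dissimilarity
  set D : X → X → ℝ := fun x y => if x = y then 0 else ((H x y).ncard : ℝ) with hD
  have hDsymm : ∀ x y, D x y = D y x := by
    intro x y
    by_cases h : x = y
    · subst h; rfl
    · simp only [hD, if_neg h, if_neg (Ne.symm h), hsymm x y]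
  have hDdiag : ∀ x, D x x = 0 := fun x => by simp [hD]
  have hDnn : ∀ x y, 0 ≤ D x y := by
    intro x y
    by_cases h : x = y
    · simp [hD, h]
    · simp only [hD, if_neg h]
      exact Nat.cast_nonneg _
  -- main equivalence
  have hiff : ∀ r : X → X → Prop, IsStrictTotalOrder X r →
      (RobCompat D r ↔ TwoWayCompat d r) := by
    intro r hr
    have rtri : ∀ a b : X, r a b ∨ a = b ∨ r b a := fun a b => by
      by_contra h; push_neg at h; exact h.2.1 (hr.trichotomous a b h.1 h.2.2)
    have rtrans : ∀ {a b c : X}, r a b → r b c → r a c :=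
      fun h1 h2 => hr.trans _ _ _ h1 h2
    have rirr : ∀ a : X, ¬ r a a := fun a => hr.irrefl a
    constructor
    · -- Robinson for D implies two-way for d
      intro hrob a b c hab hbc
      have hac : r a c := rtrans hab hbc
      have hne_ab : a ≠ b := fun h => rirr a (h ▸ hab)
      have hne_bc : b ≠ c := fun h => rirr b (h ▸ hbc)
      have hne_ac : a ≠ c := fun h => rirr a (h ▸ hac)
      -- key: b belongs to every member of the family containing a and c
      have key : ∀ S : Set X, CIfam d S → a ∈ S → c ∈ S → b ∈ S := by
        intro S hS haS hcS
        by_contra hbS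
        have hbK : b ∉ H a c := fun h => hbS (hleast a c S hS haS hcS h)
        have hrb := hrob a b c hab hbc
        simp only [hD, if_neg hne_ab, if_neg hne_bc, if_neg hne_ac] at hrb
        rcases H2 a b c hbK with hsub | hsub
        · have hssub : H a c ⊂ H a b :=
            ⟨hsub, fun hcon => hbK (hcon (hHy a b))⟩
          have hlt : (H a c).ncard < (H a b).ncard :=
            Set.ncard_lt_ncard hssub (Set.toFinite _)
          have hle : ((H a b).ncard : ℝ) ≤ ((H a c).ncard : ℝ) :=
            le_trans (le_max_left _ _) hrb
          rw [Nat.cast_le] at hle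
          omega
        · have hssub : H a c ⊂ H b c :=
            ⟨hsub, fun hcon => hbK (hcon (hHx b c))⟩
          have hlt : (H a c).ncard < (H b c).ncard :=
            Set.ncard_lt_ncard hssub (Set.toFinite _)
          have hle : ((H b c).ncard : ℝ) ≤ ((H a c).ncard : ℝ) :=
            le_trans (le_max_right _ _) hrb
          rw [Nat.cast_le] at hle
          omega
      refine ⟨max_le ?_ ?_, max_le ?_ ?_⟩
      · -- d a b ≤ d a c
        have := key {v | d a v ≤ d a c} (CIfam.bout a c)
          (by show d a a ≤ d a c; rw [h0]; exact hnn a c)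
          (by show d a c ≤ d a c; exact le_refl _)
        exact this
      · -- d b c ≤ d a c
        have := key {v | d v c ≤ d a c} (CIfam.bin c a)
          (by show d a c ≤ d a c; exact le_refl _)
          (by show d c c ≤ d a c; rw [h0]; exact hnn a c)
        exact this
      · -- d c b ≤ d c a
        have := key {v | d c v ≤ d c a} (CIfam.bout c a)
          (by show d c a ≤ d c a; exact le_refl _)
          (by show d c c ≤ d c a; rw [h0]; exact hnn c a)
        exact this
      · -- d b a ≤ d c a
        have := key {v | d v a ≤ d c a} (CIfam.bin a c)
          (by show d a a ≤ d c a; rw [h0]; exact hnn c a)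
          (by show d c a ≤ d c a; exact le_refl _)
        exact this
    · -- two-way for d implies Robinson for D
      intro htw a b c hab hbc
      have hac : r a c := rtrans hab hbc
      have hne_ab : a ≠ b := fun h => rirr a (h ▸ hab)
      have hne_bc : b ≠ c := fun h => rirr b (h ▸ hbc)
      have hne_ac : a ≠ c := fun h => rirr a (h ▸ hac)
      have hbH : b ∈ H a c :=
        (CIfam.isItv hnn h0 rtri rtrans htw (hHCI a c)) hab hbc (hHx a c) (hHy a c)
      have s1 : H a b ⊆ H a c := hleast a b _ (hHCI a c) (hHx a c) hbH
      have s2 : H b c ⊆ H a c := hleast b c _ (hHCI a c) hbH (hHy a c)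
      simp only [hD, if_neg hne_ab, if_neg hne_bc, if_neg hne_ac]
      refine max_le ?_ ?_
      · exact Nat.cast_le.mpr (Set.ncard_le_ncard s1 (Set.toFinite _))
      · exact Nat.cast_le.mpr (Set.ncard_le_ncard s2 (Set.toFinite _))
  exact ⟨D, hDsymm, hDdiag, hDnn, hiff, σ, hσord, (hiff σ hσord).mpr hσtw⟩
end

section
/- An orientation O of a finite tree T = (V,E) has a central vertex if and only if for all vertices t, t' ∈ V there exists a vertex c ∈ V with t ↔ c and t' ↔ c. -/
/-- An orientation of (the edges of) a simple graph `T`: each edge `{u,v}` gets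
exactly one of the directions `(u,v)` or `(v,u)`. -/
structure Orient {V : Type*} (T : SimpleGraph V) where
  dir : V → V → Prop
  dir_adj : ∀ u v, dir u v → T.Adj u v
  dir_total : ∀ u v, T.Adj u v → dir u v ∨ dir v u
  dir_asymm : ∀ u v, dir u v → ¬ dir v u

/-- `x ⇝ y` : there is a directed path from `x` to `y` (in particular `x ⇝ x`). -/
def Orient.reaches {V : Type*} {T : SimpleGraph V} (O : Orient T) (x y : V) : Prop :=
  Relation.ReflTransGen O.dir x y

/-- `x ↔ y` : `x ⇝ y` or `y ⇝ x`. -/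
def Orient.conn {V : Type*} {T : SimpleGraph V} (O : Orient T) (x y : V) : Prop :=
  O.reaches x y ∨ O.reaches y x

/-- A vertex `x` is central for an orientation if `x ↔ y` for every vertex `y`. -/
def Orient.central {V : Type*} {T : SimpleGraph V} (O : Orient T) (x : V) : Prop :=
  ∀ y, O.conn x y

/-- `ξ(O)`: the number of unordered pairs `{x,y}` of distinct vertices with `x ↔ y`. -/
noncomputable def Orient.xi {V : Type*} {T : SimpleGraph V} (O : Orient T) : ℕ :=
  Set.ncard {p : Sym2 V | ∃ x y : V, p = s(x, y) ∧ x ≠ y ∧ O.conn x y}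

namespace Stmt3Aux

variable {V : Type*} {T : SimpleGraph V} [DecidableEq V]

/-- The unique path between two vertices in a tree. -/
noncomputable def thePath (hT : T.IsTree) (x y : V) : T.Walk x y :=
  (hT.existsUnique_path x y).choose

lemma thePath_isPath (hT : T.IsTree) (x y : V) : (thePath hT x y).IsPath :=
  (hT.existsUnique_path x y).choose_spec.1

lemma path_eq (hT : T.IsTree) {x y : V} (w : T.Walk x y) (hw : w.IsPath) :
    w = thePath hT x y :=
  (hT.existsUnique_path x y).choose_spec.2 w hw |>.symm ▸ rfl

/-- A walk is directed if each of its darts follows the orientation. -/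
def IsDir (O : Orient T) {x y : V} (w : T.Walk x y) : Prop :=
  ∀ d ∈ w.darts, O.dir d.toProd.1 d.toProd.2

lemma reaches_of_isDir (O : Orient T) {x y : V} (w : T.Walk x y) (hw : IsDir O w) :
    O.reaches x y := by
  induction w with
  | nil => exact Relation.ReflTransGen.refl
  | cons h p ih =>
    refine Relation.ReflTransGen.head (hw ⟨(_, _), ‹_›⟩ (by simp [SimpleGraph.Walk.darts_cons])) (ih ?_)
    intro d hd; exact hw d (by simp [SimpleGraph.Walk.darts_cons, hd])

lemma exists_isDir_of_reaches (O : Orient T) {x y : V} (h : O.reaches x y) :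
    ∃ w : T.Walk x y, IsDir O w := by
  induction h with
  | refl => exact ⟨SimpleGraph.Walk.nil, by intro d hd; simp [SimpleGraph.Walk.darts_nil] at hd⟩
  | tail _ hbc ih =>
    obtain ⟨w, hw⟩ := ih
    refine ⟨w.concat (O.dir_adj _ _ hbc), ?_⟩
    intro d hd
    rw [SimpleGraph.Walk.darts_concat, List.concat_eq_append, List.mem_append,
      List.mem_singleton] at hd
    rcases hd with hd | hd
    · exact hw d hd
    · subst hd; exact hbc

lemma isDir_split (O : Orient T) {x y m : V} (w : T.Walk x y) (hw : IsDir O w)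
    (hm : m ∈ w.support) : O.reaches x m ∧ O.reaches m y := by
  constructor
  · exact reaches_of_isDir O (w.takeUntil m hm)
      (fun d hd => hw d (w.darts_takeUntil_subset hm hd))
  · exact reaches_of_isDir O (w.dropUntil m hm)
      (fun d hd => hw d (w.darts_dropUntil_subset hm hd))

/-- In a tree, the support of the unique path is contained in the support of any walk
with the same endpoints. -/
lemma thePath_support_subset (hT : T.IsTree) {x y : V} (w : T.Walk x y) :
    (thePath hT x y).support ⊆ w.support := by
  have : w.bypass = thePath hT x y := path_eq hT w.bypass w.bypass_isPath
  rw [← this]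
  exact w.support_bypass_subset

/-- Splitting connectivity along the unique path. -/
lemma conn_split (hT : T.IsTree) (O : Orient T) {t c m : V} (h : O.conn t c)
    (hm : m ∈ (thePath hT t c).support) : O.conn t m := by
  rcases h with h | h
  · obtain ⟨w, hw⟩ := exists_isDir_of_reaches O h
    have hm' : m ∈ w.support := thePath_support_subset hT w hm
    exact Or.inl (isDir_split O w hw hm').1
  · obtain ⟨w, hw⟩ := exists_isDir_of_reaches O h
    have hrev : (thePath hT t c).reverse = thePath hT c t :=
      path_eq hT _ (thePath_isPath hT t c).reverse
    have hm0 : m ∈ (thePath hT c t).support := by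
      rw [← hrev, SimpleGraph.Walk.support_reverse, List.mem_reverse]; exact hm
    have hm' : m ∈ w.support := thePath_support_subset hT w hm0
    exact Or.inr (isDir_split O w hw hm').2

/-- Tree fact: the path from `x` to `y` is contained in paths via any `t`. -/
lemma path_subset_union (hT : T.IsTree) (t x y : V) :
    ∀ m ∈ (thePath hT x y).support,
      m ∈ (thePath hT t x).support ∨ m ∈ (thePath hT t y).support := by
  intro m hm
  set w : T.Walk x y := (thePath hT t x).reverse.append (thePath hT t y) with hwdef
  have hm' : m ∈ w.support := thePath_support_subset hT w hm
  rw [hwdef, SimpleGraph.Walk.mem_support_append_iff] at hm'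
  rcases hm' with hm' | hm'
  · left; rwa [SimpleGraph.Walk.support_reverse, List.mem_reverse] at hm'
  · right; exact hm'

/-- A set is path-closed if it contains the unique path between any two of its points. -/
def PathClosed (hT : T.IsTree) (S : Set V) : Prop :=
  ∀ x ∈ S, ∀ y ∈ S, ∀ m ∈ (thePath hT x y).support, m ∈ S

lemma pathClosed_conn (hT : T.IsTree) (O : Orient T) (t : V) :
    PathClosed hT {c | O.conn t c} := by
  intro x hx y hy m hm
  rcases path_subset_union hT t x y m hm with h | h
  · have hrev : (thePath hT x t).reverse = thePath hT t x :=
      path_eq hT _ (thePath_isPath hT x t).reverse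
    have : m ∈ (thePath hT t x).support := h
    exact conn_split hT O hx this
  · exact conn_split hT O hy h

/-- Median lemma (auxiliary): along any path from `a` to `c`, there is a vertex on
both `thePath a b` and `thePath b c`. -/
lemma median_aux (hT : T.IsTree) :
    ∀ {a c : V} (q : T.Walk a c), q.IsPath → ∀ b : V,
      ∃ m, m ∈ q.support ∧ m ∈ (thePath hT a b).support ∧ m ∈ (thePath hT b c).support := by
  intro a c q
  induction q with
  | nil =>
    intro _ b
    exact ⟨_, by simp, (thePath hT _ b).start_mem_support, (thePath hT b _).end_mem_support⟩
  | @cons a a' c h q' ih =>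
    intro hq b
    rw [SimpleGraph.Walk.cons_isPath_iff] at hq
    obtain ⟨m, hmq, hmab, hmbc⟩ := ih hq.1 b
    by_cases ha : a ∈ (thePath hT a' b).support
    · -- thePath a' b = cons h (thePath a b)
      have hdrop : (thePath hT a' b).dropUntil a ha = thePath hT a b :=
        path_eq hT _ ((thePath_isPath hT a' b).dropUntil ha)
      have htake : (thePath hT a' b).takeUntil a ha
          = SimpleGraph.Walk.cons h.symm SimpleGraph.Walk.nil := by
        have h1 : ((thePath hT a' b).takeUntil a ha).IsPath :=
          (thePath_isPath hT a' b).takeUntil ha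
        have h2 : (SimpleGraph.Walk.cons h.symm (SimpleGraph.Walk.nil : T.Walk a a)).IsPath := by
          simp [SimpleGraph.Walk.cons_isPath_iff, h.ne']
        exact (path_eq hT _ h1).trans (path_eq hT _ h2).symm
      have hsupp : (thePath hT a' b).support = a' :: (thePath hT a b).support := by
        conv_lhs => rw [← (thePath hT a' b).take_spec ha]
        rw [SimpleGraph.Walk.support_append, htake, hdrop,
          (thePath hT a b).support_eq_cons]
        simp
      by_cases hma' : m = a'
      · -- a' ∈ thePath b c, hence a ∈ thePath b c; use m' = a
        rw [hma'] at hmbc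
        have htake' : (thePath hT b c).takeUntil a' hmbc = (thePath hT a' b).reverse := by
          have h1 : ((thePath hT b c).takeUntil a' hmbc).IsPath :=
            (thePath_isPath hT b c).takeUntil hmbc
          have h2 : ((thePath hT a' b).reverse).IsPath := (thePath_isPath hT a' b).reverse
          exact (path_eq hT _ h1).trans (path_eq hT _ h2).symm
        have hamb : a ∈ (thePath hT a' b).reverse.support := by
          rw [SimpleGraph.Walk.support_reverse, List.mem_reverse]; exact ha
        have habc : a ∈ (thePath hT b c).support := by
          apply (thePath hT b c).support_takeUntil_subset hmbc
          rw [htake']; exact hamb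
        exact ⟨a, by simp, (thePath hT a b).start_mem_support, habc⟩
      · have hmab' : m ∈ (thePath hT a b).support := by
          have h3 := hmab; rw [hsupp] at h3
          rcases List.mem_cons.1 h3 with h' | h'
          · exact absurd h' hma'
          · exact h'
        exact ⟨m, by simp [SimpleGraph.Walk.support_cons, hmq], hmab', hmbc⟩
    · -- thePath a b = cons h (thePath a' b)
      have hcons : SimpleGraph.Walk.cons h (thePath hT a' b) = thePath hT a b := by
        apply path_eq
        rw [SimpleGraph.Walk.cons_isPath_iff]
        exact ⟨thePath_isPath hT a' b, ha⟩
      have hmab2 : m ∈ (thePath hT a b).support := by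
        rw [← hcons, SimpleGraph.Walk.support_cons]; exact List.mem_cons_of_mem _ hmab
      exact ⟨m, by simp [SimpleGraph.Walk.support_cons, hmq], hmab2, hmbc⟩

/-- Median: three vertices of a tree admit a vertex on all three pairwise paths. -/
lemma median (hT : T.IsTree) (a b c : V) :
    ∃ m, m ∈ (thePath hT a b).support ∧ m ∈ (thePath hT a c).support ∧
      m ∈ (thePath hT b c).support := by
  obtain ⟨m, h1, h2, h3⟩ := median_aux hT (thePath hT a c) (thePath_isPath hT a c) b
  exact ⟨m, h2, h1, h3⟩

/-- Helly property for path-closed subsets of a tree. -/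
lemma helly (hT : T.IsTree) :
    ∀ (n : ℕ) (L : List (Set V)), L.length ≤ n → L ≠ [] →
      (∀ S ∈ L, PathClosed hT S) →
      (∀ S ∈ L, ∀ S' ∈ L, (S ∩ S').Nonempty) →
      ∃ m, ∀ S ∈ L, m ∈ S := by
  intro n
  induction n with
  | zero =>
    intro L hL hne _ _
    exact absurd (List.length_eq_zero_iff.mp (Nat.le_zero.mp hL)) hne
  | succ n ih =>
    intro L hL hne hpc hpair
    match L with
    | [] => exact absurd rfl hne
    | [S] =>
      obtain ⟨m, hm⟩ := hpair S (by simp) S (by simp)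
      exact ⟨m, by simpa using hm.1⟩
    | S₁ :: S₂ :: L' =>
      have key : ∀ S ∈ (S₁ ∩ S₂) :: L', ∀ S' ∈ (S₁ ∩ S₂) :: L', (S ∩ S').Nonempty := by
        have inter3 : ∀ T ∈ L', ((S₁ ∩ S₂) ∩ T).Nonempty := by
          intro T hT'
          obtain ⟨p, hp1, hp2⟩ := hpair S₁ (by simp) S₂ (by simp)
          obtain ⟨q, hq1, hq2⟩ := hpair S₁ (by simp) T (by simp [hT'])
          obtain ⟨r, hr1, hr2⟩ := hpair S₂ (by simp) T (by simp [hT'])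
          obtain ⟨m, hm1, hm2, hm3⟩ := median hT p q r
          refine ⟨m, ⟨⟨?_, ?_⟩, ?_⟩⟩
          · exact hpc S₁ (by simp) p hp1 q hq1 m hm1
          · exact hpc S₂ (by simp) p hp2 r hr1 m hm2
          · exact hpc T (by simp [hT']) q hq2 r hr2 m hm3
        intro S hS S' hS'
        rcases List.mem_cons.1 hS with rfl | hS <;>
          rcases List.mem_cons.1 hS' with rfl | hS'
        · obtain ⟨p, hp⟩ := hpair S₁ (by simp) S₂ (by simp)
          exact ⟨p, hp, hp⟩
        · exact inter3 S' hS'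
        · obtain ⟨m, hm⟩ := inter3 S hS
          exact ⟨m, hm.2, hm.1⟩
        · exact hpair S (by simp [hS]) S' (by simp [hS'])
      have hpc' : ∀ S ∈ (S₁ ∩ S₂) :: L', PathClosed hT S := by
        intro S hS
        rcases List.mem_cons.1 hS with rfl | hS
        · intro x hx y hy m hm
          exact ⟨hpc S₁ (by simp) x hx.1 y hy.1 m hm, hpc S₂ (by simp) x hx.2 y hy.2 m hm⟩
        · exact hpc S (by simp [hS])
      obtain ⟨m, hm⟩ := ih ((S₁ ∩ S₂) :: L') (by simpa using Nat.le_of_succ_le_succ hL)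
        (by simp) hpc' key
      have h12 : m ∈ S₁ ∩ S₂ := hm _ List.mem_cons_self
      refine ⟨m, ?_⟩
      intro S hS
      rcases List.mem_cons.1 hS with rfl | hS
      · exact h12.1
      rcases List.mem_cons.1 hS with rfl | hS
      · exact h12.2
      · exact hm S (by simp [hS])

end Stmt3Aux

open Stmt3Aux in
/-- an orientation of a finite tree has a central vertex iff every
two vertices `t, t'` admit a common vertex `c` with `t ↔ c` and `t' ↔ c`. -/
theorem stmt3 {V : Type*} [Fintype V] {T : SimpleGraph V} (hT : T.IsTree)
    (O : Orient T) :
    (∃ x, O.central x) ↔ ∀ t t' : V, ∃ c, O.conn t c ∧ O.conn t' c := by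
  constructor
  · rintro ⟨x, hx⟩ t t'
    exact ⟨x, Or.symm (hx t), Or.symm (hx t')⟩
  · intro h
    have hne : Nonempty V := hT.isConnected.nonempty
    classical
    set L : List (Set V) := (Finset.univ : Finset V).toList.map (fun t => {c | O.conn t c})
      with hLdef
    have hLne : L ≠ [] := by
      simp [hLdef, Finset.toList_eq_nil, Finset.univ_eq_empty_iff]
    obtain ⟨m, hm⟩ := helly hT L.length L le_rfl hLne
      (by
        intro S hS
        rw [hLdef, List.mem_map] at hS
        obtain ⟨t, _, rfl⟩ := hS
        exact pathClosed_conn hT O t)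
      (by
        intro S hS S' hS'
        rw [hLdef, List.mem_map] at hS hS'
        obtain ⟨t, _, rfl⟩ := hS
        obtain ⟨t', _, rfl⟩ := hS'
        obtain ⟨c, hc, hc'⟩ := h t t'
        exact ⟨c, hc, hc'⟩)
    refine ⟨m, fun y => ?_⟩
    have : m ∈ {c | O.conn y c} := hm _ (by
      rw [hLdef, List.mem_map]
      exact ⟨y, by simp, rfl⟩)
    exact Or.symm this
end

section
/- Let T = (V,E) be a finite nonempty tree and let O be an orientation of T that maximizes ξ among all orientations of T. Then O has a central vertex. -/
/-! ### Auxiliary development -/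

open SimpleGraph Finset

attribute [local instance] Classical.propDecidable

namespace StmtAux

variable {V : Type*} {T : SimpleGraph V}

/-! #### Basic facts about orientations -/

lemma reaches_refl (O : Orient T) (x : V) : O.reaches x x := Relation.ReflTransGen.refl

lemma reaches_trans {O : Orient T} {x y z : V} (h1 : O.reaches x y) (h2 : O.reaches y z) :
    O.reaches x z := Relation.ReflTransGen.trans h1 h2

lemma conn_symm {O : Orient T} {x y : V} (h : O.conn x y) : O.conn y x := h.symm

/-- Reversing every edge of an orientation. -/
def rev (O : Orient T) : Orient T where
  dir u v := O.dir v u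
  dir_adj u v h := (O.dir_adj v u h).symm
  dir_total u v h := O.dir_total v u h.symm
  dir_asymm u v h hh := O.dir_asymm v u h hh

lemma rev_reaches (O : Orient T) {x y : V} : (rev O).reaches x y ↔ O.reaches y x := by
  constructor
  · intro h
    exact Relation.ReflTransGen.swap _ _ h
  · intro h
    exact Relation.ReflTransGen.swap _ _ h

lemma rev_conn (O : Orient T) (x y : V) : (rev O).conn x y ↔ O.conn x y := by
  unfold Orient.conn
  rw [rev_reaches, rev_reaches, or_comm]

lemma rev_xi (O : Orient T) : (rev O).xi = O.xi := by
  unfold Orient.xi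
  congr 1
  ext p
  simp only [Set.mem_setOf_eq]
  constructor
  · rintro ⟨x, y, rfl, hxy, hc⟩
    exact ⟨x, y, rfl, hxy, (rev_conn O x y).1 hc⟩
  · rintro ⟨x, y, rfl, hxy, hc⟩
    exact ⟨x, y, rfl, hxy, (rev_conn O x y).2 hc⟩

/-! #### Sides of an edge of a tree -/

/-- `onSide T w u x`: `x` lies on the `u`-side of the edge `{w,u}`. -/
def onSide (T : SimpleGraph V) (w u x : V) : Prop :=
  (T.deleteEdges {s(w, u)}).Reachable u x

lemma cut_comm (w u : V) : T.deleteEdges {s(w, u)} = T.deleteEdges {s(u, w)} := by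
  rw [Sym2.eq_swap]

lemma onSide_refl (w u : V) : onSide T w u u := Reachable.refl u

lemma onSide_adj {w u a b : V} (hab : T.Adj a b) (hne : s(a, b) ≠ s(w, u))
    (ha : onSide T w u a) : onSide T w u b := by
  refine ha.trans (Adj.reachable ?_)
  rw [SimpleGraph.deleteEdges_adj]
  exact ⟨hab, by simpa using hne⟩

lemma side_total (hT : T.IsTree) (w u x : V) : onSide T w u x ∨ onSide T u w x := by
  have haux : ∀ (a x : V), T.Walk a x → (onSide T w u a ∨ onSide T u w a) →
      (onSide T w u x ∨ onSide T u w x) := by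
    intro a x p
    induction p with
    | nil => exact fun h => h
    | @cons a b x hab p ih =>
      intro ha
      refine ih ?_
      by_cases hne : s(a, b) = s(w, u)
      · rw [Sym2.eq_iff] at hne
        rcases hne with ⟨-, rfl⟩ | ⟨-, rfl⟩
        · exact Or.inl (onSide_refl w b)
        · exact Or.inr (onSide_refl u b)
      · rcases ha with ha | ha
        · exact Or.inl (onSide_adj hab hne ha)
        · refine Or.inr (onSide_adj hab (fun hc => hne ?_) ha)
          rw [hc, Sym2.eq_swap]
  obtain ⟨p⟩ := hT.isConnected.preconnected u x
  exact haux u x p (Or.inl (onSide_refl w u))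

lemma side_disjoint (hT : T.IsTree) {w u : V} (hadj : T.Adj w u) (x : V) :
    ¬ (onSide T w u x ∧ onSide T u w x) := by
  rintro ⟨h1, h2⟩
  have hbr : T.IsBridge s(w, u) :=
    (SimpleGraph.isAcyclic_iff_forall_edge_isBridge.mp hT.IsAcyclic) hadj
  rw [SimpleGraph.isBridge_iff] at hbr
  refine hbr ?_
  have h2' : (T.deleteEdges {s(w, u)}).Reachable w x := by
    rw [cut_comm]; exact h2
  exact h2'.trans h1.symm

lemma not_onSide_self (hT : T.IsTree) {w u : V} (hadj : T.Adj w u) : ¬ onSide T w u w :=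
  fun h => side_disjoint hT hadj w ⟨h, onSide_refl u w⟩


/-! #### Interaction of an orientation with the sides of a directed edge -/

section Cross

variable (hT : T.IsTree) {O : Orient T} {w u : V} (h : O.dir w u)

include hT h

lemma noCrossStep {a b : V} (hd : O.dir a b) (ha : onSide T w u a) : onSide T w u b := by
  have hadj : T.Adj a b := O.dir_adj a b hd
  by_cases heq : s(a, b) = s(w, u)
  · rcases Sym2.eq_iff.1 heq with ⟨he1, he2⟩ | ⟨he1, he2⟩
    · rw [he2]; exact onSide_refl w u
    · rw [he1, he2] at hd
      exact absurd hd (O.dir_asymm w u h)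
  · exact onSide_adj hadj heq ha

lemma reach_side {a b : V} (hr : O.reaches a b) (ha : onSide T w u a) : onSide T w u b := by
  induction hr using Relation.ReflTransGen.head_induction_on with
  | refl => exact ha
  | head hd _ ih => exact ih (noCrossStep hT h hd ha)

lemma crossW {a b : V} (hr : O.reaches a b) (ha : onSide T u w a) (hb : onSide T w u b) :
    O.reaches a w ∧ O.reaches u b := by
  induction hr using Relation.ReflTransGen.head_induction_on with
  | refl => exact absurd ⟨hb, ha⟩ (side_disjoint hT (O.dir_adj w u h) _)
  | @head a2 c hd rest ih =>
    rcases side_total hT w u c with hc | hc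
    · by_cases heq : s(a2, c) = s(w, u)
      · rcases Sym2.eq_iff.1 heq with ⟨he1, he2⟩ | ⟨he1, he2⟩
        · rw [he1]
          refine ⟨Relation.ReflTransGen.refl, ?_⟩
          rw [← he2]; exact rest
        · rw [he1] at ha
          exact absurd ha (not_onSide_self hT ((O.dir_adj w u h).symm))
      · have hUa : onSide T w u a2 :=
          onSide_adj (O.dir_adj a2 c hd).symm
            (fun hf => heq ((Sym2.eq_swap).trans hf)) hc
        exact absurd ⟨hUa, ha⟩ (side_disjoint hT (O.dir_adj w u h) a2)
    · obtain ⟨hcw, hub⟩ := ih hc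
      exact ⟨Relation.ReflTransGen.head hd hcw, hub⟩

/-- The exchange orientation: the edge `w → u` is flipped to `u → w`, the
`w`-side is reversed, and the `u`-side is kept. -/
def flipRev : Orient T where
  dir a b := (a = u ∧ b = w) ∨ (onSide T u w a ∧ onSide T u w b ∧ O.dir b a) ∨
      (onSide T w u a ∧ onSide T w u b ∧ O.dir a b)
  dir_adj a b hd := by
    rcases hd with ⟨ha1, hb1⟩ | ⟨-, -, hd⟩ | ⟨-, -, hd⟩
    · rw [ha1, hb1]; exact (O.dir_adj w u h).symm
    · exact (O.dir_adj b a hd).symm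
    · exact O.dir_adj a b hd
  dir_total a b hadj := by
    by_cases heq : s(a, b) = s(w, u)
    · rcases Sym2.eq_iff.1 heq with ⟨he1, he2⟩ | ⟨he1, he2⟩
      · exact Or.inr (Or.inl ⟨he2, he1⟩)
      · exact Or.inl (Or.inl ⟨he1, he2⟩)
    · rcases side_total hT w u a with ha | ha
      · have hb : onSide T w u b := onSide_adj hadj heq ha
        rcases O.dir_total a b hadj with hd | hd
        · exact Or.inl (Or.inr (Or.inr ⟨ha, hb, hd⟩))
        · exact Or.inr (Or.inr (Or.inr ⟨hb, ha, hd⟩))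
      · have hb : onSide T u w b := onSide_adj hadj
          (fun hc => heq (hc.trans (Sym2.eq_swap))) ha
        rcases O.dir_total a b hadj with hd | hd
        · exact Or.inr (Or.inr (Or.inl ⟨hb, ha, hd⟩))
        · exact Or.inl (Or.inr (Or.inl ⟨ha, hb, hd⟩))
  dir_asymm a b hd hd' := by
    have hne : w ≠ u := (O.dir_adj w u h).ne
    have hWu : ¬ onSide T u w u := not_onSide_self hT ((O.dir_adj w u h).symm)
    have hUw : ¬ onSide T w u w := not_onSide_self hT (O.dir_adj w u h)
    rcases hd with ⟨ha1, hb1⟩ | ⟨hWa, hWb, hd⟩ | ⟨hUa, hUb, hd⟩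
    · rcases hd' with ⟨hb2, ha2⟩ | ⟨hWb', hWa', -⟩ | ⟨hUb', hUa', -⟩
      · exact hne (ha2.symm.trans ha1)
      · rw [ha1] at hWa'; exact hWu hWa'
      · rw [hb1] at hUb'; exact hUw hUb'
    · rcases hd' with ⟨hb2, ha2⟩ | ⟨hWb', hWa', hd'⟩ | ⟨hUb', hUa', -⟩
      · rw [hb2] at hWb; exact hWu hWb
      · exact O.dir_asymm b a hd hd'
      · exact side_disjoint hT (O.dir_adj w u h) a ⟨hUa', hWa⟩
    · rcases hd' with ⟨hb2, ha2⟩ | ⟨hWb', hWa', -⟩ | ⟨hUb', hUa', hd'⟩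
      · rw [ha2] at hUa; exact hUw hUa
      · exact side_disjoint hT (O.dir_adj w u h) a ⟨hUa, hWa'⟩
      · exact O.dir_asymm a b hd hd'

lemma flip_stepW {a b : V} (hd : (flipRev hT h).dir a b) (ha : onSide T u w a) :
    onSide T u w b := by
  rcases hd with ⟨ha1, hb1⟩ | ⟨-, hb, -⟩ | ⟨hUa, -, -⟩
  · rw [ha1] at ha
    exact absurd ha (not_onSide_self hT ((O.dir_adj w u h).symm))
  · exact hb
  · exact absurd ⟨hUa, ha⟩ (side_disjoint hT (O.dir_adj w u h) a)

lemma flip_reachW {a b : V} (hr : (flipRev hT h).reaches a b) (ha : onSide T u w a) :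
    onSide T u w b := by
  induction hr using Relation.ReflTransGen.head_induction_on with
  | refl => exact ha
  | head hd _ ih => exact ih (flip_stepW hT h hd ha)

lemma R1fwd {a b : V} (hr : (flipRev hT h).reaches a b) (ha : onSide T u w a) :
    O.reaches b a := by
  induction hr using Relation.ReflTransGen.head_induction_on with
  | refl => exact Relation.ReflTransGen.refl
  | @head a2 c hd rest ih =>
    have hc : onSide T u w c := flip_stepW hT h hd ha
    have hd2 : O.dir c a2 := by
      rcases hd with ⟨ha1, hb1⟩ | ⟨-, -, hd⟩ | ⟨hUa, -, -⟩
      · rw [ha1] at ha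
        exact absurd ha (not_onSide_self hT ((O.dir_adj w u h).symm))
      · exact hd
      · exact absurd ⟨hUa, ha⟩ (side_disjoint hT (O.dir_adj w u h) a2)
    exact Relation.ReflTransGen.tail (ih hc) hd2

lemma R1bwd {x y : V} (hr : O.reaches y x) (hy : onSide T u w y) (hx : onSide T u w x) :
    (flipRev hT h).reaches x y := by
  induction hr using Relation.ReflTransGen.head_induction_on with
  | refl => exact Relation.ReflTransGen.refl
  | @head y2 c hd rest ih =>
    rcases side_total hT w u c with hc | hc
    · exact absurd ⟨reach_side hT h rest hc, hx⟩ (side_disjoint hT (O.dir_adj w u h) x)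
    · exact Relation.ReflTransGen.tail (ih hc) (Or.inr (Or.inl ⟨hc, hy, hd⟩))

lemma R2fwd {a b : V} (hr : (flipRev hT h).reaches a b) (ha : onSide T w u a)
    (hb : onSide T w u b) : O.reaches a b := by
  induction hr using Relation.ReflTransGen.head_induction_on with
  | refl => exact Relation.ReflTransGen.refl
  | @head a2 c hd rest ih =>
    rcases hd with ⟨ha1, hb1⟩ | ⟨hWa, -, -⟩ | ⟨-, hc, hd⟩
    · have hWb : onSide T u w b := by
        refine flip_reachW hT h rest ?_
        rw [hb1]; exact onSide_refl u w
      exact absurd ⟨hb, hWb⟩ (side_disjoint hT (O.dir_adj w u h) b)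
    · exact absurd ⟨ha, hWa⟩ (side_disjoint hT (O.dir_adj w u h) a2)
    · exact Relation.ReflTransGen.head hd (ih hc)

lemma R2bwd {a b : V} (hr : O.reaches a b) (ha : onSide T w u a) :
    (flipRev hT h).reaches a b := by
  induction hr using Relation.ReflTransGen.head_induction_on with
  | refl => exact Relation.ReflTransGen.refl
  | @head a2 c hd rest ih =>
    have hc : onSide T w u c := noCrossStep hT h hd ha
    exact Relation.ReflTransGen.head (Or.inr (Or.inr ⟨ha, hc, hd⟩)) (ih hc)

lemma R3fwd {y x : V} (hr : (flipRev hT h).reaches y x) (hy : onSide T w u y)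
    (hx : onSide T u w x) : O.reaches y u ∧ O.reaches x w := by
  induction hr using Relation.ReflTransGen.head_induction_on with
  | refl => exact absurd ⟨hy, hx⟩ (side_disjoint hT (O.dir_adj w u h) _)
  | @head y2 c hd rest ih =>
    rcases hd with ⟨ha1, hb1⟩ | ⟨hWa, -, -⟩ | ⟨-, hc, hd3⟩
    · constructor
      · rw [ha1]; exact Relation.ReflTransGen.refl
      · rw [hb1] at rest
        exact R1fwd hT h rest (onSide_refl u w)
    · exact absurd ⟨hy, hWa⟩ (side_disjoint hT (O.dir_adj w u h) y2)
    · obtain ⟨h1, h2⟩ := ih hc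
      exact ⟨Relation.ReflTransGen.head hd3 h1, h2⟩

lemma R3bwd {y x : V} (hy : onSide T w u y) (hx : onSide T u w x)
    (h1 : O.reaches y u) (h2 : O.reaches x w) : (flipRev hT h).reaches y x := by
  have s1 : (flipRev hT h).reaches y u := R2bwd hT h h1 hy
  have s2 : (flipRev hT h).dir u w := Or.inl ⟨rfl, rfl⟩
  have s3 : (flipRev hT h).reaches w x := R1bwd hT h h2 hx (onSide_refl u w)
  exact (Relation.ReflTransGen.tail s1 s2).trans s3

lemma connW {x y : V} (hx : onSide T u w x) (hy : onSide T u w y) :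
    ((flipRev hT h).conn x y ↔ O.conn x y) := by
  unfold Orient.conn
  constructor
  · rintro (hr | hr)
    · exact Or.inr (R1fwd hT h hr hx)
    · exact Or.inl (R1fwd hT h hr hy)
  · rintro (hr | hr)
    · exact Or.inr (R1bwd hT h hr hx hy)
    · exact Or.inl (R1bwd hT h hr hy hx)

lemma connU {x y : V} (hx : onSide T w u x) (hy : onSide T w u y) :
    ((flipRev hT h).conn x y ↔ O.conn x y) := by
  unfold Orient.conn
  constructor
  · rintro (hr | hr)
    · exact Or.inl (R2fwd hT h hr hx hy)
    · exact Or.inr (R2fwd hT h hr hy hx)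
  · rintro (hr | hr)
    · exact Or.inl (R2bwd hT h hr hx)
    · exact Or.inr (R2bwd hT h hr hy)

lemma connCrossO {x y : V} (hx : onSide T u w x) (hy : onSide T w u y) :
    (O.conn x y ↔ (O.reaches x w ∧ O.reaches u y)) := by
  constructor
  · rintro (hr | hr)
    · exact crossW hT h hr hx hy
    · exact absurd ⟨reach_side hT h hr hy, hx⟩ (side_disjoint hT (O.dir_adj w u h) x)
  · rintro ⟨h1, h2⟩
    exact Or.inl ((Relation.ReflTransGen.tail h1 h).trans h2)

lemma connCrossO' {x y : V} (hx : onSide T u w x) (hy : onSide T w u y) :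
    ((flipRev hT h).conn x y ↔ (O.reaches y u ∧ O.reaches x w)) := by
  constructor
  · rintro (hr | hr)
    · exact absurd (flip_reachW hT h hr hx) (fun hf =>
        side_disjoint hT (O.dir_adj w u h) y ⟨hy, hf⟩)
    · exact R3fwd hT h hr hy hx
  · rintro ⟨h1, h2⟩
    exact Or.inr (R3bwd hT h hy hx h1 h2)

end Cross


/-! #### Counting comparable pairs -/

section Counting

variable [Fintype V]

/-- The set of comparable pairs, as a finset. -/
noncomputable def pairSet (O : Orient T) : Finset (Sym2 V) :=
  Finset.univ.filter (fun p => ∃ x y : V, p = s(x, y) ∧ x ≠ y ∧ O.conn x y)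

lemma xi_eq_card (O : Orient T) : O.xi = (pairSet O).card := by
  unfold Orient.xi pairSet
  rw [Set.ncard_eq_toFinset_card']
  congr 1
  ext p
  simp

/-- The main exchange inequality: for a directed edge `w → u` of a maximizing
orientation, the number of vertices reaching `u` from the `u`-side is at most the
number of vertices reached from `u`. -/
lemma starHead (hT : T.IsTree) (O : Orient T) (hmax : ∀ O' : Orient T, O'.xi ≤ O.xi)
    {w u : V} (h : O.dir w u) :
    (Finset.univ.filter (fun x => O.reaches x u ∧ onSide T w u x)).card ≤
      (Finset.univ.filter (fun x => O.reaches u x)).card := by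
  set O' := flipRev hT h with hO'
  set cp : Sym2 V → Prop := fun p => ∃ x y : V, p = s(x, y) ∧ onSide T u w x ∧ onSide T w u y
    with hcp
  have hdisj : ∀ x : V, onSide T u w x → onSide T w u x → False := fun x h1 h2 =>
    side_disjoint hT (O.dir_adj w u h) x ⟨h2, h1⟩
  have hside : ∀ x y : V, ¬ cp s(x, y) →
      (onSide T u w x ∧ onSide T u w y) ∨ (onSide T w u x ∧ onSide T w u y) := by
    intro x y hn
    rcases side_total hT w u x with hx | hx
    · rcases side_total hT w u y with hy | hy
      · exact Or.inr ⟨hx, hy⟩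
      · exact absurd ⟨y, x, Sym2.eq_swap.symm, hy, hx⟩ hn
    · rcases side_total hT w u y with hy | hy
      · exact absurd ⟨x, y, rfl, hx, hy⟩ hn
      · exact Or.inl ⟨hx, hy⟩
  have hconn : ∀ x y : V, ¬ cp s(x, y) → (O'.conn x y ↔ O.conn x y) := by
    intro x y hn
    rcases hside x y hn with ⟨h1, h2⟩ | ⟨h1, h2⟩
    · exact connW hT h h1 h2
    · exact connU hT h h1 h2
  have hsame : (pairSet O').filter (fun p => ¬ cp p) = (pairSet O).filter (fun p => ¬ cp p) := by
    ext p
    simp only [Finset.mem_filter, pairSet, Finset.mem_univ, true_and]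
    constructor
    · rintro ⟨⟨x, y, rfl, hxy, hc⟩, hn⟩
      exact ⟨⟨x, y, rfl, hxy, (hconn x y hn).1 hc⟩, hn⟩
    · rintro ⟨⟨x, y, rfl, hxy, hc⟩, hn⟩
      exact ⟨⟨x, y, rfl, hxy, (hconn x y hn).2 hc⟩, hn⟩
  have mem_pairSet : ∀ (Q : Orient T) (p : Sym2 V),
      p ∈ pairSet Q ↔ ∃ x y : V, p = s(x, y) ∧ x ≠ y ∧ Q.conn x y := by
    intro Q p
    simp [pairSet]
  have memW : ∀ x : V, O.reaches x w → onSide T u w x := by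
    intro x h1
    rcases side_total hT w u x with hx | hx
    · exact absurd (reach_side hT h h1 hx) (not_onSide_self hT (O.dir_adj w u h))
    · exact hx
  have memU : ∀ y : V, O.reaches u y → onSide T w u y := fun y h2 =>
    reach_side hT h h2 (onSide_refl w u)
  -- cardinality of the cross part of `O`
  have hcount : ((pairSet O).filter cp).card =
      ((Finset.univ.filter (fun x => O.reaches x w)) ×ˢ
        (Finset.univ.filter (fun y => O.reaches u y))).card := by
    symm
    refine Finset.card_bij (fun a _ => s(a.1, a.2)) ?_ ?_ ?_
    · rintro ⟨x, y⟩ ha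
      rw [Finset.mem_product, Finset.mem_filter, Finset.mem_filter] at ha
      obtain ⟨⟨-, h1⟩, ⟨-, h2⟩⟩ := ha
      have hWx : onSide T u w x := memW x h1
      have hUy : onSide T w u y := memU y h2
      have hxy : x ≠ y := by
        rintro rfl
        exact hdisj x hWx hUy
      rw [Finset.mem_filter, mem_pairSet]
      exact ⟨⟨x, y, rfl, hxy, Or.inl ((Relation.ReflTransGen.tail h1 h).trans h2)⟩,
        x, y, rfl, hWx, hUy⟩
    · rintro ⟨x, y⟩ ha ⟨x2, y2⟩ ha2 heq
      rw [Finset.mem_product, Finset.mem_filter, Finset.mem_filter] at ha ha2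
      have hWx : onSide T u w x := memW x ha.1.2
      have hUy2 : onSide T w u y2 := memU y2 ha2.2.2
      rcases Sym2.eq_iff.1 heq with ⟨he1, he2⟩ | ⟨he1, he2⟩
      · simp only [Prod.mk.injEq]
        exact ⟨he1, he2⟩
      · have he1' : x = y2 := he1
        rw [← he1'] at hUy2
        exact absurd hUy2 (fun hf => hdisj x hWx hf)
    · intro p hp
      rw [Finset.mem_filter, mem_pairSet] at hp
      obtain ⟨⟨x, y, hp3, hxy, hc⟩, a, b, hp2, hWa, hUb⟩ := hp
      have hcab : O.conn a b := by
        rw [hp2] at hp3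
        rcases Sym2.eq_iff.1 hp3 with ⟨he1, he2⟩ | ⟨he1, he2⟩
        · rw [he1, he2]; exact hc
        · rw [he1, he2]; exact hc.symm
      obtain ⟨h1, h2⟩ := (connCrossO hT h hWa hUb).1 hcab
      refine ⟨(a, b), ?_, hp2.symm⟩
      rw [Finset.mem_product, Finset.mem_filter, Finset.mem_filter]
      exact ⟨⟨Finset.mem_univ _, h1⟩, ⟨Finset.mem_univ _, h2⟩⟩
  -- cardinality of the cross part of `O'`
  have hcount' : ((pairSet O').filter cp).card =
      ((Finset.univ.filter (fun x => O.reaches x w)) ×ˢ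
        (Finset.univ.filter (fun y => O.reaches y u ∧ onSide T w u y))).card := by
    symm
    refine Finset.card_bij (fun a _ => s(a.1, a.2)) ?_ ?_ ?_
    · rintro ⟨x, y⟩ ha
      rw [Finset.mem_product, Finset.mem_filter, Finset.mem_filter] at ha
      obtain ⟨⟨-, h1⟩, ⟨-, h2, hUy⟩⟩ := ha
      have hWx : onSide T u w x := memW x h1
      have hxy : x ≠ y := by
        rintro rfl
        exact hdisj x hWx hUy
      rw [Finset.mem_filter, mem_pairSet]
      exact ⟨⟨x, y, rfl, hxy, (connCrossO' hT h hWx hUy).2 ⟨h2, h1⟩⟩, x, y, rfl, hWx, hUy⟩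
    · rintro ⟨x, y⟩ ha ⟨x2, y2⟩ ha2 heq
      rw [Finset.mem_product, Finset.mem_filter, Finset.mem_filter] at ha ha2
      have hWx : onSide T u w x := memW x ha.1.2
      have hUy2 : onSide T w u y2 := ha2.2.2.2
      rcases Sym2.eq_iff.1 heq with ⟨he1, he2⟩ | ⟨he1, he2⟩
      · simp only [Prod.mk.injEq]
        exact ⟨he1, he2⟩
      · have he1' : x = y2 := he1
        rw [← he1'] at hUy2
        exact absurd hUy2 (fun hf => hdisj x hWx hf)
    · intro p hp
      rw [Finset.mem_filter, mem_pairSet] at hp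
      obtain ⟨⟨x, y, hp3, hxy, hc⟩, a, b, hp2, hWa, hUb⟩ := hp
      have hcab : O'.conn a b := by
        rw [hp2] at hp3
        rcases Sym2.eq_iff.1 hp3 with ⟨he1, he2⟩ | ⟨he1, he2⟩
        · rw [he1, he2]; exact hc
        · rw [he1, he2]; exact hc.symm
      obtain ⟨h1, h2⟩ := (connCrossO' hT h hWa hUb).1 hcab
      refine ⟨(a, b), ?_, hp2.symm⟩
      rw [Finset.mem_product, Finset.mem_filter, Finset.mem_filter]
      exact ⟨⟨Finset.mem_univ _, h2⟩, ⟨Finset.mem_univ _, h1, hUb⟩⟩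
  have hle : (pairSet O').card ≤ (pairSet O).card := by
    rw [← xi_eq_card, ← xi_eq_card]
    exact hmax O'
  rw [← Finset.card_filter_add_card_filter_not (p := cp) (s := pairSet O'),
    ← Finset.card_filter_add_card_filter_not (p := cp) (s := pairSet O), hsame] at hle
  have hcross : ((pairSet O').filter cp).card ≤ ((pairSet O).filter cp).card := by omega
  rw [hcount, hcount', Finset.card_product, Finset.card_product] at hcross
  have hbpos : 0 < (Finset.univ.filter (fun x => O.reaches x w)).card := by
    refine Finset.card_pos.2 ⟨w, ?_⟩
    rw [Finset.mem_filter]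
    exact ⟨Finset.mem_univ _, Relation.ReflTransGen.refl⟩
  have := Nat.le_of_mul_le_mul_left hcross hbpos
  calc (Finset.univ.filter (fun x => O.reaches x u ∧ onSide T w u x)).card
      = (Finset.univ.filter (fun y => O.reaches y u ∧ onSide T w u y)).card := rfl
    _ ≤ (Finset.univ.filter (fun x => O.reaches u x)).card := this

end Counting


/-! #### The key strict inequality -/

/-- A directed chain all of whose steps avoid the edge `e` gives a walk in the
edge-deleted graph. -/
lemma reach_del {O : Orient T} {e : Sym2 V} {a b : V} (hr : O.reaches a b)
    (hcond : ∀ x1 x2, O.dir x1 x2 → O.reaches a x1 → O.reaches x2 b → s(x1, x2) ≠ e) :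
    (T.deleteEdges {e}).Reachable a b := by
  induction hr using Relation.ReflTransGen.head_induction_on with
  | refl => exact Reachable.refl b
  | @head a2 c hd rest ih =>
    have hadj : (T.deleteEdges {e}).Adj a2 c := by
      rw [SimpleGraph.deleteEdges_adj]
      refine ⟨O.dir_adj a2 c hd, ?_⟩
      simpa using hcond a2 c hd Relation.ReflTransGen.refl rest
    refine hadj.reachable.trans (ih ?_)
    intro x1 x2 hd2 hpre hsuf
    exact hcond x1 x2 hd2 (Relation.ReflTransGen.head hd hpre) hsuf

lemma frontier {O : Orient T} {w u : V} {a b : V}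
    (p : (T.deleteEdges {s(u, w)}).Walk a b) :
    O.reaches b w → ¬ O.reaches a w → onSide T u w a →
    ∃ q z, O.dir q z ∧ O.reaches q w ∧ ¬ O.reaches z w ∧ onSide T u w z := by
  induction p with
  | nil => exact fun hb hna _ => absurd hb hna
  | @cons a m ww ha rest ih =>
    intro hb hna haW
    by_cases hm : O.reaches m w
    · have hadj : T.Adj a m := (SimpleGraph.deleteEdges_adj.1 ha).1
      rcases O.dir_total a m hadj with hd | hd
      · exact absurd (Relation.ReflTransGen.head hd hm) hna
      · exact ⟨m, a, hd, hm, hna, haW⟩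
    · exact ih hb hm (haW.trans ha.reachable)

lemma key [Fintype V] (hT : T.IsTree) (O : Orient T)
    (hmax : ∀ O' : Orient T, O'.xi ≤ O.xi) {w u : V} (h : O.dir w u)
    (wit : ∃ z, onSide T u w z ∧ ¬ O.reaches z w) :
    (Finset.univ.filter (fun x => O.reaches u x)).card <
      (Finset.univ.filter (fun x => O.reaches x w)).card := by
  obtain ⟨z0, hz0W, hz0⟩ := wit
  obtain ⟨p0⟩ := id hz0W
  obtain ⟨q, z, hqz, hqw, hzw, hzW⟩ :=
    frontier p0.reverse Relation.ReflTransGen.refl hz0 hz0W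
  have hnuw : ¬ O.reaches u w := fun hc =>
    side_disjoint hT (O.dir_adj w u h) w
      ⟨reach_side hT h hc (onSide_refl w u), onSide_refl u w⟩
  -- apply the exchange inequality to the reversed orientation at the edge `q → z`
  have hmaxR : ∀ O'' : Orient T, O''.xi ≤ (rev O).xi := fun O'' =>
    (hmax O'').trans_eq (rev_xi O).symm
  have hdR : (rev O).dir z q := hqz
  have hstar := starHead hT (rev O) hmaxR hdR
  have e1 : Finset.univ.filter (fun x => (rev O).reaches x q ∧ onSide T z q x) =
      Finset.univ.filter (fun x => O.reaches q x ∧ onSide T z q x) := by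
    refine Finset.filter_congr (fun x _ => ?_)
    rw [rev_reaches]
  have e2 : Finset.univ.filter (fun x => (rev O).reaches q x) =
      Finset.univ.filter (fun x => O.reaches x q) := by
    refine Finset.filter_congr (fun x _ => ?_)
    rw [rev_reaches]
  rw [e1, e2] at hstar
  -- the right-hand side is at most the number of vertices reaching `w`
  have h2 : (Finset.univ.filter (fun x => O.reaches x q)).card ≤
      (Finset.univ.filter (fun x => O.reaches x w)).card := by
    refine Finset.card_le_card ?_
    intro x hx
    rw [Finset.mem_filter] at hx ⊢
    exact ⟨hx.1, hx.2.trans hqw⟩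
  -- the left-hand side contains `q` and everything reached from `u`
  have hsub : insert q (Finset.univ.filter (fun x => O.reaches u x)) ⊆
      Finset.univ.filter (fun x => O.reaches q x ∧ onSide T z q x) := by
    intro x hx
    rw [Finset.mem_insert] at hx
    rw [Finset.mem_filter]
    rcases hx with hxq | hx
    · rw [hxq]
      exact ⟨Finset.mem_univ _, Relation.ReflTransGen.refl, onSide_refl z q⟩
    · rw [Finset.mem_filter] at hx
      refine ⟨Finset.mem_univ _, (Relation.ReflTransGen.tail hqw h).trans hx.2, ?_⟩
      -- `x` is on the `q`-side of the edge `{q, z}`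
      have part1 : (T.deleteEdges {s(z, q)}).Reachable q w := by
        refine reach_del hqw ?_
        intro x1 x2 hd hpre hsuf heq
        rcases Sym2.eq_iff.1 heq with ⟨he1, he2⟩ | ⟨he1, he2⟩
        · rw [he1, he2] at hd
          exact O.dir_asymm q z hqz hd
        · rw [he2] at hsuf
          exact hzw hsuf
      have part2 : (T.deleteEdges {s(z, q)}).Adj w u := by
        rw [SimpleGraph.deleteEdges_adj]
        refine ⟨O.dir_adj w u h, ?_⟩
        rw [Set.mem_singleton_iff]
        intro heq
        rcases Sym2.eq_iff.1 heq with ⟨he1, he2⟩ | ⟨he1, he2⟩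
        · rw [← he1] at hzw
          exact hzw Relation.ReflTransGen.refl
        · rw [← he2] at hzW
          exact side_disjoint hT (O.dir_adj w u h) u ⟨onSide_refl w u, hzW⟩
      have part3 : (T.deleteEdges {s(z, q)}).Reachable u x := by
        refine reach_del hx.2 ?_
        intro x1 x2 hd hpre hsuf heq
        rcases Sym2.eq_iff.1 heq with ⟨he1, he2⟩ | ⟨he1, he2⟩
        · rw [he1, he2] at hd
          exact O.dir_asymm q z hqz hd
        · rw [he1] at hpre
          exact hnuw (hpre.trans hqw)
      exact (part1.trans part2.reachable).trans part3
  have hq : q ∉ Finset.univ.filter (fun x => O.reaches u x) := by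
    rw [Finset.mem_filter]
    rintro ⟨-, hc⟩
    exact hnuw (hc.trans hqw)
  have h3 := Finset.card_le_card hsub
  rw [Finset.card_insert_of_notMem hq] at h3
  omega

/-- The final contradiction: the two sides of a doubly bad edge give opposite
strict inequalities. -/
lemma contra [Fintype V] (hT : T.IsTree) (O : Orient T)
    (hmax : ∀ O' : Orient T, O'.xi ≤ O.xi) {w u : V} (h : O.dir w u)
    (w1 : ∃ v, onSide T w u v ∧ ¬ O.conn w v)
    (w2 : ∃ v, onSide T u w v ∧ ¬ O.conn u v) : False := by
  obtain ⟨v1, hv1U, hc1⟩ := w1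
  obtain ⟨v2, hv2W, hc2⟩ := w2
  have k1 := key hT O hmax h ⟨v2, hv2W, fun hr =>
    hc2 (Or.inr (Relation.ReflTransGen.tail hr h))⟩
  have hmaxR : ∀ O'' : Orient T, O''.xi ≤ (rev O).xi := fun O'' =>
    (hmax O'').trans_eq (rev_xi O).symm
  have hdR : (rev O).dir u w := h
  have k2 := key hT (rev O) hmaxR hdR ⟨v1, hv1U, fun hr =>
    hc1 (Or.inl (Relation.ReflTransGen.head h ((rev_reaches O).1 hr)))⟩
  have e1 : Finset.univ.filter (fun x => (rev O).reaches w x) =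
      Finset.univ.filter (fun x => O.reaches x w) := by
    refine Finset.filter_congr (fun x _ => ?_)
    rw [rev_reaches]
  have e2 : Finset.univ.filter (fun x => (rev O).reaches x u) =
      Finset.univ.filter (fun x => O.reaches u x) := by
    refine Finset.filter_congr (fun x _ => ?_)
    rw [rev_reaches]
  rw [e1, e2] at k2
  omega

end StmtAux


/-- an orientation of a finite nonempty tree maximizing `ξ` among all
orientations has a central vertex. -/
theorem stmt4 {V : Type*} [Fintype V] [Nonempty V] {T : SimpleGraph V} (hT : T.IsTree)
    (O : Orient T) (hmax : ∀ O' : Orient T, O'.xi ≤ O.xi) :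
    ∃ x, O.central x := by
  classical
  by_contra hnc
  push_neg at hnc
  have hch : ∀ x : V, ∃ y v, T.Adj x y ∧ StmtAux.onSide T x y v ∧ ¬ O.conn x v := by
    intro x
    have hx : ¬ O.central x := hnc x
    rw [Orient.central] at hx
    push_neg at hx
    obtain ⟨v, hv⟩ := hx
    obtain ⟨p0⟩ := hT.isConnected.preconnected x v
    obtain ⟨p, hp⟩ := p0.toPath
    cases p with
    | nil => exact absurd (Or.inl Relation.ReflTransGen.refl) hv
    | @cons _ y _ hadj q =>
      rw [SimpleGraph.Walk.cons_isPath_iff] at hp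
      refine ⟨y, v, hadj, ?_, hv⟩
      have hq : ∀ e ∈ q.edges, e ∉ ({s(x, y)} : Set (Sym2 V)) := by
        intro e he hmem
        rw [Set.mem_singleton_iff] at hmem
        rw [hmem] at he
        exact hp.2 (q.fst_mem_support_of_mem_edges he)
      exact (q.toDeleteEdges _ hq).reachable
  choose Y Wit hadjY hsideY hconnY using hch
  have hmaps : ∀ x ∈ (Finset.univ : Finset V), s(x, Y x) ∈ T.edgeFinset := fun x _ =>
    SimpleGraph.mem_edgeFinset.2 ((SimpleGraph.mem_edgeSet T).2 (hadjY x))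
  have hlt : T.edgeFinset.card < (Finset.univ : Finset V).card := by
    have := hT.card_edgeFinset
    rw [Finset.card_univ]
    omega
  obtain ⟨x, -, x', -, hne, heq⟩ := Finset.exists_ne_map_eq_of_card_lt_of_maps_to hlt hmaps
  rw [Sym2.eq_iff] at heq
  rcases heq with ⟨he1, he2⟩ | ⟨he1, he2⟩
  · exact hne he1
  · have hadj : T.Adj x x' := by rw [← he2]; exact hadjY x
    have hw1 : StmtAux.onSide T x x' (Wit x) := by rw [← he2]; exact hsideY x
    have hw2 : StmtAux.onSide T x' x (Wit x') := by
      have h2 := hsideY x'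
      rw [← he1] at h2
      exact h2
    rcases O.dir_total x x' hadj with hd | hd
    · exact StmtAux.contra hT O hmax hd ⟨Wit x, hw1, hconnY x⟩ ⟨Wit x', hw2, hconnY x'⟩
    · exact StmtAux.contra hT O hmax hd ⟨Wit x', hw2, hconnY x'⟩ ⟨Wit x, hw1, hconnY x⟩
end

section
/- Let T = (V,E) be a finite tree with |V| = n ≥ 1 and let x ∈ V. Among all orientations of T admitting x as a central vertex, an orientation O maximizes ξ(O) if and only if it minimizes the quantity | |Out(x)| − |In(x)| |. -/
/-- `Out(x)`: the vertices `t ≠ x` with `x ⇝ t`. -/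
def Orient.outSet {V : Type*} {T : SimpleGraph V} (O : Orient T) (x : V) : Set V :=
  {t | t ≠ x ∧ O.reaches x t}

/-- `In(x)`: the vertices `t ≠ x` with `t ⇝ x`. -/
def Orient.inSet {V : Type*} {T : SimpleGraph V} (O : Orient T) (x : V) : Set V :=
  {t | t ≠ x ∧ O.reaches t x}

/-- `| |Out(x)| - |In(x)| |`. -/
noncomputable def Orient.imbalance {V : Type*} {T : SimpleGraph V} (O : Orient T) (x : V) : ℕ :=
  ((Set.ncard (O.outSet x) : ℤ) - (Set.ncard (O.inSet x) : ℤ)).natAbs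


namespace Orient

open SimpleGraph Walk

variable {V : Type*} {T : SimpleGraph V}

def fwd (O : Orient T) {u v : V} (w : T.Walk u v) : Prop :=
  ∀ d ∈ w.darts, O.dir d.toProd.1 d.toProd.2

lemma reaches_of_fwd (O : Orient T) {u v : V} (w : T.Walk u v) (h : O.fwd w) :
    O.reaches u v := by
  induction w with
  | nil => exact .refl
  | cons hadj p ih =>
    refine Relation.ReflTransGen.head (h ⟨(_, _), hadj⟩ (by simp [Walk.darts_cons])) (ih ?_)
    intro d hd; exact h d (by simp [Walk.darts_cons, hd])

lemma exists_fwd_walk (O : Orient T) {u v : V} (h : O.reaches u v) :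
    ∃ w : T.Walk u v, O.fwd w := by
  induction h with
  | refl => exact ⟨Walk.nil, by simp [fwd]⟩
  | tail _ hstep ih =>
    obtain ⟨w, hw⟩ := ih
    refine ⟨w.concat (O.dir_adj _ _ hstep), ?_⟩
    intro d hd
    rw [Walk.darts_concat, List.concat_eq_append, List.mem_append, List.mem_singleton] at hd
    rcases hd with h1 | h1
    · exact hw d h1
    · subst h1; exact hstep

noncomputable def tpath (hT : T.IsTree) (u v : V) : T.Walk u v :=
  (hT.existsUnique_path u v).choose

lemma tpath_isPath (hT : T.IsTree) (u v : V) : (tpath hT u v).IsPath :=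
  (hT.existsUnique_path u v).choose_spec.1

lemma tpath_unique (hT : T.IsTree) {u v : V} (p : T.Walk u v) (hp : p.IsPath) :
    p = tpath hT u v :=
  (hT.existsUnique_path u v).choose_spec.2 p hp

lemma tpath_symm (hT : T.IsTree) (u v : V) : (tpath hT u v).reverse = tpath hT v u :=
  tpath_unique hT _ ((tpath_isPath hT u v).reverse)

lemma mem_support_tpath_symm (hT : T.IsTree) {u v w : V}
    (h : w ∈ (tpath hT u v).support) : w ∈ (tpath hT v u).support := by
  rw [← tpath_symm hT u v, Walk.support_reverse, List.mem_reverse]; exact h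

lemma reaches_iff_fwd_tpath (hT : T.IsTree) (O : Orient T) {u v : V} :
    O.reaches u v ↔ O.fwd (tpath hT u v) := by
  classical
  constructor
  · intro h
    obtain ⟨w, hw⟩ := O.exists_fwd_walk h
    have hb : w.bypass = tpath hT u v := tpath_unique hT _ w.bypass_isPath
    rw [← hb]
    intro d hd; exact hw d (w.darts_bypass_subset hd)
  · exact O.reaches_of_fwd _

lemma eq_of_fwd_fwd_reverse (O : Orient T) {u v : V} (w : T.Walk u v)
    (h1 : O.fwd w) (h2 : O.fwd w.reverse) : u = v := by
  cases w with
  | nil => rfl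
  | cons hadj p =>
    exfalso
    rename_i b
    have hd1 : O.dir u b := h1 ⟨(u, b), hadj⟩ (by simp [Walk.darts_cons])
    have hd2 : O.dir b u := by
      refine h2 ⟨(b, u), hadj.symm⟩ ?_
      rw [Walk.mem_darts_reverse]
      simp [SimpleGraph.Dart.symm, Walk.darts_cons]
    exact O.dir_asymm _ _ hd1 hd2

lemma reaches_antisymm (hT : T.IsTree) (O : Orient T) {u v : V}
    (h1 : O.reaches u v) (h2 : O.reaches v u) : u = v := by
  rw [reaches_iff_fwd_tpath hT] at h1 h2
  rw [← tpath_symm hT u v] at h2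
  exact O.eq_of_fwd_fwd_reverse _ h1 h2

lemma reaches_of_mem_support_left (hT : T.IsTree) (O : Orient T) {u v w : V}
    (h : O.reaches u v) (hw : w ∈ (tpath hT u v).support) : O.reaches u w := by
  classical
  rw [reaches_iff_fwd_tpath hT] at h
  refine O.reaches_of_fwd ((tpath hT u v).takeUntil w hw) ?_
  intro d hd; exact h d ((tpath hT u v).darts_takeUntil_subset hw hd)

lemma reaches_of_mem_support_right (hT : T.IsTree) (O : Orient T) {u v w : V}
    (h : O.reaches u v) (hw : w ∈ (tpath hT u v).support) : O.reaches w v := by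
  classical
  rw [reaches_iff_fwd_tpath hT] at h
  refine O.reaches_of_fwd ((tpath hT u v).dropUntil w hw) ?_
  intro d hd; exact h d ((tpath hT u v).darts_dropUntil_subset hw hd)

lemma mem_support_of_reaches (hT : T.IsTree) (O : Orient T) {a b c : V}
    (hab : O.reaches a b) (hbc : O.reaches b c) :
    b ∈ (tpath hT a c).support := by
  classical
  revert hab
  induction hbc using Relation.ReflTransGen.head_induction_on with
  | refl => intro _; exact Walk.end_mem_support _
  | head hstep hrest ih =>
    rename_i b' b''
    intro hab'
    have hab'' : O.reaches a b'' := hab'.tail hstep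
    have hmem : b'' ∈ (tpath hT a c).support := ih hab''
    have hadj : T.Adj b' b'' := O.dir_adj _ _ hstep
    have hnot : b'' ∉ (tpath hT a b').support := by
      intro hmem'
      have hr1 : O.reaches b'' b' := O.reaches_of_mem_support_right hT hab' hmem'
      have hr2 : O.reaches b' b'' := Relation.ReflTransGen.single hstep
      exact hadj.ne (reaches_antisymm hT O hr2 hr1)
    have hpath : ((tpath hT a b').concat hadj).IsPath := by
      rw [← Walk.isPath_reverse_iff, Walk.reverse_concat]
      exact (tpath_isPath hT a b').reverse.cons
        (by rw [Walk.support_reverse, List.mem_reverse]; exact hnot)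
    have he : (tpath hT a b').concat hadj = tpath hT a b'' := tpath_unique hT _ hpath
    have hb'mem : b' ∈ (tpath hT a b'').support := by
      rw [← he, Walk.support_concat, List.mem_append]
      exact Or.inl (Walk.end_mem_support _)
    have ht : (tpath hT a c).takeUntil b'' hmem = tpath hT a b'' :=
      tpath_unique hT _ ((tpath_isPath hT a c).takeUntil hmem)
    exact (tpath hT a c).support_takeUntil_subset hmem (ht ▸ hb'mem)


/-- The `O`-independent set of "comparable" pairs. -/
def cset (hT : T.IsTree) (x : V) : Set (Sym2 V) :=
  {p | ∃ y z, p = s(y, z) ∧ y ≠ z ∧ y ≠ x ∧ z ≠ x ∧ y ∈ (tpath hT x z).support}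

lemma outSet_inter_inSet (hT : T.IsTree) (O : Orient T) (x : V) :
    O.outSet x ∩ O.inSet x = ∅ := by
  ext t
  simp only [Set.mem_inter_iff, Set.mem_empty_iff_false, iff_false, not_and]
  rintro ⟨ht1, ht2⟩ ⟨_, ht3⟩
  exact ht1 (reaches_antisymm hT O ht3 ht2)

lemma outSet_union_inSet (O : Orient T) (x : V) (hc : O.central x) :
    O.outSet x ∪ O.inSet x = {x}ᶜ := by
  ext t
  simp only [Set.mem_union, Set.mem_compl_iff, Set.mem_singleton_iff, outSet, inSet,
    Set.mem_setOf_eq]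
  constructor
  · rintro (⟨h, _⟩ | ⟨h, _⟩) <;> exact h
  · intro ht
    rcases hc t with h | h
    · exact Or.inl ⟨ht, h⟩
    · exact Or.inr ⟨ht, h⟩

lemma ncard_out_add_in [Fintype V] (hT : T.IsTree) (O : Orient T) (x : V)
    (hc : O.central x) :
    (O.outSet x).ncard + (O.inSet x).ncard = ({x}ᶜ : Set V).ncard := by
  rw [← Set.ncard_union_eq ?_ (Set.toFinite _) (Set.toFinite _),
    outSet_union_inSet O x hc]
  rw [Set.disjoint_iff_inter_eq_empty]
  exact outSet_inter_inSet hT O x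

lemma xi_eq [Fintype V] (hT : T.IsTree) (O : Orient T) (x : V) (hc : O.central x) :
    O.xi = ({x}ᶜ : Set V).ncard + (O.outSet x).ncard * (O.inSet x).ncard
      + (cset hT x).ncard := by
  classical
  have hdisjSI : ∀ t, t ∈ O.outSet x → t ∈ O.inSet x → False := by
    intro t h1 h2
    have := outSet_inter_inSet hT O x
    rw [Set.eq_empty_iff_forall_notMem] at this
    exact this t ⟨h1, h2⟩
  have hXeq : {p : Sym2 V | ∃ y z : V, p = s(y, z) ∧ y ≠ z ∧ O.conn y z}
      = (((fun y => s(x, y)) '' ({x}ᶜ : Set V)) ∪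
        ((fun q : V × V => s(q.1, q.2)) '' (O.outSet x ×ˢ O.inSet x))) ∪
        cset hT x := by
    ext p
    simp only [Set.mem_setOf_eq, Set.mem_union, Set.mem_image, Set.mem_compl_iff,
      Set.mem_singleton_iff, Set.mem_prod, Prod.exists]
    constructor
    · rintro ⟨y, z, rfl, hyz, hconn⟩
      by_cases hyx : y = x
      · subst hyx
        exact Or.inl (Or.inl ⟨z, Ne.symm hyz, rfl⟩)
      by_cases hzx : z = x
      · subst hzx
        exact Or.inl (Or.inl ⟨y, hyx, Sym2.eq_swap⟩)
      rcases hconn with hR | hR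
      · rcases hc y with hxy | hyx'
        · exact Or.inr ⟨y, z, rfl, hyz, hyx, hzx, mem_support_of_reaches hT O hxy hR⟩
        · rcases hc z with hxz | hzx'
          · exact Or.inl (Or.inr ⟨z, y, ⟨⟨hzx, hxz⟩, ⟨hyx, hyx'⟩⟩, Sym2.eq_swap⟩)
          · refine Or.inr ⟨z, y, Sym2.eq_swap, Ne.symm hyz, hzx, hyx, ?_⟩
            exact mem_support_tpath_symm hT (mem_support_of_reaches hT O hR hzx')
      · rcases hc z with hxz | hzx'
        · exact Or.inr ⟨z, y, Sym2.eq_swap, Ne.symm hyz, hzx, hyx,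
            mem_support_of_reaches hT O hxz hR⟩
        · rcases hc y with hxy | hyx'
          · exact Or.inl (Or.inr ⟨y, z, ⟨⟨hyx, hxy⟩, ⟨hzx, hzx'⟩⟩, rfl⟩)
          · refine Or.inr ⟨y, z, rfl, hyz, hyx, hzx, ?_⟩
            exact mem_support_tpath_symm hT (mem_support_of_reaches hT O hR hyx')
    · rintro ((⟨y, hy, rfl⟩ | ⟨y, z, ⟨hyS, hzI⟩, rfl⟩) | ⟨y, z, rfl, hyz, hyx, hzx, hmem⟩)
      · exact ⟨x, y, rfl, Ne.symm hy, hc y⟩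
      · refine ⟨y, z, rfl, ?_, Or.inr (hzI.2.trans hyS.2)⟩
        rintro rfl
        exact hdisjSI y hyS hzI
      · refine ⟨y, z, rfl, hyz, ?_⟩
        rcases hc z with hxz | hzx'
        · exact Or.inl (reaches_of_mem_support_right hT O hxz hmem)
        · exact Or.inr (reaches_of_mem_support_left hT O hzx'
            (mem_support_tpath_symm hT hmem))
  have hdisj2 : Disjoint ((fun y => s(x, y)) '' ({x}ᶜ : Set V))
      ((fun q : V × V => s(q.1, q.2)) '' (O.outSet x ×ˢ O.inSet x)) := by
    rw [Set.disjoint_left]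
    rintro p ⟨y, hy, rfl⟩ ⟨⟨a, b⟩, ⟨haS, hbI⟩, heq⟩
    rw [Sym2.eq_iff] at heq
    rcases heq with ⟨ha, _⟩ | ⟨ha, hb⟩
    · exact haS.1 ha
    · exact hbI.1 hb
  have hdisj1 : Disjoint (((fun y => s(x, y)) '' ({x}ᶜ : Set V)) ∪
      ((fun q : V × V => s(q.1, q.2)) '' (O.outSet x ×ˢ O.inSet x))) (cset hT x) := by
    rw [Set.disjoint_left]
    rintro p (⟨y, hy, rfl⟩ | ⟨⟨a, b⟩, ⟨haS, hbI⟩, rfl⟩) ⟨u, v, heq, huv, hux, hvx, hmem⟩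
    · rw [Sym2.eq_iff] at heq
      rcases heq with ⟨ha, _⟩ | ⟨ha, _⟩
      · exact hux ha.symm
      · exact hvx ha.symm
    · rw [Sym2.eq_iff] at heq
      rcases hc v with hxv | hvx'
      · -- u, v both "out"-side
        have hxu : O.reaches x u := reaches_of_mem_support_left hT O hxv hmem
        rcases heq with ⟨ha, hb⟩ | ⟨ha, hb⟩
        · subst ha; subst hb
          exact hvx (reaches_antisymm hT O hbI.2 hxv)
        · subst ha; subst hb
          exact hux (reaches_antisymm hT O hbI.2 hxu)
      · -- u, v both "in"-side
        have hux' : O.reaches u x := reaches_of_mem_support_right hT O hvx'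
          (mem_support_tpath_symm hT hmem)
        rcases heq with ⟨ha, hb⟩ | ⟨ha, hb⟩
        · subst ha; subst hb
          exact hux (reaches_antisymm hT O hux' haS.2)
        · subst ha; subst hb
          exact hvx (reaches_antisymm hT O hvx' haS.2)
  have hA : ((fun y => s(x, y)) '' ({x}ᶜ : Set V)).ncard = ({x}ᶜ : Set V).ncard := by
    apply Set.ncard_image_of_injOn
    intro a _ b _ hab
    rw [Sym2.eq_iff] at hab
    rcases hab with ⟨_, h⟩ | ⟨h1, h2⟩
    · exact h
    · rw [← h1, h2]
  have hB : ((fun q : V × V => s(q.1, q.2)) '' (O.outSet x ×ˢ O.inSet x)).ncard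
      = (O.outSet x).ncard * (O.inSet x).ncard := by
    rw [Set.ncard_image_of_injOn]
    · rw [← Nat.card_coe_set_eq, ← Nat.card_coe_set_eq, ← Nat.card_coe_set_eq,
        ← Nat.card_prod]
      exact Nat.card_congr (Equiv.Set.prod (O.outSet x) (O.inSet x))
    · rintro ⟨a, b⟩ ⟨haS, hbI⟩ ⟨c, d⟩ ⟨hcS, hdI⟩ heq
      simp only [Sym2.eq_iff] at heq
      rcases heq with ⟨h1, h2⟩ | ⟨h1, h2⟩
      · simp [h1, h2]
      · subst h1; subst h2
        exact absurd hcS (fun h => hdisjSI _ h hbI)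
  rw [Orient.xi, hXeq, Set.ncard_union_eq hdisj1 (Set.toFinite _) (Set.toFinite _),
    Set.ncard_union_eq hdisj2 (Set.toFinite _) (Set.toFinite _), hA, hB]


lemma arith_key {a b a' b' K : ℕ} (h : a + b = K) (h' : a' + b' = K) :
    a' * b' ≤ a * b ↔ ((a : ℤ) - b).natAbs ≤ ((a' : ℤ) - b').natAbs := by
  have key : ∀ x y : ℤ, x.natAbs ≤ y.natAbs ↔ x * x ≤ y * y := by
    intro x y
    constructor
    · intro hle
      calc x * x = ((x.natAbs * x.natAbs : ℕ) : ℤ) := (Int.natAbs_mul_self).symm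
        _ ≤ ((y.natAbs * y.natAbs : ℕ) : ℤ) := by exact_mod_cast Nat.mul_le_mul hle hle
        _ = y * y := Int.natAbs_mul_self
    · intro hle
      have hsq : x.natAbs * x.natAbs ≤ y.natAbs * y.natAbs := by
        rw [← Int.natAbs_mul_self, ← Int.natAbs_mul_self] at hle
        exact_mod_cast hle
      by_contra hcon
      push_neg at hcon
      have := Nat.mul_self_lt_mul_self hcon
      omega
  rw [key]
  have h1 : (a : ℤ) + b = K := by exact_mod_cast h
  have h2 : (a' : ℤ) + b' = K := by exact_mod_cast h'
  constructor
  · intro hle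
    have h3 : (a' : ℤ) * b' ≤ (a : ℤ) * b := by exact_mod_cast hle
    nlinarith
  · intro hle
    have h3 : (a' : ℤ) * b' ≤ (a : ℤ) * b := by nlinarith
    exact_mod_cast h3

end Orient

/-- among the orientations of a finite (nonempty) tree admitting `x` as a
central vertex, an orientation maximizes `ξ` iff it minimizes `| |Out(x)| - |In(x)| |`. -/
theorem stmt5 {V : Type*} [Fintype V] [Nonempty V] {T : SimpleGraph V} (hT : T.IsTree)
    (x : V) (O : Orient T) (hc : O.central x) :
    (∀ O' : Orient T, O'.central x → O'.xi ≤ O.xi) ↔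
      (∀ O' : Orient T, O'.central x → O.imbalance x ≤ O'.imbalance x) := by
  have key : ∀ O' : Orient T, O'.central x →
      (O'.xi ≤ O.xi ↔ O.imbalance x ≤ O'.imbalance x) := by
    intro O' hc'
    rw [Orient.xi_eq hT O x hc, Orient.xi_eq hT O' x hc', Orient.imbalance, Orient.imbalance]
    have hsplit : ({x}ᶜ : Set V).ncard + (O'.outSet x).ncard * (O'.inSet x).ncard
          + (Orient.cset hT x).ncard
        ≤ ({x}ᶜ : Set V).ncard + (O.outSet x).ncard * (O.inSet x).ncard
          + (Orient.cset hT x).ncard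
        ↔ (O'.outSet x).ncard * (O'.inSet x).ncard
          ≤ (O.outSet x).ncard * (O.inSet x).ncard := by omega
    rw [hsplit]
    exact Orient.arith_key (Orient.ncard_out_add_in hT O x hc)
      (Orient.ncard_out_add_in hT O' x hc')
  constructor
  · intro hmax O' hc'
    exact (key O' hc').mp (hmax O' hc')
  · intro hmin O' hc'
    exact (key O' hc').mpr (hmin O' hc')
end

section
/- Let T = (V,E) be a finite tree with |V| = n, let x ∈ V, and let y be a neighbor of x. If the connected component containing y of the graph obtained from T by deleting the edge {x,y} has more than n/2 vertices, then ξ(y) ≥ ξ(x). -/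
/-- `ξ(v)`: the maximum of `ξ(O)` over all orientations `O` of `T` admitting `v` as a
central vertex. -/
noncomputable def xiV {V : Type*} (T : SimpleGraph V) (v : V) : ℕ :=
  sSup {k | ∃ O : Orient T, O.central v ∧ O.xi = k}

namespace Stmt6

open SimpleGraph

variable {V : Type*} {T : SimpleGraph V}

/-- membership in the `a`-side of the tree minus edge `{a,c}` -/
abbrev R (T : SimpleGraph V) (a c z : V) : Prop := (T.deleteEdges {s(a,c)}).Reachable a z

lemma edgeset_swap (a c : V) : ({s(a,c)} : Set (Sym2 V)) = {s(c,a)} := by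
  rw [Sym2.eq_swap]

lemma bridge (hT : T.IsTree) {a c : V} (h : T.Adj a c) :
    ¬ (T.deleteEdges {s(a,c)}).Reachable a c := by
  have hb := (isAcyclic_iff_forall_adj_isBridge.mp hT.IsAcyclic) h
  exact isBridge_iff.mp hb

lemma side_cover (hT : T.IsTree) {a c : V} (h : T.Adj a c) (z : V) :
    R T a c z ∨ R T c a z := by
  obtain ⟨p⟩ := hT.isConnected.preconnected a z
  have key : ∀ {u z' : V} (_ : T.Walk u z'), (R T a c u ∨ R T c a u) →
      (R T a c z' ∨ R T c a z') := by
    intro u z' p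
    induction p with
    | nil => exact id
    | @cons u' m z'' h' q ih =>
      intro hu
      apply ih
      by_cases hse : s(u', m) = s(a, c)
      · rcases Sym2.eq_iff.mp hse with ⟨rfl, rfl⟩ | ⟨rfl, rfl⟩
        · exact Or.inr (Reachable.refl _)
        · exact Or.inl (Reachable.refl _)
      · have hadj : (T.deleteEdges {s(a,c)}).Adj u' m := by
          simp only [deleteEdges_adj, Set.mem_singleton_iff]
          exact ⟨h', hse⟩
        rcases hu with hu | hu
        · exact Or.inl (hu.trans hadj.reachable)
        · refine Or.inr (hu.trans ?_)
          rw [edgeset_swap a c] at hadj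
          exact hadj.reachable
  exact key p (Or.inl (Reachable.refl _))

lemma side_disj (hT : T.IsTree) {a c : V} (h : T.Adj a c) (z : V) :
    ¬ (R T a c z ∧ R T c a z) := by
  rintro ⟨h1, h2⟩
  apply bridge hT h
  have h2' : (T.deleteEdges {s(a,c)}).Reachable c z := by
    rw [edgeset_swap a c]; exact h2
  exact h1.trans h2'.symm

lemma side_trans {a c z w : V} (h : R T a c z)
    (h2 : (T.deleteEdges {s(a,c)}).Reachable z w) : R T a c w := h.trans h2

/-- convert `c`-side membership to the `{s(a,c)}`-deleted graph -/
lemma Rc {a c z : V} (h : R T c a z) : (T.deleteEdges {s(a,c)}).Reachable c z := by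
  rw [edgeset_swap a c]; exact h

lemma Rc' {a c z : V} (h : (T.deleteEdges {s(a,c)}).Reachable c z) : R T c a z := by
  show (T.deleteEdges {s(c,a)}).Reachable c z
  rw [edgeset_swap c a]; exact h

lemma cross_edge (hT : T.IsTree) {a c u w : V} (h : T.Adj a c)
    (hu : R T a c u) (hw : R T c a w) (huw : T.Adj u w) : u = a ∧ w = c := by
  by_cases hse : s(u, w) = s(a, c)
  · rcases Sym2.eq_iff.mp hse with ⟨rfl, rfl⟩ | ⟨rfl, rfl⟩
    · exact ⟨rfl, rfl⟩
    · exact absurd ⟨hu, Rc' (Reachable.refl _)⟩ (side_disj hT h u)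
  · exfalso
    have hadj : (T.deleteEdges {s(a,c)}).Adj u w := by
      simp only [deleteEdges_adj, Set.mem_singleton_iff]
      exact ⟨huw, hse⟩
    exact side_disj hT h w ⟨hu.trans hadj.reachable, hw⟩

lemma cross_support (hT : T.IsTree) {a c u w : V} (h : T.Adj a c)
    (p : T.Walk u w) : R T a c u → R T c a w →
    a ∈ p.support ∧ c ∈ p.support := by
  induction p with
  | nil => exact fun hu hw => absurd ⟨hu, hw⟩ (side_disj hT h _)
  | @cons u' m w' h' q ih =>
    intro hu hw
    rcases side_cover hT h m with hm | hm
    · obtain ⟨h1, h2⟩ := ih hm hw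
      exact ⟨by simp [Walk.support_cons, h1], by simp [Walk.support_cons, h2]⟩
    · obtain ⟨rfl, rfl⟩ := cross_edge hT h hu hm h'
      refine ⟨(Walk.cons h' q).start_mem_support, ?_⟩
      simp [Walk.support_cons, q.start_mem_support]

lemma dir_cross (hT : T.IsTree) {a c : V} (h : T.Adj a c) (O : Orient T) {u w : V}
    (hr : O.reaches u w) (hw : R T c a w) : R T a c u → O.dir a c := by
  induction hr using Relation.ReflTransGen.head_induction_on with
  | refl => exact fun hu => absurd ⟨hu, hw⟩ (side_disj hT h _)
  | @head u' m hd hr ih =>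
    intro hu
    rcases side_cover hT h m with hm | hm
    · exact ih hm
    · obtain ⟨rfl, rfl⟩ := cross_edge hT h hu hm (O.dir_adj _ _ hd)
      exact hd

/-- symmetric version: from the `c` side to the `a` side -/
lemma dir_cross' (hT : T.IsTree) {a c : V} (h : T.Adj a c) (O : Orient T) {u w : V}
    (hr : O.reaches u w) (hw : R T a c w) (hu : R T c a u) : O.dir c a :=
  dir_cross hT h.symm O hr hw hu

lemma reaches_antisymm (hT : T.IsTree) (O : Orient T) {u w : V}
    (h1 : O.reaches u w) (h2 : O.reaches w u) : u = w := by
  classical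
  by_contra hne
  obtain ⟨p0⟩ := hT.isConnected.preconnected u w
  obtain ⟨p, hp⟩ : ∃ p : T.Walk u w, p.IsPath := ⟨p0.bypass, p0.bypass_isPath⟩
  cases p with
  | nil => exact hne rfl
  | @cons _ m _ h' q =>
    rw [Walk.cons_isPath_iff] at hp
    have hnotin : ∀ e ∈ q.edges, e ∉ ({s(u,m)} : Set (Sym2 V)) := by
      intro e he hmem
      rw [Set.mem_singleton_iff] at hmem
      subst hmem
      exact hp.2 (q.fst_mem_support_of_mem_edges he)
    have hwside : R T m u w := Rc' ⟨q.toDeleteEdges _ hnotin⟩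
    have hd1 : O.dir u m := dir_cross hT h' O h1 hwside (Reachable.refl _)
    have hd2 : O.dir m u := dir_cross' hT h' O h2 (Reachable.refl _) hwside
    exact O.dir_asymm _ _ hd1 hd2

lemma btw_of_reaches (hT : T.IsTree) (O : Orient T) {u w t : V}
    (h1 : O.reaches u w) (h2 : O.reaches w t) (p : T.Walk u t) : w ∈ p.support := by
  rcases Relation.ReflTransGen.cases_head h2 with rfl | ⟨d, hwd, hdt⟩
  · exact p.end_mem_support
  · have hadj : T.Adj w d := O.dir_adj _ _ hwd
    have ht : R T d w t := by
      rcases side_cover hT hadj t with h' | h'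
      · exfalso
        exact O.dir_asymm _ _ hwd (dir_cross' hT hadj O hdt h' (Rc' (Reachable.refl _)))
      · exact h'
    have hu : R T w d u := by
      rcases side_cover hT hadj u with h' | h'
      · exact h'
      · exfalso
        exact O.dir_asymm _ _ hwd (dir_cross' hT hadj O h1 (Reachable.refl _) h')
    exact (cross_support hT hadj p hu ht).1

def Orient.rev (O : Orient T) : Orient T where
  dir u v := O.dir v u
  dir_adj u v h := (O.dir_adj v u h).symm
  dir_total u v h := (O.dir_total u v h).symm
  dir_asymm u v h h' := O.dir_asymm v u h h'

lemma rev_reaches (O : Orient T) {u v : V} (h : O.reaches u v) :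
    (Orient.rev O).reaches v u := by
  induction h with
  | refl => exact Relation.ReflTransGen.refl
  | tail hs hd ih => exact Relation.ReflTransGen.head hd ih

lemma reach_swap (u v z w : V) :
    (T.deleteEdges {s(u,v)}).Reachable z w ↔ (T.deleteEdges {s(v,u)}).Reachable z w := by
  rw [edgeset_swap u v]

/-- the edge `{u,v}` directed toward `t` (i.e. `v` is on the `t`-side). -/
def toward (T : SimpleGraph V) (t u v : V) : Prop :=
  T.Adj u v ∧ (T.deleteEdges {s(u,v)}).Reachable v t

lemma toward_total (hT : T.IsTree) {u v : V} (h : T.Adj u v) (t : V) :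
    toward T t u v ∨ toward T t v u := by
  rcases side_cover hT h t with h' | h'
  · exact Or.inr ⟨h.symm, (reach_swap u v u t).mp h'⟩
  · exact Or.inl ⟨h, (reach_swap v u v t).mp h'⟩

lemma toward_asymm (hT : T.IsTree) {u v t : V} (h1 : toward T t u v)
    (h2 : toward T t v u) : False := by
  refine side_disj hT h1.1 t ⟨?_, ?_⟩
  · exact (reach_swap v u u t).mp h2.2
  · exact (reach_swap u v v t).mp h1.2

/-- orientation: all edges touching the `x`-side of `T - {x,y}` point toward `y`,
all other edges point away from `y`. -/
def mixOrient (hT : T.IsTree) (x y : V) : Orient T where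
  dir u v := T.Adj u v ∧ (((R T x y u ∨ R T x y v) ∧ toward T y u v) ∨
      (¬(R T x y u ∨ R T x y v) ∧ toward T y v u))
  dir_adj u v h := h.1
  dir_total u v h := by
    by_cases hA : R T x y u ∨ R T x y v
    · rcases toward_total hT h y with ht | ht
      · exact Or.inl ⟨h, Or.inl ⟨hA, ht⟩⟩
      · exact Or.inr ⟨h.symm, Or.inl ⟨hA.symm, ht⟩⟩
    · rcases toward_total hT h y with ht | ht
      · exact Or.inr ⟨h.symm, Or.inr ⟨fun hc => hA hc.symm, ht⟩⟩
      · exact Or.inl ⟨h, Or.inr ⟨hA, ht⟩⟩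
  dir_asymm u v h h' := by
    rcases h.2 with ⟨hC, ht⟩ | ⟨hC, ht⟩ <;> rcases h'.2 with ⟨hC', ht'⟩ | ⟨hC', ht'⟩
    · exact toward_asymm hT ht ht'
    · exact hC' hC.symm
    · exact hC hC'.symm
    · exact toward_asymm hT ht' ht

lemma path_darts_toward {t u : V} (p : T.Walk u t) (hp : p.IsPath) :
    ∀ d ∈ p.darts, toward T t d.fst d.snd := by
  induction p with
  | nil => simp
  | @cons u' m w' h' q ih =>
    rw [Walk.cons_isPath_iff] at hp
    intro d hd
    rw [Walk.darts_cons, List.mem_cons] at hd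
    rcases hd with rfl | hd
    · refine ⟨h', ?_⟩
      have hnotin : ∀ e ∈ q.edges, e ∉ ({s(u',m)} : Set (Sym2 V)) := by
        intro e he hmem
        rw [Set.mem_singleton_iff] at hmem
        subst hmem
        exact hp.2 (q.fst_mem_support_of_mem_edges he)
      exact ⟨q.toDeleteEdges _ hnotin⟩
    · exact ih hp.1 d hd

lemma reaches_of_darts (O : Orient T) {u t : V} (p : T.Walk u t) :
    (∀ d ∈ p.darts, O.dir d.fst d.snd) → ∀ w ∈ p.support, O.reaches u w := by
  induction p with
  | nil =>
    intro _ w hw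
    rw [Walk.support_nil, List.mem_singleton] at hw
    subst hw
    exact Relation.ReflTransGen.refl
  | @cons u' m w' h' q ih =>
    intro hd w hw
    rw [Walk.support_cons, List.mem_cons] at hw
    rcases hw with rfl | hw
    · exact Relation.ReflTransGen.refl
    · have h1 : O.dir u' m := hd _ (by rw [Walk.darts_cons]; exact List.mem_cons_self)
      exact Relation.ReflTransGen.head h1
        (ih (fun d hd' => hd d (by rw [Walk.darts_cons]; exact List.mem_cons_of_mem _ hd')) w hw)

lemma reaches_rev_of_darts (O : Orient T) {u t : V} (p : T.Walk u t) :
    (∀ d ∈ p.darts, O.dir d.snd d.fst) → ∀ w ∈ p.support, O.reaches w u := by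
  induction p with
  | nil =>
    intro _ w hw
    rw [Walk.support_nil, List.mem_singleton] at hw
    subst hw
    exact Relation.ReflTransGen.refl
  | @cons u' m w' h' q ih =>
    intro hd w hw
    rw [Walk.support_cons, List.mem_cons] at hw
    have h1 : O.dir m u' := hd _ (by rw [Walk.darts_cons]; exact List.mem_cons_self)
    rcases hw with rfl | hw
    · exact Relation.ReflTransGen.refl
    · have := ih (fun d hd' => hd d (by rw [Walk.darts_cons]; exact List.mem_cons_of_mem _ hd')) w hw
      exact this.tail h1

lemma mix_dartsA (hT : T.IsTree) {x y : V} (hadj : T.Adj x y) :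
    ∀ {u t : V} (p : T.Walk u t), t = y → p.IsPath → R T x y u →
      ∀ d ∈ p.darts, (R T x y d.fst ∨ R T x y d.snd) := by
  intro u t p
  induction p with
  | nil => simp
  | @cons u' m w' h' q ih =>
    intro hty hp hu d hd
    rw [Walk.cons_isPath_iff] at hp
    rw [Walk.darts_cons, List.mem_cons] at hd
    rcases hd with rfl | hd
    · exact Or.inl hu
    · rcases side_cover hT hadj m with hm | hm
      · exact ih hty hp.1 hm d hd
      · obtain ⟨rfl, rfl⟩ := cross_edge hT hadj hu hm h'
        subst hty
        rw [Walk.isPath_iff_eq_nil] at hp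
        · exact absurd hd (by rw [hp.1]; simp)
  -- note: hp.1 : q.IsPath and q : T.Walk y y
lemma mix_dartsB (hT : T.IsTree) {x y : V} (hadj : T.Adj x y) :
    ∀ {u t : V} (p : T.Walk u t), t = y → p.IsPath → R T y x u →
      ∀ d ∈ p.darts, ¬(R T x y d.fst ∨ R T x y d.snd) := by
  intro u t p
  induction p with
  | nil => simp
  | @cons u' m w' h' q ih =>
    intro hty hp hu d hd
    have hm : R T y x m := by
      rcases side_cover hT hadj m with hm | hm
      · obtain ⟨rfl, rfl⟩ := cross_edge hT hadj hm hu h'.symm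
        subst hty
        rw [Walk.isPath_iff_eq_nil] at hp
        exact absurd hp (by simp)
      · exact hm
    rw [Walk.cons_isPath_iff] at hp
    rw [Walk.darts_cons, List.mem_cons] at hd
    rcases hd with rfl | hd
    · rintro (hc | hc)
      · exact side_disj hT hadj _ ⟨hc, hu⟩
      · exact side_disj hT hadj _ ⟨hc, hm⟩
    · exact ih hty hp.1 hm d hd

lemma mix_dirA (hT : T.IsTree) {x y : V} (hadj : T.Adj x y) {u : V} (p : T.Walk u y)
    (hp : p.IsPath) (hu : R T x y u) :
    ∀ d ∈ p.darts, (mixOrient hT x y).dir d.fst d.snd := by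
  intro d hd
  have ht := path_darts_toward p hp d hd
  exact ⟨ht.1, Or.inl ⟨mix_dartsA hT hadj p rfl hp hu d hd, ht⟩⟩

lemma mix_dirB (hT : T.IsTree) {x y : V} (hadj : T.Adj x y) {u : V} (p : T.Walk u y)
    (hp : p.IsPath) (hu : R T y x u) :
    ∀ d ∈ p.darts, (mixOrient hT x y).dir d.snd d.fst := by
  intro d hd
  have ht := path_darts_toward p hp d hd
  have hB := mix_dartsB hT hadj p rfl hp hu d hd
  exact ⟨ht.1.symm, Or.inr ⟨fun hc => hB hc.symm, ht⟩⟩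

lemma mix_reach_A (hT : T.IsTree) {x y : V} (hadj : T.Adj x y) {u w : V} (hu : R T x y u)
    (hbtw : ∀ p : T.Walk u y, w ∈ p.support) : (mixOrient hT x y).reaches u w := by
  classical
  obtain ⟨p0⟩ := hT.isConnected.preconnected u y
  exact reaches_of_darts _ p0.bypass (mix_dirA hT hadj p0.bypass p0.bypass_isPath hu)
    w (hbtw p0.bypass)

lemma mix_reach_B (hT : T.IsTree) {x y : V} (hadj : T.Adj x y) {u w : V} (hu : R T y x u)
    (hbtw : ∀ p : T.Walk u y, w ∈ p.support) : (mixOrient hT x y).reaches w u := by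
  classical
  obtain ⟨p0⟩ := hT.isConnected.preconnected u y
  exact reaches_rev_of_darts _ p0.bypass (mix_dirB hT hadj p0.bypass p0.bypass_isPath hu)
    w (hbtw p0.bypass)

lemma mix_central (hT : T.IsTree) {x y : V} (hadj : T.Adj x y) :
    (mixOrient hT x y).central y := by
  intro z
  rcases side_cover hT hadj z with hz | hz
  · exact Or.inr (mix_reach_A hT hadj hz (fun p => p.end_mem_support))
  · exact Or.inl (mix_reach_B hT hadj hz (fun p => p.end_mem_support))

def towardOrient (hT : T.IsTree) (t : V) : Orient T where
  dir u v := toward T t u v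
  dir_adj u v h := h.1
  dir_total u v h := toward_total hT h t
  dir_asymm u v h h' := toward_asymm hT h h'

lemma towardOrient_central (hT : T.IsTree) (t : V) : (towardOrient hT t).central t := by
  intro z
  classical
  obtain ⟨p0⟩ := hT.isConnected.preconnected z t
  refine Or.inr (reaches_of_darts _ p0.bypass ?_ t p0.bypass.end_mem_support)
  exact path_darts_toward p0.bypass p0.bypass_isPath

lemma btw_switch (hT : T.IsTree) {a c : V} (hac : T.Adj a c) {u w : V}
    (hu : R T a c u) (hw : R T a c w) :
    (∀ p : T.Walk u a, w ∈ p.support) ↔ (∀ p : T.Walk u c, w ∈ p.support) := by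
  classical
  constructor
  · intro H p
    have hxs : a ∈ p.support :=
      (cross_support hT hac p hu (Reachable.refl _)).1
    have := H (p.takeUntil a hxs)
    exact Walk.support_takeUntil_subset p hxs this
  · intro H p
    have hw' := H (p.append (Walk.cons hac Walk.nil))
    rw [Walk.mem_support_append_iff] at hw'
    rcases hw' with hw' | hw'
    · exact hw'
    · have : w = a ∨ w = c := by simpa using hw'
      rcases this with rfl | rfl
      · exact p.end_mem_support
      · exact absurd ⟨hw, Reachable.refl _⟩ (side_disj hT hac w)

lemma walk_in_side {a c z : V} (hz : R T a c z) :
    ∃ p : T.Walk z a, ∀ v ∈ p.support, R T a c v := by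
  classical
  obtain ⟨q0⟩ := hz
  have hsup : ∀ v ∈ q0.reverse.support, R T a c v := by
    intro v hv
    rw [Walk.support_reverse, List.mem_reverse] at hv
    exact ⟨q0.takeUntil v hv⟩
  refine ⟨(q0.reverse).transfer T ?_, ?_⟩
  · intro e he
    have := Walk.edges_subset_edgeSet _ he
    rw [edgeSet_deleteEdges] at this
    exact this.1
  · rw [Walk.support_transfer]
    exact hsup

lemma ncard_prod {α β : Type*} (s : Set α) (t : Set β) :
    (s ×ˢ t).ncard = s.ncard * t.ncard := by
  rw [← Nat.card_coe_set_eq, ← Nat.card_coe_set_eq, ← Nat.card_coe_set_eq,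
    ← Nat.card_prod]
  exact Nat.card_congr (Equiv.Set.prod s t)

section Main

variable (T) in
/-- the `x`-side of `T` minus the edge `{x,y}` -/
def Aset (x y : V) : Set V := {z | R T x y z}

variable (T) in
/-- pairs `{u,w}` such that one of them lies on the tree path from the other to `t` -/
def PxSet (t : V) : Set (Sym2 V) := {p | ∃ u w, p = s(u,w) ∧ u ≠ w ∧
  ((∀ q : T.Walk u t, w ∈ q.support) ∨ (∀ q : T.Walk w t, u ∈ q.support))}

variable (T) in
/-- pairs with both elements on the same side -/
def SSet (x y : V) : Set (Sym2 V) := {p | ∃ u w, p = s(u,w) ∧ u ≠ w ∧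
  ((u ∈ Aset T x y ∧ w ∈ Aset T x y) ∨ (u ∈ Aset T y x ∧ w ∈ Aset T y x))}

variable (T) in
def QSet (x y : V) : Set (Sym2 V) := PxSet T x ∩ SSet T x y

variable (T) in
def xiSet {T : SimpleGraph V} (O : Orient T) : Set (Sym2 V) :=
  {p : Sym2 V | ∃ u w : V, p = s(u, w) ∧ u ≠ w ∧ O.conn u w}

lemma xi_eq {T : SimpleGraph V} (O : Orient T) : O.xi = (xiSet O).ncard := rfl

lemma lower_bound [Fintype V] (hT : T.IsTree) {x y : V} (hadj : T.Adj x y) :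
    (QSet T x y).ncard + (Aset T x y).ncard +
      (Aset T x y).ncard * ((Aset T y x).ncard - 1) ≤ (mixOrient hT x y).xi := by
  classical
  set A := Aset T x y with hA
  set B := Aset T y x with hB
  have hyB : y ∈ B := Reachable.refl _
  have hxA : x ∈ A := Reachable.refl _
  have hABdisj : ∀ z, z ∈ A → z ∈ B → False := fun z h1 h2 => side_disj hT hadj z ⟨h1, h2⟩
  set Cy : Set (Sym2 V) := (fun u => s(u,y)) '' A with hCy
  set CP : Set (Sym2 V) := (fun p : V × V => s(p.1, p.2)) '' (A ×ˢ (B \ {y})) with hCP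
  -- inclusion into the connectivity pair set
  have hsub : QSet T x y ∪ Cy ∪ CP ⊆ xiSet (mixOrient hT x y) := by
    rintro p ((⟨⟨u, w, rfl, hne, hbtw⟩, hss⟩ | hp) | hp)
    · -- Q pairs
      obtain ⟨u', w', heq, hne', hside⟩ := hss
      have hside2 : (u ∈ A ∧ w ∈ A) ∨ (u ∈ B ∧ w ∈ B) := by
        rcases Sym2.eq_iff.mp heq with ⟨rfl, rfl⟩ | ⟨rfl, rfl⟩
        · exact hside
        · tauto
      refine ⟨u, w, rfl, hne, ?_⟩
      rcases hside2 with ⟨huA, hwA⟩ | ⟨huB, hwB⟩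
      · rcases hbtw with hb | hb
        · exact Or.inl (mix_reach_A hT hadj huA ((btw_switch hT hadj huA hwA).mp hb))
        · exact Or.inr (mix_reach_A hT hadj hwA ((btw_switch hT hadj hwA huA).mp hb))
      · rcases hbtw with hb | hb
        · exact Or.inr (mix_reach_B hT hadj huB ((btw_switch hT hadj.symm huB hwB).mpr hb))
        · exact Or.inl (mix_reach_B hT hadj hwB ((btw_switch hT hadj.symm hwB huB).mpr hb))
    · -- Cy pairs
      obtain ⟨u, hu, rfl⟩ := hp
      have hne : u ≠ y := fun h => hABdisj u hu (h ▸ hyB)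
      exact ⟨u, y, rfl, hne, Or.inl (mix_reach_A hT hadj hu (fun p => p.end_mem_support))⟩
    · -- CP pairs
      obtain ⟨⟨u, w⟩, ⟨hu, hwB, _⟩, rfl⟩ := hp
      have hne : u ≠ w := fun h => hABdisj u hu (h ▸ hwB)
      have h1 : (mixOrient hT x y).reaches u y :=
        mix_reach_A hT hadj hu (fun p => p.end_mem_support)
      have h2 : (mixOrient hT x y).reaches y w :=
        mix_reach_B hT hadj hwB (fun p => p.end_mem_support)
      exact ⟨u, w, rfl, hne, Or.inl (h1.trans h2)⟩
  -- disjointness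
  have hnotSS : ∀ u w, u ∈ A → w ∈ B → s(u,w) ∉ SSet T x y := by
    rintro u w hu hw ⟨u', w', heq, hne', hside⟩
    rcases Sym2.eq_iff.mp heq with ⟨rfl, rfl⟩ | ⟨rfl, rfl⟩ <;>
      rcases hside with ⟨h1, h2⟩ | ⟨h1, h2⟩
    · exact hABdisj w h2 hw
    · exact hABdisj u hu h1
    · exact hABdisj w h1 hw
    · exact hABdisj u hu h2
  have hd1 : Disjoint (QSet T x y) Cy := by
    rw [Set.disjoint_left]
    rintro p ⟨_, hss⟩ ⟨u, hu, rfl⟩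
    exact hnotSS u y hu hyB hss
  have hd2 : Disjoint (QSet T x y ∪ Cy) CP := by
    rw [Set.disjoint_left]
    rintro p hp ⟨⟨u, w⟩, ⟨hu, hwB, hwy⟩, rfl⟩
    simp only [Set.mem_singleton_iff] at hwy
    rcases hp with ⟨_, hss⟩ | ⟨u', hu', heq⟩
    · exact hnotSS u w hu hwB hss
    · rcases Sym2.eq_iff.mp heq with ⟨rfl, h2⟩ | ⟨rfl, rfl⟩
      · exact hwy h2.symm
      · exact hABdisj _ hu' hwB
  -- cardinalities
  have hCyn : Cy.ncard = A.ncard := by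
    rw [hCy]
    apply Set.ncard_image_of_injOn
    intro u hu u' hu' heq
    rcases Sym2.eq_iff.mp heq with ⟨h1, _⟩ | ⟨h1, h2⟩
    · exact h1
    · exact absurd (h1 ▸ hu) (fun hc => hABdisj y hc hyB)
  have hCPn : CP.ncard = A.ncard * (B.ncard - 1) := by
    rw [hCP]
    rw [Set.ncard_image_of_injOn]
    · rw [ncard_prod, Set.ncard_diff_singleton_of_mem hyB]
    · rintro ⟨u, w⟩ ⟨hu, hw, _⟩ ⟨u', w'⟩ ⟨hu', hw', _⟩ heq
      rcases Sym2.eq_iff.mp heq with ⟨h1, h2⟩ | ⟨h1, h2⟩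
      · exact Prod.ext h1 h2
      · exact absurd (h1 ▸ hu) (fun hc => hABdisj _ hc hw')
  calc (QSet T x y).ncard + A.ncard + A.ncard * (B.ncard - 1)
      = (QSet T x y ∪ Cy ∪ CP).ncard := by
        rw [Set.ncard_union_eq hd2 (Set.toFinite _) (Set.toFinite _),
          Set.ncard_union_eq hd1 (Set.toFinite _) (Set.toFinite _), hCyn, hCPn]
    _ ≤ (xiSet (mixOrient hT x y)).ncard := Set.ncard_le_ncard hsub (Set.toFinite _)
    _ = (mixOrient hT x y).xi := (xi_eq _).symm

lemma upper_bound [Fintype V] (hT : T.IsTree) {x y : V} (hadj : T.Adj x y)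
    (hbig : Fintype.card V < 2 * (Aset T y x).ncard)
    (O : Orient T) (hc : O.central x) :
    O.xi ≤ (QSet T x y).ncard + (Aset T y x).ncard +
      (Aset T y x).ncard * ((Aset T x y).ncard - 1) := by
  classical
  set A := Aset T x y with hA
  set B := Aset T y x with hB
  have hyB : y ∈ B := Reachable.refl _
  have hxA : x ∈ A := Reachable.refl _
  have hABdisj : ∀ z, z ∈ A → z ∈ B → False := fun z h1 h2 => side_disj hT hadj z ⟨h1, h2⟩
  set I : Set V := {u | O.reaches u x} \ {x} with hI
  set Ob : Set V := {u | O.reaches x u} \ {x} with hOb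
  set Cx : Set (Sym2 V) := (fun w => s(x,w)) '' B with hCx
  set CIO : Set (Sym2 V) := (fun p : V × V => s(p.1,p.2)) '' (I ×ˢ Ob) with hCIO
  have hsub : xiSet O ⊆ QSet T x y ∪ Cx ∪ CIO := by
    rintro p ⟨u, w, rfl, hne, hconn⟩
    by_cases hPx : s(u,w) ∈ PxSet T x
    · left
      obtain ⟨u', w', heq, hne', hbtw⟩ := hPx
      have hcases : (u' ∈ A ∧ w' ∈ A) ∨ (u' ∈ B ∧ w' ∈ B) ∨
          (u' ∈ A ∧ w' ∈ B) ∨ (u' ∈ B ∧ w' ∈ A) := by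
        rcases side_cover hT hadj u' with h1 | h1 <;>
          rcases side_cover hT hadj w' with h2 | h2 <;> tauto
      rcases hcases with ⟨h1, h2⟩ | ⟨h1, h2⟩ | ⟨h1, h2⟩ | ⟨h1, h2⟩
      · exact Or.inl ⟨⟨u', w', heq, hne', hbtw⟩, ⟨u', w', heq, hne', Or.inl ⟨h1, h2⟩⟩⟩
      · exact Or.inl ⟨⟨u', w', heq, hne', hbtw⟩, ⟨u', w', heq, hne', Or.inr ⟨h1, h2⟩⟩⟩
      · -- u' ∈ A, w' ∈ B : then u' = x
        have hu'x : u' = x := by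
          rcases hbtw with hb | hb
          · exfalso
            obtain ⟨q, hq⟩ := walk_in_side h1
            exact hABdisj w' (hq w' (hb q)) h2
          · obtain ⟨q, hq⟩ := walk_in_side h2
            have hmem := hb (q.append (Walk.cons hadj.symm Walk.nil))
            rw [Walk.mem_support_append_iff] at hmem
            rcases hmem with h' | h'
            · exact absurd (hq u' h') (fun hc => hABdisj u' h1 hc)
            · have : u' = y ∨ u' = x := by simpa using h'
              rcases this with rfl | rfl
              · exact absurd h1 (fun hc => hABdisj u' hc hyB)
              · rfl
        subst hu'x
        exact Or.inr ⟨w', h2, heq.symm⟩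
      · -- u' ∈ B, w' ∈ A : then w' = x
        have hw'x : w' = x := by
          rcases hbtw with hb | hb
          · obtain ⟨q, hq⟩ := walk_in_side h1
            have hmem := hb (q.append (Walk.cons hadj.symm Walk.nil))
            rw [Walk.mem_support_append_iff] at hmem
            rcases hmem with h' | h'
            · exact absurd (hq w' h') (fun hc => hABdisj w' h2 hc)
            · have : w' = y ∨ w' = x := by simpa using h'
              rcases this with rfl | rfl
              · exact absurd h2 (fun hc => hABdisj w' hc hyB)
              · rfl
          · exfalso
            obtain ⟨q, hq⟩ := walk_in_side h2
            exact hABdisj u' (hq u' (hb q)) h1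
        subst hw'x
        exact Or.inr ⟨u', h1, by rw [heq, Sym2.eq_swap]⟩
    · -- not in P_x
      have hux : u ≠ x := by
        rintro rfl
        exact hPx ⟨w, u, Sym2.eq_swap, Ne.symm hne, Or.inl (fun q => q.end_mem_support)⟩
      have hwx : w ≠ x := by
        rintro rfl
        exact hPx ⟨u, w, rfl, hne, Or.inl (fun q => q.end_mem_support)⟩
      rcases hc u with hxu | hux'
      · rcases hc w with hxw | hwx'
        · -- both reached from x
          exfalso
          rcases hconn with h | h
          · exact hPx ⟨w, u, Sym2.eq_swap, Ne.symm hne,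
              Or.inl (fun q => btw_of_reaches hT (Orient.rev O)
                (rev_reaches O h) (rev_reaches O hxu) q)⟩
          · exact hPx ⟨u, w, rfl, hne,
              Or.inl (fun q => btw_of_reaches hT (Orient.rev O)
                (rev_reaches O h) (rev_reaches O hxw) q)⟩
        · -- u ∈ Ob, w ∈ I
          exact Or.inr ⟨(w, u), ⟨⟨hwx', hwx⟩, ⟨hxu, hux⟩⟩, by rw [Sym2.eq_swap]⟩
      · rcases hc w with hxw | hwx'
        · exact Or.inr ⟨(u, w), ⟨⟨hux', hux⟩, ⟨hxw, hwx⟩⟩, rfl⟩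
        · -- both reach x
          exfalso
          rcases hconn with h | h
          · exact hPx ⟨u, w, rfl, hne,
              Or.inl (fun q => btw_of_reaches hT O h hwx' q)⟩
          · exact hPx ⟨w, u, Sym2.eq_swap, Ne.symm hne,
              Or.inl (fun q => btw_of_reaches hT O h hux' q)⟩
  -- cardinalities
  have hCxn : Cx.ncard = B.ncard := by
    rw [hCx]
    apply Set.ncard_image_of_injOn
    intro w hw w' hw' heq
    rcases Sym2.eq_iff.mp heq with ⟨_, h2⟩ | ⟨h1, h2⟩
    · exact h2
    · exact absurd (h1 ▸ hw') (fun hcon => hABdisj x hxA hcon)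
  have hCIOn : CIO.ncard ≤ I.ncard * Ob.ncard := by
    rw [hCIO]
    calc ((fun p : V × V => s(p.1,p.2)) '' (I ×ˢ Ob)).ncard
        ≤ (I ×ˢ Ob).ncard := Set.ncard_image_le (Set.toFinite _)
      _ = I.ncard * Ob.ncard := ncard_prod _ _
  have hunion : I ∪ Ob = Set.univ \ {x} := by
    ext z
    constructor
    · rintro (⟨_, hz⟩ | ⟨_, hz⟩) <;> exact ⟨Set.mem_univ _, hz⟩
    · rintro ⟨_, hz⟩
      rcases hc z with h | h
      · exact Or.inr ⟨h, hz⟩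
      · exact Or.inl ⟨h, hz⟩
  have hdisjIO : Disjoint I Ob := by
    rw [Set.disjoint_left]
    rintro z ⟨h1, hz⟩ ⟨h2, _⟩
    exact hz (reaches_antisymm hT O h1 h2)
  have hio : I.ncard + Ob.ncard + 1 = Fintype.card V := by
    have h1 : (I ∪ Ob).ncard = I.ncard + Ob.ncard :=
      Set.ncard_union_eq hdisjIO (Set.toFinite _) (Set.toFinite _)
    rw [hunion] at h1
    have h2 : (Set.univ \ {x} : Set V).ncard = Fintype.card V - 1 := by
      rw [Set.ncard_diff_singleton_of_mem (Set.mem_univ x), Set.ncard_univ,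
        Nat.card_eq_fintype_card]
    have h3 : 1 ≤ Fintype.card V := Fintype.card_pos_iff.mpr ⟨x⟩
    omega
  have hcoverAB : A ∪ B = Set.univ :=
    Set.eq_univ_of_forall (fun z => side_cover hT hadj z)
  have hdAB : Disjoint A B := Set.disjoint_left.mpr (fun {z} h1 h2 => (hABdisj z h1 h2).elim)
  have hn : A.ncard + B.ncard = Fintype.card V := by
    rw [← Set.ncard_union_eq hdAB (Set.toFinite _) (Set.toFinite _), hcoverAB, Set.ncard_univ,
      Nat.card_eq_fintype_card]
  have hBI : B ⊆ I ∨ B ⊆ Ob := by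
    rcases O.dir_total x y hadj with hd | hd
    · right
      intro w hw
      refine ⟨?_, fun hwxx => hABdisj x hxA (by rwa [Set.mem_singleton_iff.mp hwxx] at hw)⟩
      rcases hc w with h | h
      · exact h
      · exact absurd (dir_cross' hT hadj O h hxA hw) (fun hcon => O.dir_asymm _ _ hd hcon)
    · left
      intro w hw
      refine ⟨?_, fun hwxx => hABdisj x hxA (by rwa [Set.mem_singleton_iff.mp hwxx] at hw)⟩
      rcases hc w with h | h
      · exact absurd (dir_cross hT hadj O h hw hxA) (fun hcon => O.dir_asymm _ _ hd hcon)
      · exact h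
  have harith : I.ncard * Ob.ncard ≤ B.ncard * (A.ncard - 1) := by
    have h1 : 1 ≤ A.ncard := (Set.ncard_pos (Set.toFinite _)).mpr ⟨x, hxA⟩
    rcases hBI with hBsub | hBsub
    · have hb : B.ncard ≤ I.ncard := Set.ncard_le_ncard hBsub (Set.toFinite _)
      obtain ⟨k, hk⟩ := Nat.exists_eq_add_of_le hb
      have hOle : Ob.ncard ≤ B.ncard := by omega
      calc I.ncard * Ob.ncard = B.ncard * Ob.ncard + k * Ob.ncard := by rw [hk]; ring
        _ ≤ B.ncard * Ob.ncard + k * B.ncard :=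
            add_le_add_right (Nat.mul_le_mul_left k hOle) _
        _ = B.ncard * (Ob.ncard + k) := by ring
        _ = B.ncard * (A.ncard - 1) := by congr 1; omega
    · have hb : B.ncard ≤ Ob.ncard := Set.ncard_le_ncard hBsub (Set.toFinite _)
      obtain ⟨k, hk⟩ := Nat.exists_eq_add_of_le hb
      have hIle : I.ncard ≤ B.ncard := by omega
      calc I.ncard * Ob.ncard = B.ncard * I.ncard + k * I.ncard := by rw [hk]; ring
        _ ≤ B.ncard * I.ncard + k * B.ncard :=
            add_le_add_right (Nat.mul_le_mul_left k hIle) _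
        _ = B.ncard * (I.ncard + k) := by ring
        _ = B.ncard * (A.ncard - 1) := by congr 1; omega
  calc O.xi = (xiSet O).ncard := xi_eq O
    _ ≤ (QSet T x y ∪ Cx ∪ CIO).ncard := Set.ncard_le_ncard hsub (Set.toFinite _)
    _ ≤ (QSet T x y ∪ Cx).ncard + CIO.ncard := Set.ncard_union_le _ _
    _ ≤ (QSet T x y).ncard + Cx.ncard + CIO.ncard :=
        add_le_add_left (Set.ncard_union_le _ _) _
    _ ≤ (QSet T x y).ncard + B.ncard + B.ncard * (A.ncard - 1) := by
        rw [hCxn]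
        exact add_le_add_right (le_trans hCIOn harith) _

end Main

end Stmt6

/-- if `y` is a neighbor of `x` in a finite tree `T` and the connected
component of `y` in `T` minus the edge `{x,y}` has more than `n/2` vertices, then
`ξ(y) ≥ ξ(x)`. -/
theorem stmt6 {V : Type*} [Fintype V] {T : SimpleGraph V} (hT : T.IsTree)
    (x y : V) (hadj : T.Adj x y)
    (hbig : Fintype.card V <
      2 * Set.ncard {z | (T.deleteEdges {s(x, y)}).Reachable y z}) :
    xiV T x ≤ xiV T y := by
  classical
  have hBeq : {z | (T.deleteEdges {s(x, y)}).Reachable y z} = Stmt6.Aset T y x := by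
    ext z
    exact Stmt6.reach_swap x y y z
  rw [hBeq] at hbig
  have hxA : x ∈ Stmt6.Aset T x y := SimpleGraph.Reachable.refl _
  have hyB : y ∈ Stmt6.Aset T y x := SimpleGraph.Reachable.refl _
  have ha1 : 1 ≤ (Stmt6.Aset T x y).ncard := (Set.ncard_pos (Set.toFinite _)).mpr ⟨x, hxA⟩
  have hb1 : 1 ≤ (Stmt6.Aset T y x).ncard := (Set.ncard_pos (Set.toFinite _)).mpr ⟨y, hyB⟩
  have key : ∀ k ∈ {k | ∃ O : Orient T, O.central x ∧ O.xi = k}, k ≤ xiV T y := by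
    rintro k ⟨O, hcen, rfl⟩
    have h1 := Stmt6.upper_bound hT hadj hbig O hcen
    have h2 := Stmt6.lower_bound hT hadj
    have heq : (Stmt6.QSet T x y).ncard + (Stmt6.Aset T y x).ncard +
          (Stmt6.Aset T y x).ncard * ((Stmt6.Aset T x y).ncard - 1)
        = (Stmt6.QSet T x y).ncard + (Stmt6.Aset T x y).ncard +
          (Stmt6.Aset T x y).ncard * ((Stmt6.Aset T y x).ncard - 1) := by
      obtain ⟨a', ha'⟩ := Nat.exists_eq_add_of_le ha1
      obtain ⟨b', hb'⟩ := Nat.exists_eq_add_of_le hb1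
      have e1 : (Stmt6.Aset T x y).ncard - 1 = a' := by omega
      have e2 : (Stmt6.Aset T y x).ncard - 1 = b' := by omega
      rw [e1, e2, ha', hb']
      ring
    have h3 : O.xi ≤ (Stmt6.mixOrient hT x y).xi := le_trans h1 (le_trans (le_of_eq heq) h2)
    refine le_trans h3 (le_csSup ?_ ⟨Stmt6.mixOrient hT x y, Stmt6.mix_central hT hadj, rfl⟩)
    refine ⟨Nat.card (Sym2 V), ?_⟩
    rintro k' ⟨O', _, rfl⟩
    calc O'.xi = (Stmt6.xiSet O').ncard := Stmt6.xi_eq O'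
      _ ≤ (Set.univ : Set (Sym2 V)).ncard :=
          Set.ncard_le_ncard (Set.subset_univ _) Set.finite_univ
      _ = Nat.card (Sym2 V) := Set.ncard_univ _
  have hne : {k | ∃ O : Orient T, O.central x ∧ O.xi = k}.Nonempty :=
    ⟨(Stmt6.towardOrient hT x).xi, Stmt6.towardOrient hT x, Stmt6.towardOrient_central hT x, rfl⟩
  exact csSup_le hne key
end

section
/- Let (X,d) be a dissimilarity space with d symmetric, let T = (X,E) be a tree, let x ∈ X, and let t, t' be two distinct neighbors of x in T with d(t,t') < max{d(x,t), d(x,t')}. Then in every orientation of T that is compatible for d, the edges {x,t} and {x,t'} are oriented the same way relative to x: either both x → t and x → t', or both t → x and t' → x. -/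
/-- Compatibility of an orientation for a dissimilarity `d`. -/
def Compatible {X : Type*} {T : SimpleGraph X} (d : X → X → ℝ) (O : Orient T) : Prop :=
  ∀ a b c : X, O.reaches a b → O.reaches b c → max (d a b) (d b c) ≤ d a c

/-- for a symmetric dissimilarity `d`, if `t, t'` are distinct neighbors
of `x` in a tree `T` with `d t t' < max (d x t) (d x t')`, then in every compatible
orientation the edges `{x,t}` and `{x,t'}` are oriented the same way relative to `x`. -/
theorem stmt9 {X : Type*} [Fintype X] (d : X → X → ℝ)
    (h0 : ∀ x, d x x = 0) (hnn : ∀ x y, 0 ≤ d x y) (hsym : ∀ x y, d x y = d y x)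
    {T : SimpleGraph X} (hT : T.IsTree) (x t t' : X)
    (ht : T.Adj x t) (ht' : T.Adj x t') (hne : t ≠ t')
    (hd : d t t' < max (d x t) (d x t'))
    (O : Orient T) (hO : Compatible d O) :
    (O.dir x t ∧ O.dir x t') ∨ (O.dir t x ∧ O.dir t' x) := by
  have step : ∀ u v, O.dir u v → O.reaches u v := fun u v h =>
    Relation.ReflTransGen.single h
  rcases O.dir_total x t ht with h1 | h1 <;> rcases O.dir_total x t' ht' with h2 | h2
  · exact Or.inl ⟨h1, h2⟩
  · exfalso
    have := hO t' x t (step _ _ h2) (step _ _ h1)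
    rw [hsym t' x, hsym t' t] at this
    have h3 := le_max_left (d x t) (d x t')
    have h4 := le_max_right (d x t') (d x t)
    have h5 := le_max_left (d x t') (d x t)
    have h6 := le_trans h4 this
    have h7 := le_trans h5 this
    rcases max_cases (d x t) (d x t') with ⟨he, _⟩ | ⟨he, _⟩ <;> linarith
  · exfalso
    have := hO t x t' (step _ _ h1) (step _ _ h2)
    rw [hsym t x] at this
    have h4 := le_max_right (d x t) (d x t')
    have h5 := le_max_left (d x t) (d x t')
    have h6 := le_trans h4 this
    have h7 := le_trans h5 this
    rcases max_cases (d x t) (d x t') with ⟨he, _⟩ | ⟨he, _⟩ <;> linarith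
  · exact Or.inr ⟨h1, h2⟩
end

section
/- Let (X,d) be a dissimilarity space with d symmetric, let T = (X,E) be a tree, let x ∈ X, and let t, t' be two neighbors of x belonging to different x-petals. Then there exists an orientation of T that is compatible for d in which t → x and x → t'. -/
/-- The relation `R` on the neighbors of `x`: `a R b` iff `a` and `b` are neighbors of
`x` and `d a b < max (d x a) (d x b)`. The `x`-petals are the classes of the
reflexive-transitive closure of `R`. -/
def petalRel {X : Type*} (d : X → X → ℝ) (T : SimpleGraph X) (x : X) (a b : X) : Prop :=
  T.Adj x a ∧ T.Adj x b ∧ d a b < max (d x a) (d x b)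

open SimpleGraph Walk

section Aux
variable {X : Type*} {T : SimpleGraph X}

noncomputable def pathTo (hT : T.IsTree) (x y : X) : T.Walk x y :=
  (hT.existsUnique_path x y).exists.choose

lemma pathTo_isPath (hT : T.IsTree) (x y : X) : (pathTo hT x y).IsPath :=
  (hT.existsUnique_path x y).exists.choose_spec

lemma pathTo_unique (hT : T.IsTree) {x y : X} (p : T.Walk x y) (hp : p.IsPath) :
    p = pathTo hT x y := by
  obtain ⟨q, hq, huniq⟩ := hT.existsUnique_path x y
  rw [huniq p hp, huniq _ (pathTo_isPath hT x y)]

lemma pathTo_self (hT : T.IsTree) (x : X) : pathTo hT x x = Walk.nil := by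
  have := pathTo_isPath hT x x
  rwa [Walk.isPath_iff_eq_nil] at this

lemma concat_isPath {u v w : X} {p : T.Walk u v} (hp : p.IsPath) (h : T.Adj v w)
    (hw : w ∉ p.support) : (p.concat h).IsPath := by
  rw [Walk.isPath_def, Walk.support_concat]
  simp only [List.concat_eq_append, List.nodup_append]
  exact ⟨hp.support_nodup, List.nodup_singleton w,
    fun a ha b hb => by simp at hb; subst hb; rintro rfl; exact hw ha⟩

lemma adj_pathTo (hT : T.IsTree) (x : X) {u v : X} (h : T.Adj u v) :
    pathTo hT x v = (pathTo hT x u).concat h ∨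
    pathTo hT x u = (pathTo hT x v).concat h.symm := by
  classical
  set p := pathTo hT x u with hp
  by_cases hv : v ∈ p.support
  · right
    have hq : (p.takeUntil v hv).IsPath := (pathTo_isPath hT x u).takeUntil hv
    have huq : u ∉ (p.takeUntil v hv).support := by
      intro hu
      have hnd : p.support.Nodup := (pathTo_isPath hT x u).support_nodup
      rw [← p.take_spec hv, Walk.support_append] at hnd
      have hu2 : u ∈ (p.dropUntil v hv).support.tail := by
        have hmem := (p.dropUntil v hv).end_mem_support
        rw [Walk.support_eq_cons] at hmem
        rcases List.mem_cons.mp hmem with h2 | h2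
        · exact absurd h2 h.ne
        · exact h2
      exact (List.disjoint_of_nodup_append hnd) hu hu2
    have hcp : ((p.takeUntil v hv).concat h.symm).IsPath := concat_isPath hq h.symm huq
    have h1 : pathTo hT x v = p.takeUntil v hv := (pathTo_unique hT _ hq).symm
    rw [h1]
    exact (pathTo_unique hT _ hcp).symm
  · left
    exact (pathTo_unique hT _ (concat_isPath (pathTo_isPath hT x u) h hv)).symm

noncomputable def depth (hT : T.IsTree) (x y : X) : ℕ := (pathTo hT x y).length

noncomputable def hv1 (hT : T.IsTree) (x y : X) : X := (pathTo hT x y).getVert 1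

lemma depth_self (hT : T.IsTree) (x : X) : depth hT x x = 0 := by
  rw [depth, pathTo_self]; rfl

lemma depth_pos (hT : T.IsTree) {x y : X} (hxy : x ≠ y) : 1 ≤ depth hT x y := by
  rcases Nat.eq_zero_or_pos (depth hT x y) with h | h
  · exact absurd (Walk.eq_of_length_eq_zero h) hxy
  · exact h

lemma concat_depth_head (hT : T.IsTree) (x : X) {u v : X} (h : T.Adj u v)
    (hc : pathTo hT x v = (pathTo hT x u).concat h) :
    depth hT x v = depth hT x u + 1 ∧ (u = x → hv1 hT x v = v) ∧
      (u ≠ x → hv1 hT x v = hv1 hT x u) := by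
  refine ⟨by rw [depth, depth, hc, Walk.length_concat], ?_, ?_⟩
  · intro hux
    subst hux
    rw [hv1, hc, pathTo_self, Walk.concat_nil]
    rw [Walk.getVert_cons_succ, Walk.getVert_zero]
  · intro hux
    have hlen : 1 ≤ (pathTo hT x u).length := depth_pos hT (fun h' => hux h'.symm)
    rw [hv1, hv1, hc, Walk.concat_eq_append, Walk.getVert_append]
    by_cases h1 : 1 < (pathTo hT x u).length
    · rw [if_pos h1]
    · rw [if_neg h1]
      have hL : (pathTo hT x u).length = 1 := le_antisymm (not_lt.mp h1) hlen
      rw [hL]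
      simp only [Nat.sub_self, Walk.getVert_zero]
      rw [← hL, Walk.getVert_length]

lemma depth_head_adj (hT : T.IsTree) (x : X) {u v : X} (h : T.Adj u v) :
    (depth hT x v = depth hT x u + 1 ∧ (u = x → hv1 hT x v = v) ∧
      (u ≠ x → hv1 hT x v = hv1 hT x u)) ∨
    (depth hT x u = depth hT x v + 1 ∧ (v = x → hv1 hT x u = u) ∧
      (v ≠ x → hv1 hT x u = hv1 hT x v)) := by
  rcases adj_pathTo hT x h with hc | hc
  · exact Or.inl (concat_depth_head hT x h hc)
  · exact Or.inr (concat_depth_head hT x h.symm hc)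

end Aux

section Build
variable {X : Type*} {T : SimpleGraph X}

lemma buildOrient (d : X → X → ℝ)
    (h0 : ∀ x, d x x = 0) (hnn : ∀ x y, 0 ≤ d x y) (hsym : ∀ x y, d x y = d y x)
    (x t t' : X) (ht : T.Adj x t) (ht' : T.Adj x t')
    (P : X → Prop) (dp : X → ℕ) (hh : X → X)
    (hdp0 : dp x = 0)
    (hAdjx : ∀ z, T.Adj x z → dp z = 1 ∧ hh z = z)
    (hDepth : ∀ u v, T.Adj u v → dp v = dp u + 1 ∨ dp u = dp v + 1)
    (hSame : ∀ u v, T.Adj u v → dp v = dp u + 1 → u ≠ x → hh v = hh u)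
    (hPet : ∀ a c, P a → ¬ P c → T.Adj x a → T.Adj x c → max (d x a) (d x c) ≤ d a c)
    (hPt : P t) (hPt' : ¬ P t') :
    ∃ O : Orient T, Compatible d O ∧ O.dir t x ∧ O.dir x t' := by
  classical
  set F : X → X → Prop := fun a b => T.Adj a b ∧
      ((dp a = dp b + 1 ∧ (P (hh a) ↔ Odd (dp a))) ∨
       (dp b = dp a + 1 ∧ (P (hh b) ↔ Even (dp b)))) with hF
  have hMid : ∀ a b c, F a b → F b c → b = x := by
    rintro a b c ⟨hab, h1⟩ ⟨hbc, h2⟩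
    by_contra hbx
    rcases h1 with ⟨e1, p1⟩ | ⟨e1, p1⟩ <;> rcases h2 with ⟨e2, p2⟩ | ⟨e2, p2⟩
    · have hha : hh a = hh b := hSame b a hab.symm e1 hbx
      rw [hha] at p1
      rw [Nat.odd_iff] at p1 p2
      by_cases hq : P (hh b) <;> simp [hq] at p1 p2 <;> omega
    · have hha : hh a = hh b := hSame b a hab.symm e1 hbx
      have hhc : hh c = hh b := hSame b c hbc e2 hbx
      rw [hha] at p1; rw [hhc] at p2
      rw [Nat.odd_iff] at p1; rw [Nat.even_iff] at p2
      by_cases hq : P (hh b) <;> simp [hq] at p1 p2 <;> omega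
    · rw [Nat.even_iff] at p1; rw [Nat.odd_iff] at p2
      by_cases hq : P (hh b) <;> simp [hq] at p1 p2 <;> omega
    · have hhc : hh c = hh b := hSame b c hbc e2 hbx
      rw [hhc] at p2
      rw [Nat.even_iff] at p1 p2
      by_cases hq : P (hh b) <;> simp [hq] at p1 p2 <;> omega
  have hInx : ∀ z, F z x → P z ∧ T.Adj x z := by
    rintro z ⟨hzx, h1⟩
    have hz := hAdjx z hzx.symm
    rcases h1 with ⟨e1, p1⟩ | ⟨e1, _⟩
    · rw [hz.2, hz.1] at p1
      exact ⟨p1.mpr odd_one, hzx.symm⟩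
    · exact (by omega : False).elim
  have hOutx : ∀ c, F x c → ¬ P c ∧ T.Adj x c := by
    rintro c ⟨hxc, h1⟩
    have hz := hAdjx c hxc
    rcases h1 with ⟨e1, _⟩ | ⟨e1, p1⟩
    · exact (by omega : False).elim
    · rw [hz.2, hz.1] at p1
      refine ⟨fun hp => ?_, hxc⟩
      have := p1.mp hp
      rw [Nat.even_iff] at this
      omega
  have hReach : ∀ a b, Relation.ReflTransGen F a b → a = b ∨ F a b ∨ (F a x ∧ F x b) := by
    intro a b h
    induction h with
    | refl => exact Or.inl rfl
    | @tail b' c hb' hbc ih =>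
      rcases ih with rfl | h1 | ⟨hax, hxb'⟩
      · exact Or.inr (Or.inl hbc)
      · have hx := (hMid a b' c h1 hbc).symm
        subst hx
        exact Or.inr (Or.inr ⟨h1, hbc⟩)
      · have hx := (hMid x b' c hxb' hbc).symm
        subst hx
        exact absurd hxb'.1 (T.irrefl)
  refine ⟨⟨F, fun u v h => h.1, ?_, ?_⟩, ?_, ?_, ?_⟩
  · -- dir_total
    intro u v huv
    rcases hDepth u v huv with e | e
    · by_cases hq : P (hh v) ↔ Even (dp v)
      · exact Or.inl ⟨huv, Or.inr ⟨e, hq⟩⟩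
      · refine Or.inr ⟨huv.symm, Or.inl ⟨e, ?_⟩⟩
        rw [Nat.odd_iff]; rw [Nat.even_iff] at hq
        by_cases hp : P (hh v) <;> simp [hp] at hq ⊢ <;> omega
    · by_cases hq : P (hh u) ↔ Even (dp u)
      · exact Or.inr ⟨huv.symm, Or.inr ⟨e, hq⟩⟩
      · refine Or.inl ⟨huv, Or.inl ⟨e, ?_⟩⟩
        rw [Nat.odd_iff]; rw [Nat.even_iff] at hq
        by_cases hp : P (hh u) <;> simp [hp] at hq ⊢ <;> omega
  · -- dir_asymm
    rintro u v ⟨hadj, h1⟩ ⟨_, h2⟩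
    rcases h1 with ⟨e1, p1⟩ | ⟨e1, p1⟩ <;> rcases h2 with ⟨e2, p2⟩ | ⟨e2, p2⟩
    · omega
    · rw [Nat.odd_iff] at p1; rw [Nat.even_iff] at p2
      by_cases hq : P (hh u) <;> simp [hq] at p1 p2 <;> omega
    · rw [Nat.even_iff] at p1; rw [Nat.odd_iff] at p2
      by_cases hq : P (hh v) <;> simp [hq] at p1 p2 <;> omega
    · omega
  · -- Compatible
    intro a b c hab hbc
    rcases hReach a b hab with rfl | h1 | ⟨hax, hxb⟩
    · rw [h0]
      exact max_le (hnn a c) le_rfl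
    · rcases hReach b c hbc with rfl | h2 | ⟨hbx, hxc⟩
      · rw [h0]
        exact max_le le_rfl (hnn a b)
      · have hx := (hMid a b c h1 h2).symm
        subst hx
        have key := hPet a c (hInx a h1).1 (hOutx c h2).1 (hInx a h1).2 (hOutx c h2).2
        rw [hsym a x]
        exact key
      · have hx := (hMid a b x h1 hbx).symm
        subst hx
        exact absurd hbx.1 (T.irrefl)
    · rcases hReach b c hbc with rfl | h2 | ⟨hbx, hxc⟩
      · rw [h0]
        exact max_le le_rfl (hnn a b)
      · have hx := (hMid x b c hxb h2).symm
        subst hx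
        exact absurd hxb.1 (T.irrefl)
      · have hx := (hMid x b x hxb hbx).symm
        subst hx
        exact absurd hxb.1 (T.irrefl)
  · -- dir t x
    refine ⟨ht.symm, Or.inl ⟨by rw [(hAdjx t ht).1, hdp0], ?_⟩⟩
    rw [(hAdjx t ht).2, (hAdjx t ht).1]
    exact iff_of_true hPt odd_one
  · -- dir x t'
    refine ⟨ht', Or.inr ⟨by rw [(hAdjx t' ht').1, hdp0], ?_⟩⟩
    rw [(hAdjx t' ht').2, (hAdjx t' ht').1]
    exact iff_of_false hPt' (by rw [Nat.even_iff]; omega)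

end Build


/-- for a symmetric dissimilarity `d` and neighbors `t, t'` of `x` lying
in different `x`-petals, there is a compatible orientation of `T` with `t → x`
and `x → t'`. -/
theorem stmt10 {X : Type*} [Fintype X] (d : X → X → ℝ)
    (h0 : ∀ x, d x x = 0) (hnn : ∀ x y, 0 ≤ d x y) (hsym : ∀ x y, d x y = d y x)
    {T : SimpleGraph X} (hT : T.IsTree) (x t t' : X)
    (ht : T.Adj x t) (ht' : T.Adj x t')
    (hsep : ¬ Relation.ReflTransGen (petalRel d T x) t t') :
    ∃ O : Orient T, Compatible d O ∧ O.dir t x ∧ O.dir x t' := by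
  classical
  refine buildOrient d h0 hnn hsym x t t' ht ht'
    (fun z => Relation.ReflTransGen (petalRel d T x) t z) (depth hT x) (hv1 hT x)
    (depth_self hT x) ?_ ?_ ?_ ?_ Relation.ReflTransGen.refl hsep
  · intro z hz
    rcases depth_head_adj hT x hz with ⟨h1, h2, _⟩ | ⟨h1, _, _⟩
    · exact ⟨by rw [h1, depth_self], h2 rfl⟩
    · rw [depth_self] at h1
      exact absurd h1.symm (Nat.succ_ne_zero _)
  · intro u v huv
    rcases depth_head_adj hT x huv with ⟨h1, _, _⟩ | ⟨h1, _, _⟩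
    · exact Or.inl h1
    · exact Or.inr h1
  · intro u v huv hdep hux
    rcases depth_head_adj hT x huv with ⟨h1, _, h3⟩ | ⟨h1, _, _⟩
    · exact h3 hux
    · exact (by omega : False).elim
  · intro a c hPa hPc hxa hxc
    by_contra hlt
    push_neg at hlt
    exact hPc (hPa.tail ⟨hxa, hxc, hlt⟩)
end

section
/- Let G be a finite simple graph with vertices v_1, ..., v_n and edges e_1, ..., e_m, and let (X,d) be the associated dissimilarity space. If G has a Hamiltonian path v_{σ(1)}, v_{σ(2)}, ..., v_{σ(n)} using, in this order, the edges e_{j_1}, ..., e_{j_{n-1}} (where e_{j_t} = {v_{σ(t)}, v_{σ(t+1)}}), then the set X' = {x_i^k : 1 ≤ i ≤ n, 1 ≤ k ≤ m+1} ∪ {y_{j_1}, ..., y_{j_{n-1}}}, which has size n(m+1) + n − 1, is such that (X',d) is Robinson; indeed the order x_{σ(1)}^1 < ... < x_{σ(1)}^{m+1} < y_{j_1} < x_{σ(2)}^1 < ... < x_{σ(2)}^{m+1} < y_{j_2} < ... < y_{j_{n-1}} < x_{σ(n)}^1 < ... < x_{σ(n)}^{m+1} is a compatible order. -/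
/-- The point set `X = {xᵢᵏ : 1 ≤ i ≤ n, 1 ≤ k ≤ m+1} ∪ {yⱼ : 1 ≤ j ≤ m}` of the
dissimilarity space associated to a graph on `n` vertices with `m` edges. -/
abbrev XT (n m : ℕ) := (Fin n × Fin (m + 1)) ⊕ Fin m

open Classical in
/-- The dissimilarity associated to a graph with vertex set `Fin n` whose edges are
enumerated by `ev : Fin m → Sym2 (Fin n)`:
`d(xᵢᵏ, xᵢᵏ') = 1`; `d(yⱼ, xᵢᵏ) = d(xᵢᵏ, yⱼ) = 1` when `vᵢ` is an endpoint of `eⱼ`;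
`d(z,z) = 0`; and `d = 2` on all other pairs. -/
noncomputable def dH {n m : ℕ} (ev : Fin m → Sym2 (Fin n)) : XT n m → XT n m → ℝ :=
  fun a b =>
    if a = b then 0
    else
      match a, b with
      | Sum.inl (i, _), Sum.inl (i', _) => if i = i' then 1 else 2
      | Sum.inl (i, _), Sum.inr j => if i ∈ ev j then 1 else 2
      | Sum.inr j, Sum.inl (i, _) => if i ∈ ev j then 1 else 2
      | Sum.inr _, Sum.inr _ => 2

/-- `(X', d)` is Robinson: there is a strict total (i.e. linear) order on `X'` such
that `d p_i p_k ≥ max (d p_i p_j) (d p_j p_k)` whenever `p_i < p_j < p_k`. -/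
def IsRobinsonOn {X : Type*} (d : X → X → ℝ) (X' : Set X) : Prop :=
  ∃ r : X' → X' → Prop, IsStrictTotalOrder X' r ∧
    ∀ a b c : X', r a b → r b c →
      max (d (a : X) (b : X)) (d (b : X) (c : X)) ≤ d (a : X) (c : X)

/-- The subset `X' = {xᵢᵏ : all i, k} ∪ {y_{j_t} : edges of the Hamiltonian path}`. -/
def hamSet (n m : ℕ) (j : ℕ → Fin m) : Set (XT n m) :=
  {a | (∃ i k, a = Sum.inl (i, k)) ∨ ∃ t, t + 1 < n ∧ a = Sum.inr (j t)}

section Helpers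

lemma blockCmp {M a b k k' : ℕ} (hk : k < M) (hk' : k' < M) :
    a * M + k < b * M + k' ↔ a < b ∨ (a = b ∧ k < k') := by
  constructor
  · intro h
    rcases Nat.lt_trichotomy a b with h1 | h1 | h1
    · exact Or.inl h1
    · subst h1; exact Or.inr ⟨rfl, by omega⟩
    · exfalso
      have : b * M + k' < a * M + k :=
        calc b * M + k' < b * M + M := by omega
          _ = (b + 1) * M := (Nat.succ_mul b M).symm
          _ ≤ a * M := Nat.mul_le_mul_right M h1
          _ ≤ a * M + k := Nat.le_add_right _ _
      omega
  · rintro (h1 | ⟨rfl, h2⟩)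
    · calc a * M + k < a * M + M := by omega
        _ = (a + 1) * M := (Nat.succ_mul a M).symm
        _ ≤ b * M := Nat.mul_le_mul_right M h1
        _ ≤ b * M + k' := Nat.le_add_right _ _
    · omega

lemma blockEq {M a b k k' : ℕ} (hk : k < M) (hk' : k' < M) (h : a * M + k = b * M + k') :
    a = b ∧ k = k' := by
  rcases Nat.lt_trichotomy a b with h1 | h1 | h1
  · have := (blockCmp hk hk').2 (Or.inl h1); omega
  · subst h1; omega
  · have := (blockCmp hk' hk).2 (Or.inl h1); omega

variable {n m : ℕ} (ev : Fin m → Sym2 (Fin n))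

lemma dH_xx (i : Fin n) {k k' : Fin (m+1)} (h : k ≠ k') :
    dH ev (Sum.inl (i,k)) (Sum.inl (i,k')) = 1 := by
  simp [dH, h]

lemma dH_xx_ne {i i' : Fin n} (k k' : Fin (m+1)) (h : i ≠ i') :
    dH ev (Sum.inl (i,k)) (Sum.inl (i',k')) = 2 := by
  simp [dH, h, Prod.ext_iff]

lemma dH_xy (i : Fin n) (k : Fin (m+1)) {e : Fin m} (h : i ∈ ev e) :
    dH ev (Sum.inl (i,k)) (Sum.inr e) = 1 := by
  simp [dH, h]

lemma dH_xy_ne (i : Fin n) (k : Fin (m+1)) {e : Fin m} (h : i ∉ ev e) :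
    dH ev (Sum.inl (i,k)) (Sum.inr e) = 2 := by
  simp [dH, h]

lemma dH_yx (i : Fin n) (k : Fin (m+1)) {e : Fin m} (h : i ∈ ev e) :
    dH ev (Sum.inr e) (Sum.inl (i,k)) = 1 := by
  simp [dH, h]

lemma dH_yx_ne (i : Fin n) (k : Fin (m+1)) {e : Fin m} (h : i ∉ ev e) :
    dH ev (Sum.inr e) (Sum.inl (i,k)) = 2 := by
  simp [dH, h]

lemma dH_yy {e e' : Fin m} (h : e ≠ e') :
    dH ev (Sum.inr e) (Sum.inr e') = 2 := by
  simp [dH, h]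

lemma dH_le_two (a b : XT n m) : dH ev a b ≤ 2 := by
  rcases a with ⟨i,k⟩ | e <;> rcases b with ⟨i',k'⟩ | e' <;>
    simp only [dH] <;> first | (split_ifs <;> norm_num) | norm_num

lemma dH_one_or_two {a b : XT n m} (h : a ≠ b) : dH ev a b = 1 ∨ dH ev a b = 2 := by
  rcases a with ⟨i,k⟩ | e <;> rcases b with ⟨i',k'⟩ | e' <;>
    simp only [dH, if_neg h] <;> first | (split_ifs <;> norm_num) | norm_num

open Classical in
/-- The position function realizing the interleaved compatible order. -/
noncomputable def key0 {n m : ℕ} (σ : Fin n ≃ Fin n) (j : ℕ → Fin m) : XT n m → ℕ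
  | Sum.inl (i, k) => (σ.symm i : ℕ) * (m + 2) + (k : ℕ)
  | Sum.inr e => if h : ∃ t, t + 1 < n ∧ j t = e then h.choose * (m + 2) + (m + 1) else 0

end Helpers

/-- if `G` has a Hamiltonian path `v_{σ 0}, …, v_{σ (n-1)}` whose
`t`-th edge is `e_{j t}`, then `X' = {xᵢᵏ} ∪ {y_{j t}}` has size `n(m+1) + n - 1`,
`(X', d)` is Robinson, and the interleaved order
`x_{σ 0}¹ < ⋯ < x_{σ 0}^{m+1} < y_{j 0} < x_{σ 1}¹ < ⋯` (encoded by any position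
function `key` realizing it) is a compatible order. -/
theorem stmt11 {n m : ℕ} (G : SimpleGraph (Fin n)) (ev : Fin m → Sym2 (Fin n))
    (hev1 : ∀ j, ev j ∈ G.edgeSet) (hev2 : Function.Injective ev)
    (hev3 : ∀ s ∈ G.edgeSet, ∃ j, ev j = s)
    (σ : Fin n ≃ Fin n) (j : ℕ → Fin m)
    (hpath : ∀ t (h : t + 1 < n),
      ev (j t) = s(σ ⟨t, Nat.lt_of_succ_lt h⟩, σ ⟨t + 1, h⟩)) :
    (hamSet n m j).ncard = n * (m + 1) + n - 1 ∧
    IsRobinsonOn (dH ev) (hamSet n m j) ∧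
    ∀ key : XT n m → ℕ,
      (∀ i k, key (Sum.inl (i, k)) = (σ.symm i : ℕ) * (m + 2) + (k : ℕ)) →
      (∀ t, t + 1 < n → key (Sum.inr (j t)) = t * (m + 2) + (m + 1)) →
      ∀ a ∈ hamSet n m j, ∀ b ∈ hamSet n m j, ∀ c ∈ hamSet n m j,
        key a < key b → key b < key c →
        max (dH ev a b) (dH ev b c) ≤ dH ev a c := by
  have hM : ∀ k : Fin (m+1), (k : ℕ) < m + 2 := fun k => by have := k.isLt; omega
  have hM' : m + 1 < m + 2 := by omega
  -- injectivity of the edge enumeration along the path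
  have hjinj : ∀ t t', t + 1 < n → t' + 1 < n → j t = j t' → t = t' := by
    intro t t' ht ht' hj
    have he : (s(σ ⟨t, Nat.lt_of_succ_lt ht⟩, σ ⟨t+1, ht⟩) : Sym2 (Fin n))
        = s(σ ⟨t', Nat.lt_of_succ_lt ht'⟩, σ ⟨t'+1, ht'⟩) := by
      rw [← hpath t ht, ← hpath t' ht', hj]
    rw [Sym2.eq_iff] at he
    rcases he with ⟨h1, h2⟩ | ⟨h1, h2⟩
    · exact congrArg Fin.val (σ.injective h1)
    · have ha := congrArg Fin.val (σ.injective h1)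
      have hb := congrArg Fin.val (σ.injective h2)
      simp only at ha hb
      omega
  -- membership of a vertex in a path edge
  have hmem : ∀ (i : Fin n) (t : ℕ), t + 1 < n →
      (i ∈ ev (j t) ↔ ((σ.symm i : ℕ) = t ∨ (σ.symm i : ℕ) = t + 1)) := by
    intro i t ht
    rw [hpath t ht, Sym2.mem_iff]
    constructor
    · rintro (rfl | rfl)
      · left; rw [Equiv.symm_apply_apply]
      · right; rw [Equiv.symm_apply_apply]
    · rintro (h | h)
      · have hh : σ.symm i = ⟨t, Nat.lt_of_succ_lt ht⟩ := Fin.ext h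
        exact Or.inl ((Equiv.symm_apply_eq σ).mp hh)
      · have hh : σ.symm i = ⟨t + 1, ht⟩ := Fin.ext h
        exact Or.inr ((Equiv.symm_apply_eq σ).mp hh)
  -- the main compatibility statement (third conjunct)
  have hmain : ∀ key : XT n m → ℕ,
      (∀ i k, key (Sum.inl (i, k)) = (σ.symm i : ℕ) * (m + 2) + (k : ℕ)) →
      (∀ t, t + 1 < n → key (Sum.inr (j t)) = t * (m + 2) + (m + 1)) →
      ∀ a ∈ hamSet n m j, ∀ b ∈ hamSet n m j, ∀ c ∈ hamSet n m j,
        key a < key b → key b < key c →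
        max (dH ev a b) (dH ev b c) ≤ dH ev a c := by
    intro key hkx hky a ha b hb c hc hab hbc
    have hac : a ≠ c := by rintro rfl; omega
    rcases dH_one_or_two ev hac with h1 | h2
    swap
    · rw [h2]; exact max_le (dH_le_two ev a b) (dH_le_two ev b c)
    rw [h1]
    rcases ha with ⟨ia, ka, rfl⟩ | ⟨ta, hta, rfl⟩ <;>
      rcases hc with ⟨ic, kc, rfl⟩ | ⟨tc, htc, rfl⟩
    · -- a = x, c = x
      by_cases hic : ia = ic
      case neg => rw [dH_xx_ne ev ka kc hic] at h1; norm_num at h1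
      subst hic
      rcases hb with ⟨ib, kb, rfl⟩ | ⟨tb, htb, rfl⟩
      · rw [hkx ia ka, hkx ib kb] at hab
        rw [hkx ib kb, hkx ia kc] at hbc
        have d1 := (blockCmp (hM ka) (hM kb)).1 hab
        have d2 := (blockCmp (hM kb) (hM kc)).1 hbc
        have hbeq : (σ.symm ib : ℕ) = (σ.symm ia : ℕ) := by omega
        have hib : ib = ia := σ.symm.injective (Fin.ext hbeq)
        subst hib
        rw [dH_xx ev ib (Fin.ne_of_val_ne (by omega : (ka : ℕ) ≠ (kb : ℕ))),
          dH_xx ev ib (Fin.ne_of_val_ne (by omega : (kb : ℕ) ≠ (kc : ℕ)))]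
        norm_num
      · rw [hkx ia ka, hky tb htb] at hab
        rw [hky tb htb, hkx ia kc] at hbc
        have d1 := (blockCmp (hM ka) hM').1 hab
        have d2 := (blockCmp hM' (hM kc)).1 hbc
        exfalso; have := kc.isLt; omega
    · -- a = x, c = y
      by_cases hm : ia ∈ ev (j tc)
      case neg => rw [dH_xy_ne ev ia ka hm] at h1; norm_num at h1
      have hia := (hmem ia tc htc).1 hm
      have hac' : key (Sum.inl (ia, ka)) < key (Sum.inr (j tc)) := lt_trans hab hbc
      rw [hkx ia ka, hky tc htc] at hac'
      have d0 := (blockCmp (hM ka) hM').1 hac'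
      have hiatc : (σ.symm ia : ℕ) = tc := by omega
      rcases hb with ⟨ib, kb, rfl⟩ | ⟨tb, htb, rfl⟩
      · rw [hkx ia ka, hkx ib kb] at hab
        rw [hkx ib kb, hky tc htc] at hbc
        have d1 := (blockCmp (hM ka) (hM kb)).1 hab
        have d2 := (blockCmp (hM kb) hM').1 hbc
        have hbeq : (σ.symm ib : ℕ) = (σ.symm ia : ℕ) := by omega
        have hib : ib = ia := σ.symm.injective (Fin.ext hbeq)
        subst hib
        rw [dH_xx ev ib (Fin.ne_of_val_ne (by omega : (ka : ℕ) ≠ (kb : ℕ))),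
          dH_xy ev ib kb hm]
        norm_num
      · rw [hkx ia ka, hky tb htb] at hab
        rw [hky tb htb, hky tc htc] at hbc
        have d1 := (blockCmp (hM ka) hM').1 hab
        have d2 := (blockCmp hM' hM').1 hbc
        exfalso; omega
    · -- a = y, c = x
      by_cases hm : ic ∈ ev (j ta)
      case neg => rw [dH_yx_ne ev ic kc hm] at h1; norm_num at h1
      have hic := (hmem ic ta hta).1 hm
      have hac' : key (Sum.inr (j ta)) < key (Sum.inl (ic, kc)) := lt_trans hab hbc
      rw [hky ta hta, hkx ic kc] at hac'
      have d0 := (blockCmp hM' (hM kc)).1 hac'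
      have hicta : (σ.symm ic : ℕ) = ta + 1 := by have := kc.isLt; omega
      rcases hb with ⟨ib, kb, rfl⟩ | ⟨tb, htb, rfl⟩
      · rw [hky ta hta, hkx ib kb] at hab
        rw [hkx ib kb, hkx ic kc] at hbc
        have d1 := (blockCmp hM' (hM kb)).1 hab
        have d2 := (blockCmp (hM kb) (hM kc)).1 hbc
        have hbeq : (σ.symm ib : ℕ) = (σ.symm ic : ℕ) := by have := kb.isLt; omega
        have hib : ib = ic := σ.symm.injective (Fin.ext hbeq)
        subst hib
        rw [dH_yx ev ib kb hm,
          dH_xx ev ib (Fin.ne_of_val_ne (by omega : (kb : ℕ) ≠ (kc : ℕ)))]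
        norm_num
      · rw [hky ta hta, hky tb htb] at hab
        rw [hky tb htb, hkx ic kc] at hbc
        have d1 := (blockCmp hM' hM').1 hab
        have d2 := (blockCmp hM' (hM kc)).1 hbc
        exfalso; have := kc.isLt; omega
    · -- a = y, c = y
      by_cases hj' : j ta = j tc
      · exact absurd (congrArg Sum.inr hj') hac
      · rw [dH_yy ev hj'] at h1; norm_num at h1
  -- properties of key0
  have hk0x : ∀ (i : Fin n) (k : Fin (m+1)),
      key0 σ j (Sum.inl (i, k)) = (σ.symm i : ℕ) * (m + 2) + (k : ℕ) := fun _ _ => rfl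
  have hk0y : ∀ t, t + 1 < n → key0 σ j (Sum.inr (j t)) = t * (m + 2) + (m + 1) := by
    intro t ht
    have hex : ∃ t', t' + 1 < n ∧ j t' = j t := ⟨t, ht, rfl⟩
    have heq : hex.choose = t := hjinj _ _ hex.choose_spec.1 ht hex.choose_spec.2
    simp only [key0, dif_pos hex, heq]
  -- key0 is injective on hamSet
  have hinj : ∀ a ∈ hamSet n m j, ∀ b ∈ hamSet n m j, key0 σ j a = key0 σ j b → a = b := by
    intro a ha b hb h
    rcases ha with ⟨i, k, rfl⟩ | ⟨t, ht, rfl⟩ <;> rcases hb with ⟨i', k', rfl⟩ | ⟨t', ht', rfl⟩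
    · rw [hk0x i k, hk0x i' k'] at h
      obtain ⟨h1, h2⟩ := blockEq (hM k) (hM k') h
      have hi : i = i' := σ.symm.injective (Fin.ext h1)
      have hk : k = k' := Fin.ext h2
      rw [hi, hk]
    · rw [hk0x i k, hk0y t' ht'] at h
      obtain ⟨h1, h2⟩ := blockEq (hM k) hM' h
      exact absurd h2 (by have := k.isLt; omega)
    · rw [hk0y t ht, hk0x i' k'] at h
      obtain ⟨h1, h2⟩ := blockEq hM' (hM k') h
      exact absurd h2 (by have := k'.isLt; omega)
    · rw [hk0y t ht, hk0y t' ht'] at h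
      obtain ⟨h1, h2⟩ := blockEq hM' hM' h
      rw [h1]
  refine ⟨?_, ⟨fun p q => key0 σ j p.1 < key0 σ j q.1, ?_, ?_⟩, hmain⟩
  · -- cardinality
    have hset : hamSet n m j =
        ↑((Finset.univ.image (fun p : Fin n × Fin (m+1) => (Sum.inl p : XT n m))) ∪
          ((Finset.range (n-1)).image (fun t => (Sum.inr (j t) : XT n m)))) := by
      ext a
      simp only [hamSet, Set.mem_setOf_eq, Finset.coe_union, Set.mem_union, Finset.mem_coe,
        Finset.mem_image, Finset.mem_univ, true_and, Finset.mem_range]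
      constructor
      · rintro (⟨i, k, rfl⟩ | ⟨t, ht, rfl⟩)
        · exact Or.inl ⟨(i, k), rfl⟩
        · exact Or.inr ⟨t, by omega, rfl⟩
      · rintro (⟨⟨i, k⟩, rfl⟩ | ⟨t, ht, rfl⟩)
        · exact Or.inl ⟨i, k, rfl⟩
        · exact Or.inr ⟨t, by omega, rfl⟩
    have hdisj : Disjoint
        (Finset.univ.image (fun p : Fin n × Fin (m+1) => (Sum.inl p : XT n m)))
        ((Finset.range (n-1)).image (fun t => (Sum.inr (j t) : XT n m))) := by
      rw [Finset.disjoint_left]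
      rintro x hx hx'
      simp only [Finset.mem_image, Finset.mem_univ, true_and, Finset.mem_range] at hx hx'
      obtain ⟨p, rfl⟩ := hx
      obtain ⟨t, -, h⟩ := hx'
      cases h
    have h1 : (Finset.univ.image (fun p : Fin n × Fin (m+1) => (Sum.inl p : XT n m))).card
        = n * (m+1) := by
      rw [Finset.card_image_of_injective _ Sum.inl_injective, Finset.card_univ]
      simp
    have h2 : ((Finset.range (n-1)).image (fun t => (Sum.inr (j t) : XT n m))).card
        = n - 1 := by
      rw [Finset.card_image_of_injOn, Finset.card_range]
      intro t1 ht1 t2 ht2 h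
      simp only [Finset.coe_range, Set.mem_Iio] at ht1 ht2
      exact hjinj t1 t2 (by omega) (by omega) (Sum.inr_injective h)
    rw [hset, Set.ncard_coe_finset, Finset.card_union_of_disjoint hdisj, h1, h2]
    rcases Nat.eq_zero_or_pos n with hn | hn
    · subst hn; simp
    · have : ∀ K : ℕ, K + (n - 1) = K + n - 1 := fun K => by omega
      exact this _
  · -- strict total order
    exact
      { trichotomous := fun p q => by
          rcases lt_trichotomy (key0 σ j p.1) (key0 σ j q.1) with h | h | h
          · exact fun h1 _ => absurd h h1
          · exact fun _ _ => Subtype.ext (hinj _ p.2 _ q.2 h)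
          · exact fun _ h2 => absurd h h2
        irrefl := fun p => lt_irrefl _
        trans := fun p q r => Nat.lt_trans }
  · -- compatibility of the order
    intro p q r hpq hqr
    exact hmain (key0 σ j) hk0x hk0y _ p.2 _ q.2 _ r.2 hpq hqr
end

section
/- Let G be a finite simple graph with vertices v_1, ..., v_n and edges e_1, ..., e_m, and let (X,d) be the associated dissimilarity space. If there exists a subset X' ⊆ X with |X'| ≥ n(m+1) + n − 1 such that (X',d) is Robinson, then G has a Hamiltonian path. -/
section Aux
variable {n m : ℕ} {ev : Fin m → Sym2 (Fin n)} {X' : Set (XT n m)} {r : X' → X' → Prop}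

lemma dH_xx2 {i i' : Fin n} (h : i ≠ i') (k k' : Fin (m+1)) :
    dH ev (Sum.inl (i,k)) (Sum.inl (i',k')) = 2 := by simp [dH, h]

lemma dH_xx1 (i : Fin n) (k k' : Fin (m+1)) :
    dH ev (Sum.inl (i,k)) (Sum.inl (i,k')) ≤ 1 := by
  rcases eq_or_ne k k' with rfl | hk
  · simp [dH]
  · simp [dH, hk]

lemma dH_xy1 {i : Fin n} {j : Fin m} (h : i ∈ ev j) (k : Fin (m+1)) :
    dH ev (Sum.inl (i,k)) (Sum.inr j) = 1 := by simp [dH, h]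

lemma dH_yx1 {i : Fin n} {j : Fin m} (h : i ∈ ev j) (k : Fin (m+1)) :
    dH ev (Sum.inr j) (Sum.inl (i,k)) = 1 := by simp [dH, h]

/-- The order induced on vertex blocks. -/
def prec (X' : Set (XT n m)) (r : X' → X' → Prop) (i i' : Fin n) : Prop :=
  i ≠ i' ∧ ∃ (ka kc : Fin (m+1)) (ha : Sum.inl (i,ka) ∈ X') (hc : Sum.inl (i',kc) ∈ X'),
    r ⟨Sum.inl (i,ka), ha⟩ ⟨Sum.inl (i',kc), hc⟩

variable (hSTO : IsStrictTotalOrder X' r)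
  (hR : ∀ a b c : X', r a b → r b c →
      max (dH ev (a : XT n m) (b : XT n m)) (dH ev (b : XT n m) (c : XT n m))
        ≤ dH ev (a : XT n m) (c : XT n m))
  (hblock : ∀ i : Fin n, ∃ k, Sum.inl (i,k) ∈ X')

include hSTO hR in
lemma Wcore {u w : Fin n} (hne : u ≠ w) {ka ka' kc : Fin (m+1)}
    (ha : Sum.inl (u,ka) ∈ X') (ha' : Sum.inl (u,ka') ∈ X') (hc : Sum.inl (w,kc) ∈ X')
    (h1 : r ⟨Sum.inl (u,ka), ha⟩ ⟨Sum.inl (w,kc), hc⟩)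
    (h2 : r ⟨Sum.inl (w,kc), hc⟩ ⟨Sum.inl (u,ka'), ha'⟩) : False := by
  haveI := hSTO
  rcases eq_or_ne ka ka' with rfl | hk
  · exact irrefl_of r _ (trans_of r h1 h2)
  · have H : max (dH ev (Sum.inl (u,ka)) (Sum.inl (w,kc)))
        (dH ev (Sum.inl (w,kc)) (Sum.inl (u,ka')))
        ≤ dH ev (Sum.inl (u,ka)) (Sum.inl (u,ka')) := hR _ _ _ h1 h2
    have h3 : dH ev (Sum.inl (u,ka)) (Sum.inl (w,kc)) = 2 := dH_xx2 hne _ _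
    have h4 := dH_xx1 (ev := ev) u ka ka'
    have := le_trans (le_max_left _ _) H
    linarith

include hSTO hR in
lemma W2 {u w : Fin n} (h : prec X' r u w) {ka kc : Fin (m+1)}
    (ha : Sum.inl (u,ka) ∈ X') (hc : Sum.inl (w,kc) ∈ X') :
    r ⟨Sum.inl (u,ka), ha⟩ ⟨Sum.inl (w,kc), hc⟩ := by
  haveI := hSTO
  obtain ⟨hne, ka0, kc0, ha0, hc0, hr0⟩ := h
  rcases trichotomous_of r (⟨Sum.inl (u,ka), ha⟩ : X') ⟨Sum.inl (w,kc), hc⟩ with h | h | h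
  · exact h
  · exfalso
    rw [Subtype.mk_eq_mk] at h
    simp only [Sum.inl.injEq, Prod.mk.injEq] at h
    exact hne h.1
  · exfalso
    rcases trichotomous_of r (⟨Sum.inl (u,ka), ha⟩ : X') ⟨Sum.inl (w,kc0), hc0⟩ with h' | h' | h'
    · exact Wcore hSTO hR hne.symm hc hc0 ha h h'
    · rw [Subtype.mk_eq_mk] at h'
      simp only [Sum.inl.injEq, Prod.mk.injEq] at h'
      exact hne h'.1
    · exact Wcore hSTO hR hne ha0 ha hc0 hr0 h'

include hSTO hR hblock in
lemma prec_sto : IsStrictTotalOrder (Fin n) (prec X' r) := by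
  haveI := hSTO
  have ht : IsTrichotomous (Fin n) (prec X' r) := by
    constructor
    intro u w
    rcases eq_or_ne u w with rfl | hne
    · exact fun _ _ => rfl
    · obtain ⟨ka, ha⟩ := hblock u
      obtain ⟨kc, hc⟩ := hblock w
      rcases trichotomous_of r (⟨Sum.inl (u,ka), ha⟩ : X') ⟨Sum.inl (w,kc), hc⟩ with h | h | h
      · exact fun h1 _ => (h1 ⟨hne, ka, kc, ha, hc, h⟩).elim
      · exfalso
        rw [Subtype.mk_eq_mk] at h
        simp only [Sum.inl.injEq, Prod.mk.injEq] at h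
        exact hne h.1
      · exact fun _ h2 => (h2 ⟨hne.symm, kc, ka, hc, ha, h⟩).elim
  have hi : IsIrrefl (Fin n) (prec X' r) := ⟨fun _ h => h.1 rfl⟩
  have htr : IsTrans (Fin n) (prec X' r) := by
    constructor
    intro a b c h1 h2
    have hne : a ≠ c := by
      rintro rfl
      obtain ⟨_, ka, kc, ha, hc, hr1⟩ := h1
      have hr2 := W2 hSTO hR h2 hc ha
      exact irrefl_of r _ (trans_of r hr1 hr2)
    obtain ⟨ka, ha⟩ := hblock a
    obtain ⟨kb, hb⟩ := hblock b
    obtain ⟨kc, hc⟩ := hblock c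
    exact ⟨hne, ka, kc, ha, hc, trans_of r (W2 hSTO hR h1 ha hb) (W2 hSTO hR h2 hb hc)⟩
  have hso : IsStrictOrder (Fin n) (prec X' r) := { hi, htr with }
  exact { ht, hso with }

include hSTO hR in
lemma noBetween {j : Fin m} (hj : Sum.inr j ∈ X') {u w i'' : Fin n}
    (hu : u ∈ ev j) (hw : w ∈ ev j) (h1 : prec X' r u i'') (h2 : prec X' r i'' w)
    (hbu : ∃ ka, Sum.inl (u,ka) ∈ X') (hbi : ∃ kb, Sum.inl (i'',kb) ∈ X')
    (hbw : ∃ kc, Sum.inl (w,kc) ∈ X') : False := by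
  haveI := hSTO
  obtain ⟨ka, ha⟩ := hbu
  obtain ⟨kb, hb⟩ := hbi
  obtain ⟨kc, hc⟩ := hbw
  have hab := W2 hSTO hR h1 ha hb
  have hbc := W2 hSTO hR h2 hb hc
  rcases trichotomous_of r (⟨Sum.inl (i'',kb), hb⟩ : X') ⟨Sum.inr j, hj⟩ with hby | heq | hyb
  · have H : max (dH ev (Sum.inl (u,ka)) (Sum.inl (i'',kb)))
        (dH ev (Sum.inl (i'',kb)) (Sum.inr j))
        ≤ dH ev (Sum.inl (u,ka)) (Sum.inr j) := hR _ _ _ hab hby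
    rw [dH_xy1 hu, dH_xx2 h1.1 ka kb] at H
    have := le_trans (le_max_left _ _) H
    linarith
  · have := congrArg Subtype.val heq
    simp only at this
    exact absurd this (by simp)
  · have H : max (dH ev (Sum.inr j) (Sum.inl (i'',kb)))
        (dH ev (Sum.inl (i'',kb)) (Sum.inl (w,kc)))
        ≤ dH ev (Sum.inr j) (Sum.inl (w,kc)) := hR _ _ _ hyb hbc
    rw [dH_yx1 hw, dH_xx2 h2.1 kb kc] at H
    have := le_trans (le_max_right _ _) H
    linarith

end Aux

/-- if some `X' ⊆ X` with `|X'| ≥ n(m+1) + n - 1` is such that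
`(X', d)` is Robinson, then `G` has a Hamiltonian path. -/
theorem stmt12 {n m : ℕ} (G : SimpleGraph (Fin n)) (ev : Fin m → Sym2 (Fin n))
    (hev1 : ∀ j, ev j ∈ G.edgeSet) (hev2 : Function.Injective ev)
    (hev3 : ∀ s ∈ G.edgeSet, ∃ j, ev j = s)
    (X' : Set (XT n m)) (hcard : n * (m + 1) + n - 1 ≤ X'.ncard)
    (hrob : IsRobinsonOn (dH ev) X') :
    ∃ σ : Fin n → Fin n, Function.Bijective σ ∧
      ∀ t (h : t + 1 < n), G.Adj (σ ⟨t, Nat.lt_of_succ_lt h⟩) (σ ⟨t + 1, h⟩) := by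
  classical
  rcases Nat.lt_or_ge n 2 with hn | hn
  · exact ⟨id, Function.bijective_id, fun t h => absurd h (by omega)⟩
  obtain ⟨r, hSTO, hR⟩ := hrob
  haveI := hSTO
  -- cardinality bookkeeping
  have hXT : Fintype.card (XT n m) = n * (m+1) + m := by simp
  have hcard' : n * (m + 1) + n - 1 ≤ X'.toFinset.card := by
    rwa [Set.ncard_eq_toFinset_card'] at hcard
  -- every block has a clone in X'
  have hblock : ∀ i : Fin n, ∃ k, Sum.inl (i,k) ∈ X' := by
    intro i
    by_contra h
    push_neg at h
    set B : Finset (XT n m) := Finset.univ.image (fun k : Fin (m+1) => Sum.inl (i,k)) with hB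
    have hBcard : B.card = m + 1 := by
      rw [hB, Finset.card_image_of_injective _ (fun a b hab => by
        simpa using hab)]
      simp
    have hdisj : Disjoint X'.toFinset B := by
      rw [Finset.disjoint_right]
      intro z hzB hzX
      rw [hB, Finset.mem_image] at hzB
      obtain ⟨k, _, rfl⟩ := hzB
      exact h k (Set.mem_toFinset.mp hzX)
    have hun : (X'.toFinset ∪ B).card = X'.toFinset.card + (m+1) := by
      rw [Finset.card_union_of_disjoint hdisj, hBcard]
    have hle : (X'.toFinset ∪ B).card ≤ n * (m+1) + m := by
      rw [← hXT]; exact Finset.card_le_univ _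
    have := hcard'
    generalize hA : n * (m+1) = A at *
    omega
  -- at least n - 1 of the y's are present
  set S : Finset (Fin m) := Finset.univ.filter (fun j => Sum.inr j ∈ X') with hSdef
  have hS : n - 1 ≤ S.card := by
    have hsub : X'.toFinset ⊆
        (Finset.univ.image (fun p : Fin n × Fin (m+1) => (Sum.inl p : XT n m))) ∪
          S.image Sum.inr := by
      intro z hz
      rw [Finset.mem_union]
      rcases z with p | j
      · exact Or.inl (Finset.mem_image.mpr ⟨p, Finset.mem_univ _, rfl⟩)
      · refine Or.inr (Finset.mem_image.mpr ⟨j, ?_, rfl⟩)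
        rw [hSdef, Finset.mem_filter]
        exact ⟨Finset.mem_univ _, Set.mem_toFinset.mp hz⟩
    have h1 := Finset.card_le_card hsub
    have h2 := le_trans h1 (Finset.card_union_le _ _)
    have h3 : (Finset.univ.image (fun p : Fin n × Fin (m+1) => (Sum.inl p : XT n m))).card
        ≤ n * (m+1) := by
      refine le_trans (Finset.card_image_le) ?_
      simp
    have h4 : (S.image (Sum.inr : Fin m → XT n m)).card = S.card :=
      Finset.card_image_of_injective _ (fun a b hab => by simpa using hab)
    have := hcard'
    generalize hA : n * (m+1) = A at *
    omega
  -- the strict total order on blocks and the sorting permutation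
  have hsto := prec_sto hSTO hR hblock
  haveI := hsto
  haveI : DecidableRel (prec X' r) := Classical.decRel _
  letI L : LinearOrder (Fin n) := linearOrderOfSTO (prec X' r)
  let σiso := @monoEquivOfFin (Fin n) _ L n (Fintype.card_fin n)
  let eσ : Fin n ≃ Fin n := σiso.toEquiv
  have hle : ∀ s t : Fin n,
      ((eσ s : Fin n) = eσ t ∨ prec X' r (eσ s) (eσ t)) ↔ s ≤ t := by
    intro s t
    exact σiso.map_rel_iff
  have hlt : ∀ s t : Fin n, s < t ↔ prec X' r (eσ s) (eσ t) := by
    intro s t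
    constructor
    · intro h
      rcases (hle s t).mpr h.le with heq | hp
      · exact absurd (eσ.injective heq) h.ne
      · exact hp
    · intro hp
      have h1 : s ≤ t := (hle s t).mp (Or.inr hp)
      rcases lt_or_eq_of_le h1 with h | rfl
      · exact h
      · exact absurd hp (irrefl_of (prec X' r) _)
  -- each present y_j connects two consecutive blocks
  have hM : ∀ j : Fin m, Sum.inr j ∈ X' → ∃ t : {t : Fin n // (t : ℕ) + 1 < n},
      ev j = s(eσ t.1, eσ ⟨(t.1 : ℕ) + 1, t.2⟩) := by
    intro j hj
    obtain ⟨u, w, hew⟩ : ∃ u w, ev j = s(u, w) := by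
      induction ev j using Sym2.inductionOn with
      | hf u w => exact ⟨u, w, rfl⟩
    have hadj : G.Adj u w := by
      have := hev1 j; rw [hew] at this; exact this
    have key : ∀ u w : Fin n, ev j = s(u, w) → prec X' r u w →
        ∃ t : {t : Fin n // (t : ℕ) + 1 < n},
          ev j = s(eσ t.1, eσ ⟨(t.1 : ℕ) + 1, t.2⟩) := by
      intro u w hew hprec
      have hu : u ∈ ev j := by rw [hew]; exact Sym2.mem_mk_left u w
      have hw : w ∈ ev j := by rw [hew]; exact Sym2.mem_mk_right u w
      set a := eσ.symm u with ha
      set c := eσ.symm w with hc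
      have hau : eσ a = u := eσ.apply_symm_apply u
      have hcw : eσ c = w := eσ.apply_symm_apply w
      have hac : a < c := by
        rw [hlt a c, hau, hcw]; exact hprec
      have hfin : (a : ℕ) + 1 < n := by
        have h1 : (a : ℕ) < (c : ℕ) := hac
        have h2 : (c : ℕ) < n := c.isLt
        omega
      have hceq : (c : ℕ) = (a : ℕ) + 1 := by
        by_contra hcc
        have h1 : (a : ℕ) < (c : ℕ) := hac
        have hmid : (a : ℕ) + 1 < (c : ℕ) := by omega
        set t1 : Fin n := ⟨(a : ℕ) + 1, hfin⟩ with ht1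
        have hat1 : a < t1 := by
          rw [Fin.lt_def]; exact show (a : ℕ) < (a : ℕ) + 1 by omega
        have ht1c : t1 < c := by
          rw [Fin.lt_def]; exact show (a : ℕ) + 1 < (c : ℕ) from hmid
        have hp1 : prec X' r u (eσ t1) := by
          rw [← hau]; exact (hlt a t1).mp hat1
        have hp2 : prec X' r (eσ t1) w := by
          rw [← hcw]; exact (hlt t1 c).mp ht1c
        exact noBetween hSTO hR hj hu hw hp1 hp2 (hblock u) (hblock _) (hblock w)
      refine ⟨⟨a, hfin⟩, ?_⟩
      have : (⟨(a : ℕ) + 1, hfin⟩ : Fin n) = c := by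
        apply Fin.ext; simp [hceq]
      rw [this, hau, hcw]
      exact hew
    rcases trichotomous_of (prec X' r) u w with h | h | h
    · exact key u w hew h
    · exact absurd h hadj.ne
    · exact key w u (by rw [hew, Sym2.eq_swap]) h
  -- counting: the map from present y's to gaps is injective, hence surjective
  let β := {t : Fin n // (t : ℕ) + 1 < n}
  have hβcard : Fintype.card β = n - 1 := by
    have e : β ≃ Fin (n - 1) :=
      { toFun := fun t => ⟨t.1, by omega⟩
        invFun := fun s => ⟨⟨s.1, by have := s.isLt; omega⟩, by
          have := s.isLt; exact show (s : ℕ) + 1 < n by omega⟩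
        left_inv := fun t => rfl
        right_inv := fun s => rfl }
    rw [Fintype.card_congr e, Fintype.card_fin]
  let g : {j : Fin m // j ∈ S} → β := fun j =>
    (hM j.1 (Finset.mem_filter.mp j.2).2).choose
  have hg : ∀ j : {j : Fin m // j ∈ S},
      ev j.1 = s(eσ (g j).1, eσ ⟨((g j).1 : ℕ) + 1, (g j).2⟩) := fun j =>
    (hM j.1 (Finset.mem_filter.mp j.2).2).choose_spec
  have hginj : Function.Injective g := by
    intro j j' h
    apply Subtype.ext
    apply hev2
    rw [hg j, hg j', h]
  have hgsurj : Function.Surjective g := by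
    have h1 : Fintype.card {j : Fin m // j ∈ S} = S.card := Fintype.card_coe S
    have h2 := Fintype.card_le_of_injective g hginj
    exact ((Fintype.bijective_iff_injective_and_card g).mpr ⟨hginj, by omega⟩).surjective
  refine ⟨fun t => eσ t, eσ.bijective, ?_⟩
  intro t h
  obtain ⟨j, hj⟩ := hgsurj ⟨⟨t, Nat.lt_of_succ_lt h⟩, h⟩
  have hedge := hev1 j.1
  rw [hg j, hj] at hedge
  exact hedge
end

section
/- Let G be a finite simple graph with vertices v_1, ..., v_n and edges e_1, ..., e_m, and let (X,d) be the associated dissimilarity space. Let X' ⊆ X be such that (X',d) is Robinson and let < be a compatible order on X'. If the edge e_j is incident to the vertex v_i and y_j ∈ X', then the set X'_i ∪ {y_j} is an interval for <, where X'_i = X' ∩ {x_i^k : 1 ≤ k ≤ m+1}. -/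
/-- `X'ᵢ = X' ∩ {xᵢᵏ : 1 ≤ k ≤ m+1}`. -/
def colSet {n m : ℕ} (X' : Set (XT n m)) (i : Fin n) : Set (XT n m) :=
  {w | w ∈ X' ∧ ∃ k, w = Sum.inl (i, k)}

/-- if `(X', d)` is Robinson with compatible order `r`, the edge `eⱼ`
is incident to `vᵢ` and `yⱼ ∈ X'`, then `X'ᵢ ∪ {yⱼ}` is an interval for `r`. -/
theorem stmt13 {n m : ℕ} (G : SimpleGraph (Fin n)) (ev : Fin m → Sym2 (Fin n))
    (hev1 : ∀ j, ev j ∈ G.edgeSet) (hev2 : Function.Injective ev)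
    (hev3 : ∀ s ∈ G.edgeSet, ∃ j, ev j = s)
    (X' : Set (XT n m))
    (r : X' → X' → Prop) (hr : IsStrictTotalOrder X' r)
    (hcomp : ∀ a b c : X', r a b → r b c →
      max (dH ev (a : XT n m) (b : XT n m)) (dH ev (b : XT n m) (c : XT n m)) ≤
        dH ev (a : XT n m) (c : XT n m))
    (i : Fin n) (jdx : Fin m) (hinc : i ∈ ev jdx) (hy : Sum.inr jdx ∈ X') :
    ∀ a b c : X',
      (a : XT n m) ∈ colSet X' i ∪ {Sum.inr jdx} →
      (b : XT n m) ∈ colSet X' i ∪ {Sum.inr jdx} →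
      r a c → r c b →
      (c : XT n m) ∈ colSet X' i ∪ {Sum.inr jdx} := by
  haveI := hr
  intro a b c ha hb hac hcb
  -- distance between two points of the set is ≤ 1
  have hdS : ∀ u v : X', (u : XT n m) ∈ colSet X' i ∪ {Sum.inr jdx} →
      (v : XT n m) ∈ colSet X' i ∪ {Sum.inr jdx} →
      dH ev (u : XT n m) (v : XT n m) ≤ 1 := by
    rintro u v hu hv
    rcases hu with ⟨-, ku, hku⟩ | hu <;> rcases hv with ⟨-, kv, hkv⟩ | hv
    · rw [hku, hkv]
      by_cases hk : ku = kv <;> simp [dH, hk]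
    · rw [hku, Set.mem_singleton_iff.mp hv]
      simp [dH, hinc]
    · rw [Set.mem_singleton_iff.mp hu, hkv]
      simp [dH, hinc]
    · rw [Set.mem_singleton_iff.mp hu, Set.mem_singleton_iff.mp hv]
      simp [dH]
  have h1 := hcomp a c b hac hcb
  have h2 := hdS a b ha hb
  have hac1 : dH ev (a : XT n m) (c : XT n m) ≤ 1 :=
    le_trans (le_trans (le_max_left _ _) h1) h2
  have hcb1 : dH ev (c : XT n m) (b : XT n m) ≤ 1 :=
    le_trans (le_trans (le_max_right _ _) h1) h2
  cases hcv : (c : XT n m) with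
  | inl p =>
    obtain ⟨i', k⟩ := p
    by_cases hii : i' = i
    · exact Or.inl ⟨hcv ▸ c.2, k, by rw [hii]⟩
    · exfalso
      have hii' : i ≠ i' := fun h => hii h.symm
      -- one of a, b lies in the column i, giving distance 2 to c
      rcases ha with ⟨-, ka, hka⟩ | ha
      · have : dH ev (a : XT n m) (c : XT n m) = 2 := by
          rw [hka, hcv]; simp [dH, hii']
        linarith
      · rcases hb with ⟨-, kb, hkb⟩ | hb
        · have : dH ev (c : XT n m) (b : XT n m) = 2 := by
            rw [hkb, hcv]; simp [dH, hii]
          linarith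
        · -- a = b = y_jdx : contradiction with strict order
          have hab : a = b := Subtype.ext
            ((Set.mem_singleton_iff.mp ha).trans (Set.mem_singleton_iff.mp hb).symm)
          subst hab
          exact (irrefl_of r a) (trans_of r hac hcb)
  | inr j' =>
    by_cases hjj : j' = jdx
    · exact Or.inr (by rw [hjj]; rfl)
    · exfalso
      have hjj' : jdx ≠ j' := fun h => hjj h.symm
      set p : X' := ⟨Sum.inr jdx, hy⟩ with hp
      have hpS : (p : XT n m) ∈ colSet X' i ∪ {Sum.inr jdx} := Or.inr rfl
      have hdpc : dH ev (p : XT n m) (c : XT n m) = 2 := by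
        rw [hcv]; simp [dH, hjj', hp]
      have hdcp : dH ev (c : XT n m) (p : XT n m) = 2 := by
        rw [hcv]; simp [dH, hjj, hp]
      rcases trichotomous_of r p c with hpc | hpc | hpc
      · have h3 := hcomp p c b hpc hcb
        have h4 := hdS p b hpS hb
        have := le_trans (le_trans (le_max_left _ _) h3) h4
        linarith
      · exact hjj (by have := congrArg Subtype.val hpc; rw [hcv] at this; exact (Sum.inr.injEq _ _).mp this.symm)
      · have h3 := hcomp a c p hac hpc
        have h4 := hdS a p ha hpS
        have := le_trans (le_trans (le_max_right _ _) h3) h4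
        linarith
end

section
/- Let G be a finite simple graph with vertices v_1, ..., v_n and edges e_1, ..., e_m, and let (X,d) be the associated dissimilarity space. Let X' ⊆ X be such that (X',d) is Robinson. If e_a, e_b, e_c are three pairwise distinct edges of G all incident to a common vertex v_ℓ, and X'_ℓ = X' ∩ {x_ℓ^k : 1 ≤ k ≤ m+1} is nonempty, then {y_a, y_b, y_c} is not a subset of X'. -/
/-- if `(X', d)` is Robinson, `e_a, e_b, e_c` are three pairwise
distinct edges all incident to `v_ℓ` and `X'_ℓ ≠ ∅`, then `{y_a, y_b, y_c} ⊄ X'`. -/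
theorem stmt14 {n m : ℕ} (G : SimpleGraph (Fin n)) (ev : Fin m → Sym2 (Fin n))
    (hev1 : ∀ j, ev j ∈ G.edgeSet) (hev2 : Function.Injective ev)
    (hev3 : ∀ s ∈ G.edgeSet, ∃ j, ev j = s)
    (X' : Set (XT n m)) (hrob : IsRobinsonOn (dH ev) X')
    (a b c : Fin m) (hab : a ≠ b) (hac : a ≠ c) (hbc : b ≠ c)
    (ℓ : Fin n) (hla : ℓ ∈ ev a) (hlb : ℓ ∈ ev b) (hlc : ℓ ∈ ev c)
    (hne : (colSet X' ℓ).Nonempty) :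
    ¬ (Sum.inr a ∈ X' ∧ Sum.inr b ∈ X' ∧ Sum.inr c ∈ X') := by
  rintro ⟨ha, hb, hc⟩
  obtain ⟨x, hx, k, hxk⟩ := hne
  subst hxk
  obtain ⟨r, hsto, hR⟩ := hrob
  haveI := hsto
  set P : X' := ⟨Sum.inl (ℓ, k), hx⟩ with hP
  set A : X' := ⟨Sum.inr a, ha⟩ with hA
  set B : X' := ⟨Sum.inr b, hb⟩ with hB
  set C : X' := ⟨Sum.inr c, hc⟩ with hC
  have d1 : ∀ j : Fin m, ℓ ∈ ev j → dH ev (Sum.inl (ℓ, k)) (Sum.inr j) = 1 := by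
    intro j hj; simp [dH, hj]
  have d1' : ∀ j : Fin m, ℓ ∈ ev j → dH ev (Sum.inr j) (Sum.inl (ℓ, k)) = 1 := by
    intro j hj; simp [dH, hj]
  have d2 : ∀ i j : Fin m, i ≠ j → dH ev (Sum.inr i) (Sum.inr j) = (2 : ℝ) := by
    intro i j hij
    simp [dH, hij]
  have key : ∀ U V : X', U ≠ V →
      ((r P U ∧ r P V) ∨ (r U P ∧ r V P)) →
      dH ev (P : XT n m) U = 1 → dH ev (P : XT n m) V = 1 →
      dH ev (U : XT n m) P = 1 → dH ev (V : XT n m) P = 1 →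
      dH ev (U : XT n m) V = 2 → dH ev (V : XT n m) U = 2 → False := by
    intro U V hUV hside hPU hPV hUP hVP hUVd hVUd
    rcases trichotomous_of r U V with h | h | h
    · rcases hside with ⟨h1, h2⟩ | ⟨h1, h2⟩
      · have := hR P U V h1 h
        rw [hPU, hPV, hUVd] at this
        simp at this
      · have := hR U V P h h2
        rw [hUVd, hVP, hUP] at this
        simp at this
    · exact hUV h
    · rcases hside with ⟨h1, h2⟩ | ⟨h1, h2⟩
      · have := hR P V U h2 h
        rw [hPU, hPV, hVUd] at this
        simp at this
      · have := hR V U P h h1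
        rw [hVUd, hUP, hVP] at this
        simp at this
  have hABne : A ≠ B := fun h => hab (by simpa [hA, hB] using congrArg Subtype.val h)
  have hACne : A ≠ C := fun h => hac (by simpa [hA, hC] using congrArg Subtype.val h)
  have hBCne : B ≠ C := fun h => hbc (by simpa [hB, hC] using congrArg Subtype.val h)
  have hPAne : P ≠ A := fun h => by simpa using congrArg Subtype.val h
  have hPBne : P ≠ B := fun h => by simpa using congrArg Subtype.val h
  have hPCne : P ≠ C := fun h => by simpa using congrArg Subtype.val h
  have side : ∀ (U : X'), P ≠ U → r P U ∨ r U P := by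
    intro U hU
    rcases trichotomous_of r P U with h | h | h
    · exact Or.inl h
    · exact absurd h hU
    · exact Or.inr h
  have dPA := d1 a hla
  have dPB := d1 b hlb
  have dPC := d1 c hlc
  have dAP := d1' a hla
  have dBP := d1' b hlb
  have dCP := d1' c hlc
  have dAB := d2 a b hab
  have dBA := d2 b a (Ne.symm hab)
  have dAC := d2 a c hac
  have dCA := d2 c a (Ne.symm hac)
  have dBC := d2 b c hbc
  have dCB := d2 c b (Ne.symm hbc)
  rcases side A hPAne with hSA | hSA <;>
    rcases side B hPBne with hSB | hSB <;>
      rcases side C hPCne with hSC | hSC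
  · exact key A B hABne (Or.inl ⟨hSA, hSB⟩) dPA dPB dAP dBP dAB dBA
  · exact key A B hABne (Or.inl ⟨hSA, hSB⟩) dPA dPB dAP dBP dAB dBA
  · exact key A C hACne (Or.inl ⟨hSA, hSC⟩) dPA dPC dAP dCP dAC dCA
  · exact key B C hBCne (Or.inr ⟨hSB, hSC⟩) dPB dPC dBP dCP dBC dCB
  · exact key B C hBCne (Or.inl ⟨hSB, hSC⟩) dPB dPC dBP dCP dBC dCB
  · exact key A C hACne (Or.inr ⟨hSA, hSC⟩) dPA dPC dAP dCP dAC dCA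
  · exact key A B hABne (Or.inr ⟨hSA, hSB⟩) dPA dPB dAP dBP dAB dBA
  · exact key A B hABne (Or.inr ⟨hSA, hSB⟩) dPA dPB dAP dBP dAB dBA
end
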